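/- arXiv:1911.06275 — 4 statements merged into one kernel-verified Lean document; each statement's English description precedes it below -/
import Mathlib

section
/- For every admissible order n (i.e., n ≡ 0 or 1 (mod 3) and n >= 6), there exists a 3-star system of order n that is 2-chromatic and admits an equitable 2-colouring (colour class sizes differ by at most one). -/
structure EStar (n e : ℕ) where
  centre : Fin n
  leaves : Finset (Fin n)
  card_leaves : leaves.card = e
  centre_not_leaf : centre ∉ leaves

instance {n e : ℕ} : DecidableEq (EStar n e) := fun a b =>
  decidable_of_iff (a.centre = b.centre ∧ a.leaves = b.leaves)
    (by cases a; cases b; simp)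

/-- The edge set of an `e`-star: all edges joining the centre to a leaf. -/
def EStar.edges {n e : ℕ} (S : EStar n e) : Finset (Sym2 (Fin n)) :=
  S.leaves.image (fun a => s(S.centre, a))

/-- The vertex set of an `e`-star. -/
def EStar.verts {n e : ℕ} (S : EStar n e) : Finset (Fin n) :=
  insert S.centre S.leaves

/-- An `e`-star system of order `n`: a collection of `e`-stars whose edge sets
partition the edge set of the complete graph `K_n`. -/
structure EStarSystem (n e : ℕ) where
  stars : Finset (EStar n e)
  partition : ∀ p : Sym2 (Fin n), ¬ p.IsDiag →
    ∃! S, S ∈ stars ∧ p ∈ EStar.edges S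

/-- A weak colouring: no star of the system has all of its vertices one colour. -/
def IsWeakColouring {n e k : ℕ} (sys : EStarSystem n e) (c : Fin n → Fin k) : Prop :=
  ∀ S ∈ sys.stars, ∃ a ∈ S.leaves, c a ≠ c S.centre

def Colourable {n e : ℕ} (sys : EStarSystem n e) (k : ℕ) : Prop :=
  ∃ c : Fin n → Fin k, IsWeakColouring sys c

def Chromatic {n e : ℕ} (sys : EStarSystem n e) (k : ℕ) : Prop :=
  Colourable sys k ∧ ¬ Colourable sys (k - 1)

/-- The size of the colour class of colour `i`. -/
def classCard {n k : ℕ} (c : Fin n → Fin k) (i : Fin k) : ℕ :=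
  (Finset.univ.filter (fun v => c v = i)).card

def UniquelyColourable {n e : ℕ} (sys : EStarSystem n e) (k : ℕ) : Prop :=
  ∀ c₁ c₂ : Fin n → Fin k, IsWeakColouring sys c₁ → IsWeakColouring sys c₂ →
    ∃ π : Equiv.Perm (Fin k), c₂ = π ∘ c₁

/-!
Adding six vertices: `K_{n+6}` is the edge-disjoint union of `K_n`, a copy of `K_6` on the new
vertices, and `K_{n,6}`. The last is decomposed into the two stars from each old vertex to the
triples `{0,1,2}` and `{3,4,5}` of the new block. Colouring the new block alternately makes every
new star bichromatic and adds three vertices to each colour class, so equitable weak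
2-colourings survive the step. The empty systems of orders `0, 1` and explicit ones of orders
`9, 10` start the induction in the residue classes `0, 1, 3, 4` mod 6. A system on at least two
points has a star, so it has no weak 1-colouring.
-/

open Finset

variable {n m a b e : ℕ}

lemma Fin.castAdd_ne_natAdd (i : Fin a) (j : Fin b) : Fin.castAdd b i ≠ Fin.natAdd a j := by
  rw [Ne, Fin.ext_iff, Fin.val_castAdd, Fin.val_natAdd]
  omega

lemma Finset.existsUnique_of_card_filter_eq_one {α : Type*} {s : Finset α} {p : α → Prop}
    [DecidablePred p] (h : #(s.filter p) = 1) : ∃! x, x ∈ s ∧ p x := by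
  simpa [card_eq_one_iff_existsUnique] using h

namespace EStar

lemma mem_edges {S : EStar n e} {p : Sym2 (Fin n)} :
    p ∈ S.edges ↔ ∃ x ∈ S.leaves, s(S.centre, x) = p :=
  mem_image

lemma not_isDiag_of_mem_edges {S : EStar n e} {p : Sym2 (Fin n)} (h : p ∈ S.edges) :
    ¬ p.IsDiag := by
  obtain ⟨x, hx, rfl⟩ := mem_edges.1 h
  rw [Sym2.mk_isDiag_iff]
  rintro rfl
  exact S.centre_not_leaf hx

def map (f : Fin n ↪ Fin m) (S : EStar n e) : EStar m e where
  centre := f S.centre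
  leaves := S.leaves.map f
  card_leaves := by rw [card_map, S.card_leaves]
  centre_not_leaf := by rw [mem_map']; exact S.centre_not_leaf

lemma edges_map (f : Fin n ↪ Fin m) (S : EStar n e) :
    (S.map f).edges = S.edges.image (Sym2.map f) := by
  simp only [edges, map, map_eq_image, image_image]
  rfl

end EStar

def IsStarPartition (E : Set (Sym2 (Fin n))) (stars : Finset (EStar n e)) : Prop :=
  (∀ S ∈ stars, ↑S.edges ⊆ E) ∧ ∀ p ∈ E, ∃! S, S ∈ stars ∧ p ∈ S.edges

namespace IsStarPartition

variable {E E' : Set (Sym2 (Fin n))} {s s' : Finset (EStar n e)}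

lemma existsUnique_union (h : IsStarPartition E s) (h' : IsStarPartition E' s')
    (hE : Disjoint E E') {p : Sym2 (Fin n)} (hp : p ∈ E) :
    ∃! S, S ∈ s ∪ s' ∧ p ∈ S.edges := by
  obtain ⟨S, ⟨hS, hpS⟩, huniq⟩ := h.2 p hp
  refine ⟨S, ⟨mem_union_left _ hS, hpS⟩, fun T ⟨hT, hpT⟩ => ?_⟩
  rcases mem_union.1 hT with hT | hT
  · exact huniq T ⟨hT, hpT⟩
  · exact (Set.disjoint_left.1 hE hp (h'.1 T hT hpT)).elim

lemma union (h : IsStarPartition E s) (h' : IsStarPartition E' s') (hE : Disjoint E E') :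
    IsStarPartition (E ∪ E') (s ∪ s') := by
  refine ⟨fun S hS => ?_, fun p hp => ?_⟩
  · rcases mem_union.1 hS with hS | hS
    · exact (h.1 S hS).trans Set.subset_union_left
    · exact (h'.1 S hS).trans Set.subset_union_right
  · rcases hp with hp | hp
    · exact h.existsUnique_union h' hE hp
    · rw [union_comm]
      exact h'.existsUnique_union h hE.symm hp

lemma image_map (f : Fin n ↪ Fin m) (h : IsStarPartition E s) :
    IsStarPartition (Sym2.map f '' E) (s.image (EStar.map f)) := by
  have hinj : Function.Injective (Sym2.map f) := Sym2.map.injective f.injective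
  refine ⟨fun T hT => ?_, ?_⟩
  · obtain ⟨S, hS, rfl⟩ := mem_image.1 hT
    rw [EStar.edges_map, coe_image]
    exact Set.image_mono (h.1 S hS)
  · rintro _ ⟨q, hq, rfl⟩
    obtain ⟨S, ⟨hS, hqS⟩, huniq⟩ := h.2 q hq
    refine ⟨S.map f, ⟨mem_image_of_mem _ hS, ?_⟩, ?_⟩
    · rw [EStar.edges_map]
      exact mem_image_of_mem _ hqS
    · rintro _ ⟨hT', hqT⟩
      obtain ⟨T, hT, rfl⟩ := mem_image.1 hT'
      rw [EStar.edges_map, hinj.mem_finset_image] at hqT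
      rw [huniq T ⟨hT, hqT⟩]

end IsStarPartition

lemma EStarSystem.isStarPartition (sys : EStarSystem n e) :
    IsStarPartition {p | ¬ p.IsDiag} sys.stars :=
  ⟨fun _ _ _ hp => EStar.not_isDiag_of_mem_edges hp, sys.partition⟩

def EStarSystem.ofCardFilter (stars : Finset (EStar n e))
    (h : ∀ p : Sym2 (Fin n), ¬ p.IsDiag → #(stars.filter (p ∈ ·.edges)) = 1) :
    EStarSystem n e :=
  ⟨stars, fun p hp => existsUnique_of_card_filter_eq_one (h p hp)⟩

lemma EStarSystem.not_colourable_one (sys : EStarSystem n e) (hn : 2 ≤ n) :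
    ¬ Colourable sys 1 := by
  rintro ⟨c, hc⟩
  have hp : ¬ (s(⟨0, by omega⟩, ⟨1, by omega⟩) : Sym2 (Fin n)).IsDiag := by
    simp [Fin.ext_iff]
  obtain ⟨S, ⟨hS, -⟩, -⟩ := sys.partition _ hp
  obtain ⟨x, -, hne⟩ := hc S hS
  exact hne (Subsingleton.elim _ _)

def fan (u : Fin a) (L : {L : Finset (Fin b) // #L = e}) : EStar (a + b) e where
  centre := Fin.castAdd b u
  leaves := L.1.map (Fin.natAddEmb a)
  card_leaves := by rw [card_map, L.2]
  centre_not_leaf := by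
    simp only [mem_map, Fin.natAddEmb_apply, not_exists, not_and]
    exact fun j _ h => Fin.castAdd_ne_natAdd u j h.symm

lemma mem_fan_edges {u : Fin a} {L : {L : Finset (Fin b) // #L = e}} {p : Sym2 (Fin (a + b))} :
    p ∈ (fan u L).edges ↔ ∃ j ∈ L.1, s(Fin.castAdd b u, Fin.natAdd a j) = p := by
  simp [EStar.mem_edges, fan]

def crossEdges (a b : ℕ) : Set (Sym2 (Fin (a + b))) :=
  Set.range fun x : Fin a × Fin b => s(Fin.castAdd b x.1, Fin.natAdd a x.2)

lemma isStarPartition_fans (Q : Finset {L : Finset (Fin b) // #L = e})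
    (hQ : ∀ j, ∃! L, L ∈ Q ∧ j ∈ L.1) :
    IsStarPartition (crossEdges a b) (image₂ fan univ Q) := by
  refine ⟨fun S hS p hp => ?_, ?_⟩
  · obtain ⟨u, -, L, -, rfl⟩ := mem_image₂.1 hS
    obtain ⟨j, -, rfl⟩ := mem_fan_edges.1 hp
    exact ⟨(u, j), rfl⟩
  · rintro _ ⟨⟨u, j⟩, rfl⟩
    obtain ⟨L, ⟨hL, hjL⟩, huniq⟩ := hQ j
    refine ⟨fan u L, ⟨mem_image₂_of_mem (mem_univ u) hL, mem_fan_edges.2 ⟨j, hjL, rfl⟩⟩, ?_⟩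
    rintro _ ⟨hS, hp⟩
    obtain ⟨u', -, L', hL', rfl⟩ := mem_image₂.1 hS
    obtain ⟨j', hj', he⟩ := mem_fan_edges.1 hp
    rcases Sym2.eq_iff.1 he with ⟨hu, hj⟩ | ⟨h, -⟩
    · obtain rfl := Fin.castAdd_injective _ _ hu
      obtain rfl := Fin.natAdd_injective _ _ hj
      rw [huniq L' ⟨hL', hj'⟩]
    · exact absurd h (Fin.castAdd_ne_natAdd _ _)

lemma natAdd_notMem_map_castAdd (j : Fin b) (q : Sym2 (Fin a)) :
    Fin.natAdd a j ∉ Sym2.map (Fin.castAdd b) q := by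
  rw [Sym2.mem_map]
  rintro ⟨i, -, h⟩
  exact Fin.castAdd_ne_natAdd i j h

lemma castAdd_notMem_map_natAdd (i : Fin a) (q : Sym2 (Fin b)) :
    Fin.castAdd b i ∉ Sym2.map (Fin.natAdd a) q := by
  rw [Sym2.mem_map]
  rintro ⟨j, -, h⟩
  exact Fin.castAdd_ne_natAdd i j h.symm

lemma disjoint_image_map_castAdd_natAdd (E : Set (Sym2 (Fin a))) (E' : Set (Sym2 (Fin b))) :
    Disjoint (Sym2.map (Fin.castAdd b) '' E) (Sym2.map (Fin.natAdd a) '' E') := by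
  rw [Set.disjoint_left]
  rintro _ ⟨q, -, rfl⟩ ⟨q', -, h⟩
  induction q' using Sym2.ind with
  | _ x y =>
    refine natAdd_notMem_map_castAdd x q ?_
    rw [← h, Sym2.map_mk]
    exact Sym2.mem_mk_left _ _

lemma disjoint_image_map_crossEdges (E : Set (Sym2 (Fin a))) (E' : Set (Sym2 (Fin b))) :
    Disjoint (Sym2.map (Fin.castAdd b) '' E ∪ Sym2.map (Fin.natAdd a) '' E') (crossEdges a b) := by
  rw [Set.disjoint_right]
  rintro _ ⟨⟨i, j⟩, rfl⟩ (⟨q, -, h⟩ | ⟨q, -, h⟩)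
  · exact natAdd_notMem_map_castAdd j q (h ▸ Sym2.mem_mk_right _ _)
  · exact castAdd_notMem_map_natAdd i q (h ▸ Sym2.mem_mk_left _ _)

lemma setOf_not_isDiag_subset_union_crossEdges :
    {p : Sym2 (Fin (a + b)) | ¬ p.IsDiag} ⊆
      Sym2.map (Fin.castAdd b) '' {p | ¬ p.IsDiag} ∪
        Sym2.map (Fin.natAdd a) '' {p | ¬ p.IsDiag} ∪ crossEdges a b := by
  intro p hp
  induction p using Sym2.ind with
  | _ x y =>
    rw [Set.mem_ofPred, Sym2.mk_isDiag_iff] at hp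
    induction x using Fin.addCases with
    | left i =>
      induction y using Fin.addCases with
      | left j => exact .inl (.inl ⟨s(i, j), by simpa using hp, rfl⟩)
      | right j => exact .inr ⟨(i, j), rfl⟩
    | right i =>
      induction y using Fin.addCases with
      | left j => exact .inr ⟨(j, i), Sym2.eq_swap⟩
      | right j => exact .inl (.inr ⟨s(i, j), by simpa using hp, rfl⟩)

def EStarSystem.join (A : EStarSystem a e) (B : EStarSystem b e)
    (Q : Finset {L : Finset (Fin b) // #L = e}) (hQ : ∀ j, ∃! L, L ∈ Q ∧ j ∈ L.1) :
    EStarSystem (a + b) e where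
  stars := A.stars.image (EStar.map (Fin.castAddEmb b)) ∪
    B.stars.image (EStar.map (Fin.natAddEmb a)) ∪ image₂ fan univ Q
  partition p hp :=
    (((A.isStarPartition.image_map _).union (B.isStarPartition.image_map _)
      (disjoint_image_map_castAdd_natAdd _ _)).union (isStarPartition_fans Q hQ)
      (disjoint_image_map_crossEdges _ _)).2 p (setOf_not_isDiag_subset_union_crossEdges hp)

lemma IsWeakColouring.join {k : ℕ} {A : EStarSystem a e} {B : EStarSystem b e}
    {Q : Finset {L : Finset (Fin b) // #L = e}} {hQ : ∀ j, ∃! L, L ∈ Q ∧ j ∈ L.1}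
    {c : Fin a → Fin k} {d : Fin b → Fin k} (hc : IsWeakColouring A c)
    (hd : IsWeakColouring B d) (hQd : ∀ L ∈ Q, ∀ x, ∃ j ∈ L.1, d j ≠ x) :
    IsWeakColouring (A.join B Q hQ) (Fin.append c d) := by
  intro S hS
  simp only [EStarSystem.join, mem_union, mem_image, mem_image₂] at hS
  rcases hS with (⟨T, hT, rfl⟩ | ⟨T, hT, rfl⟩) | ⟨u, -, L, hL, rfl⟩
  · obtain ⟨x, hx, hne⟩ := hc T hT
    exact ⟨Fin.castAdd b x, mem_map_of_mem _ hx, by simpa [EStar.map] using hne⟩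
  · obtain ⟨x, hx, hne⟩ := hd T hT
    exact ⟨Fin.natAdd a x, mem_map_of_mem _ hx, by simpa [EStar.map] using hne⟩
  · obtain ⟨j, hj, hne⟩ := hQd L hL (c u)
    exact ⟨Fin.natAdd a j, mem_map_of_mem _ hj, by simpa [fan] using hne⟩

lemma classCard_append {k : ℕ} (c : Fin a → Fin k) (d : Fin b → Fin k) (i : Fin k) :
    classCard (Fin.append c d) i = classCard c i + classCard d i := by
  simp only [classCard, card_filter, Fin.sum_univ_add, Fin.append_left, Fin.append_right]

def parity (n : ℕ) : Fin n → Fin 2 := fun v => ⟨v % 2, Nat.mod_lt _ two_pos⟩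

def HasEquitableSystem (n : ℕ) : Prop :=
  ∃ sys : EStarSystem n 3, ∃ c : Fin n → Fin 2,
    IsWeakColouring sys c ∧ ∀ i j, classCard c i ≤ classCard c j + 1

lemma hasEquitableSystem_of_parity (stars : Finset (EStar n 3))
    (hpart : ∀ p : Sym2 (Fin n), ¬ p.IsDiag → #(stars.filter (p ∈ ·.edges)) = 1)
    (hweak : ∀ S ∈ stars, ∃ x ∈ S.leaves, parity n x ≠ parity n S.centre)
    (hbal : ∀ i j, classCard (parity n) i ≤ classCard (parity n) j + 1) :
    HasEquitableSystem n :=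
  ⟨.ofCardFilter stars hpart, parity n, hweak, hbal⟩

def stars6 : Finset (EStar 6 3) :=
  {⟨0, {1, 2, 5}, by decide, by decide⟩,
   ⟨1, {2, 3, 5}, by decide, by decide⟩,
   ⟨2, {3, 4, 5}, by decide, by decide⟩,
   ⟨3, {4, 0, 5}, by decide, by decide⟩,
   ⟨4, {0, 1, 5}, by decide, by decide⟩}

def sys6 : EStarSystem 6 3 := .ofCardFilter stars6 (by decide)

def triples6 : Finset {L : Finset (Fin 6) // #L = 3} :=
  {⟨{0, 1, 2}, rfl⟩, ⟨{3, 4, 5}, rfl⟩}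

lemma existsUnique_mem_triples6 (j : Fin 6) : ∃! L, L ∈ triples6 ∧ j ∈ L.1 :=
  existsUnique_of_card_filter_eq_one (by revert j; decide)

lemma HasEquitableSystem.add_six (h : HasEquitableSystem n) : HasEquitableSystem (n + 6) := by
  obtain ⟨sys, c, hc, hbal⟩ := h
  have hweak : IsWeakColouring sys6 (parity 6) := by unfold IsWeakColouring; decide
  have hcard : ∀ i, classCard (parity 6) i = 3 := by decide
  refine ⟨sys.join sys6 triples6 existsUnique_mem_triples6, Fin.append c (parity 6),
    hc.join hweak (by decide), fun i j => ?_⟩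
  rw [classCard_append, classCard_append, hcard, hcard]
  have := hbal i j
  omega

def stars9 : Finset (EStar 9 3) :=
  {⟨0, {1, 2, 5}, by decide, by decide⟩,
   ⟨1, {2, 3, 5}, by decide, by decide⟩,
   ⟨2, {3, 4, 5}, by decide, by decide⟩,
   ⟨3, {4, 0, 5}, by decide, by decide⟩,
   ⟨4, {0, 1, 5}, by decide, by decide⟩,
   ⟨5, {6, 7, 8}, by decide, by decide⟩,
   ⟨6, {7, 3, 4}, by decide, by decide⟩,
   ⟨7, {8, 3, 4}, by decide, by decide⟩,
   ⟨8, {6, 3, 4}, by decide, by decide⟩,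
   ⟨6, {0, 1, 2}, by decide, by decide⟩,
   ⟨7, {0, 1, 2}, by decide, by decide⟩,
   ⟨8, {0, 1, 2}, by decide, by decide⟩}

def stars10 : Finset (EStar 10 3) :=
  {⟨0, {1, 2, 3}, by decide, by decide⟩,
   ⟨1, {2, 3, 4}, by decide, by decide⟩,
   ⟨2, {3, 4, 5}, by decide, by decide⟩,
   ⟨3, {4, 5, 6}, by decide, by decide⟩,
   ⟨4, {5, 6, 0}, by decide, by decide⟩,
   ⟨5, {6, 0, 1}, by decide, by decide⟩,
   ⟨6, {0, 1, 2}, by decide, by decide⟩,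
   ⟨7, {8, 5, 6}, by decide, by decide⟩,
   ⟨8, {9, 5, 6}, by decide, by decide⟩,
   ⟨9, {7, 5, 6}, by decide, by decide⟩,
   ⟨0, {7, 8, 9}, by decide, by decide⟩,
   ⟨1, {7, 8, 9}, by decide, by decide⟩,
   ⟨7, {2, 3, 4}, by decide, by decide⟩,
   ⟨8, {2, 3, 4}, by decide, by decide⟩,
   ⟨9, {2, 3, 4}, by decide, by decide⟩}

lemma hasEquitableSystem_zero : HasEquitableSystem 0 :=
  hasEquitableSystem_of_parity ∅ (by decide) (by decide) (by decide)

lemma hasEquitableSystem_one : HasEquitableSystem 1 :=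
  hasEquitableSystem_of_parity ∅ (by decide) (by decide) (by decide)

lemma hasEquitableSystem_nine : HasEquitableSystem 9 :=
  hasEquitableSystem_of_parity stars9 (by decide) (by decide) (by decide)

lemma hasEquitableSystem_ten : HasEquitableSystem 10 :=
  hasEquitableSystem_of_parity stars10 (by decide) (by decide) (by decide)

lemma hasEquitableSystem (n : ℕ) (hadm : n % 3 = 0 ∨ n % 3 = 1) (hn : n ≤ 1 ∨ 6 ≤ n) :
    HasEquitableSystem n := by
  induction n using Nat.strong_induction_on with
  | _ n ih =>
    rcases hn with hn | hn
    · interval_cases n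
      · exact hasEquitableSystem_zero
      · exact hasEquitableSystem_one
    by_cases h9 : n = 9
    · exact h9 ▸ hasEquitableSystem_nine
    by_cases h10 : n = 10
    · exact h10 ▸ hasEquitableSystem_ten
    obtain ⟨m, rfl⟩ : ∃ m, n = m + 6 := ⟨n - 6, by omega⟩
    exact (ih m (by omega) (by omega) (by omega)).add_six

/-- For every admissible order `n` there is an equitably 2-chromatic 3-star system
of order `n`. -/
theorem stmt5 (n : ℕ) (hadm : n % 3 = 0 ∨ n % 3 = 1) (hn : 6 ≤ n) :
    ∃ sys : EStarSystem n 3, Chromatic sys 2 ∧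
      ∃ c : Fin n → Fin 2, IsWeakColouring sys c ∧
        ∀ i j : Fin 2, classCard c i ≤ classCard c j + 1 := by
  obtain ⟨sys, c, hc, hbal⟩ := hasEquitableSystem n hadm (.inr hn)
  exact ⟨sys, ⟨⟨c, hc⟩, sys.not_colourable_one (by omega)⟩, c, hc, hbal⟩
end

section
/- Let k >= 3. If there exists a (k-1)-chromatic 3-star system (of some order), then there exists a k-chromatic 3-star system (of some order). -/
/-!
Let `c₀` be a weak `(k-1)`-colouring of a `(k-1)`-chromatic system `B` on `V`. Take `2W + 1`
copies of `B`, indexed by `ZMod (2W + 1)`, and let every vertex of copy `i` be the centre of all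
edges to the copies `i + 1, …, i + W`, grouped into triples. Colouring `(i, p)` by `c₀ p + i`
modulo `k` gives a weak `k`-colouring as soon as each of these triples meets a colour other than
that of its centre.

To rule out weak `(k-1)`-colourings, fix `2k - 1` consecutive copies of one vertex, the block
column. Each triple `T` of the block column is served by a copy all of whose vertices take `T` as
a leaf set; no such `T` is monochromatic for the colouring above. A `(k-1)`-colouring is constant
on some triple `T` of the block column, and on the copy serving `T` it restricts to a weak
`(k-1)`-colouring of `B`, onto since `B` is not weakly `(k-2)`-colourable, so some centre of `T`
has the colour of `T`.
-/

namespace Finset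

variable {α β : Type*}

structure IsTriplePartition (P : Finset (Finset α)) (s : Finset α) : Prop where
  subset : ∀ t ∈ P, t ⊆ s
  card_eq_three : ∀ t ∈ P, t.card = 3
  existsUnique : ∀ a ∈ s, ∃! t, t ∈ P ∧ a ∈ t

namespace IsTriplePartition

variable {P Q : Finset (Finset α)} {s s' t : Finset α}

theorem empty : IsTriplePartition (∅ : Finset (Finset α)) ∅ :=
  ⟨by simp, by simp, by simp⟩

theorem singleton (ht : t.card = 3) : IsTriplePartition {t} t :=
  ⟨by simp, by simpa using ht, fun a ha => ⟨t, by simp [ha], by simp⟩⟩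

theorem union [DecidableEq α] (hP : IsTriplePartition P s) (hQ : IsTriplePartition Q s')
    (hs : Disjoint s s') : IsTriplePartition (P ∪ Q) (s ∪ s') where
  subset t ht := by
    rcases mem_union.1 ht with ht | ht
    · exact (hP.subset t ht).trans subset_union_left
    · exact (hQ.subset t ht).trans subset_union_right
  card_eq_three t ht := by
    rcases mem_union.1 ht with ht | ht
    exacts [hP.card_eq_three t ht, hQ.card_eq_three t ht]
  existsUnique a ha := by
    rcases mem_union.1 ha with ha | ha
    · obtain ⟨t, ⟨htP, hat⟩, huniq⟩ := hP.existsUnique a ha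
      refine ⟨t, ⟨mem_union_left _ htP, hat⟩, fun u ⟨hu, hau⟩ => ?_⟩
      rcases mem_union.1 hu with hu | hu
      · exact huniq u ⟨hu, hau⟩
      · exact absurd (hQ.subset u hu hau) (disjoint_left.1 hs ha)
    · obtain ⟨t, ⟨htQ, hat⟩, huniq⟩ := hQ.existsUnique a ha
      refine ⟨t, ⟨mem_union_right _ htQ, hat⟩, fun u ⟨hu, hau⟩ => ?_⟩
      rcases mem_union.1 hu with hu | hu
      · exact absurd (hP.subset u hu hau) (disjoint_right.1 hs ha)
      · exact huniq u ⟨hu, hau⟩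

theorem map [DecidableEq β] (hP : IsTriplePartition P s) (f : α ↪ β) :
    IsTriplePartition (P.image (map f)) (s.map f) where
  subset t ht := by
    obtain ⟨u, hu, rfl⟩ := mem_image.1 ht
    exact map_subset_map.2 (hP.subset u hu)
  card_eq_three t ht := by
    obtain ⟨u, hu, rfl⟩ := mem_image.1 ht
    rw [card_map, hP.card_eq_three u hu]
  existsUnique b hb := by
    obtain ⟨a, ha, rfl⟩ := mem_map.1 hb
    obtain ⟨t, ⟨htP, hat⟩, huniq⟩ := hP.existsUnique a ha
    refine ⟨t.map f, ⟨mem_image_of_mem _ htP, mem_map_of_mem f hat⟩, ?_⟩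
    rintro _ ⟨hu, hau⟩
    obtain ⟨u, hu', rfl⟩ := mem_image.1 hu
    rw [huniq u ⟨hu', (mem_map' f).1 hau⟩]

theorem of_pairwiseDisjoint [DecidableEq α] (hcard : ∀ t ∈ P, t.card = 3)
    (hdisj : (P : Set (Finset α)).PairwiseDisjoint id) : IsTriplePartition P (P.biUnion id) where
  subset t ht := subset_biUnion_of_mem id ht
  card_eq_three := hcard
  existsUnique a ha := by
    obtain ⟨t, ht, hat⟩ := mem_biUnion.1 ha
    refine ⟨t, ⟨ht, hat⟩, fun u ⟨hu, hau⟩ => ?_⟩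
    by_contra hne
    exact disjoint_left.1 (hdisj hu ht hne) hau hat

theorem card_eq [DecidableEq α] (hP : IsTriplePartition P s) : s.card = 3 * P.card := by
  have hs : s = P.biUnion id := by
    ext a
    refine ⟨fun ha => ?_, fun ha => ?_⟩
    · obtain ⟨t, ⟨ht, hat⟩, -⟩ := hP.existsUnique a ha
      exact mem_biUnion.2 ⟨t, ht, hat⟩
    · obtain ⟨t, ht, hat⟩ := mem_biUnion.1 ha
      exact hP.subset t ht hat
  rw [hs, card_biUnion]
  · simp only [id]
    rw [sum_congr rfl hP.card_eq_three, sum_const, smul_eq_mul, mul_comm]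
  intro t ht u hu hne
  refine disjoint_left.2 fun a hat hau => hne ?_
  obtain ⟨v, -, huniq⟩ := hP.existsUnique a (hP.subset t ht hat)
  rw [huniq t ⟨ht, hat⟩, huniq u ⟨hu, hau⟩]

end IsTriplePartition

variable [DecidableEq α] (p : α → Prop) [DecidablePred p]

theorem card_sdiff_filter_add_card_filter {s t : Finset α} (hts : t ⊆ s) :
    ((s \ t).filter p).card + (t.filter p).card = (s.filter p).card := by
  have hdiff : (s \ t).filter p = s.filter p \ t.filter p := by
    ext
    simp only [mem_filter, mem_sdiff]
    tauto
  rw [hdiff, card_sdiff_add_card_eq_card (filter_subset_filter p hts)]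

theorem exists_triple_of_card_le {s : Finset α} (hs : s.Nonempty) (h3 : 3 ∣ s.card)
    (hp : s.card ≤ 3 * (s.filter p).card) :
    ∃ t ⊆ s, t.card = 3 ∧ (∃ a ∈ t, p a) ∧
      (s \ t).card ≤ 3 * ((s \ t).filter p).card := by
  have hsplit := card_filter_add_card_filter_not (s := s) p
  have hs3 : 3 ≤ s.card := Nat.le_of_dvd hs.card_pos h3
  obtain ⟨g, hg⟩ : (s.filter p).Nonempty := card_pos.1 (by omega)
  obtain ⟨hgs, hpg⟩ := mem_filter.1 hg
  -- complete a vertex satisfying `p` by two vertices that do not, if there are two of them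
  by_cases hR : 2 ≤ (s.filter (¬ p ·)).card
  · obtain ⟨r₁, hr₁, r₂, hr₂, hr⟩ :=
      one_lt_card.1 (show 1 < (s.filter (¬ p ·)).card by omega)
    rw [mem_filter] at hr₁ hr₂
    have hts : {g, r₁, r₂} ⊆ s := by simp [insert_subset_iff, hgs, hr₁.1, hr₂.1]
    have hgr₁ : g ≠ r₁ := fun h => hr₁.2 (h ▸ hpg)
    have hgr₂ : g ≠ r₂ := fun h => hr₂.2 (h ▸ hpg)
    have hfilter : ({g, r₁, r₂} : Finset α).filter p = {g} := by
      ext x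
      simp only [mem_filter, mem_insert, mem_singleton]
      constructor
      · rintro ⟨rfl | rfl | rfl, hx⟩
        exacts [rfl, absurd hx hr₁.2, absurd hx hr₂.2]
      · rintro rfl
        exact ⟨Or.inl rfl, hpg⟩
    have hcard := card_sdiff_filter_add_card_filter p hts
    rw [hfilter, card_singleton] at hcard
    refine ⟨{g, r₁, r₂}, hts, card_eq_three.2 ⟨g, r₁, r₂, hgr₁, hgr₂, hr, rfl⟩,
      ⟨g, by simp, hpg⟩, ?_⟩
    rw [card_sdiff_of_subset hts, card_eq_three.2 ⟨g, r₁, r₂, hgr₁, hgr₂, hr, rfl⟩]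
    omega
  · obtain ⟨u, hu, hu2⟩ := exists_subset_card_eq (s := s.erase g) (n := 2)
      (by rw [card_erase_of_mem hgs]; omega)
    have hgu : g ∉ u := fun h => by simpa using hu h
    have hts : insert g u ⊆ s := insert_subset hgs ((hu.trans (erase_subset g s)))
    have ht3 : (insert g u).card = 3 := by rw [card_insert_of_notMem hgu, hu2]
    have hcard := card_sdiff_filter_add_card_filter p hts
    have hle := card_le_card (filter_subset p (insert g u))
    refine ⟨insert g u, hts, ht3, ⟨g, mem_insert_self g u, hpg⟩, ?_⟩
    rw [card_sdiff_of_subset hts, ht3]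
    omega

theorem exists_isTriplePartition_of_card_le {s : Finset α} (h3 : 3 ∣ s.card)
    (hp : s.card ≤ 3 * (s.filter p).card) :
    ∃ P, IsTriplePartition P s ∧ ∀ t ∈ P, ∃ a ∈ t, p a := by
  obtain ⟨m, hm⟩ := h3
  induction m generalizing s with
  | zero =>
    rw [card_eq_zero.1 hm]
    exact ⟨∅, IsTriplePartition.empty, by simp⟩
  | succ m ih =>
    obtain ⟨t, hts, ht3, htp, hrest⟩ :=
      exists_triple_of_card_le p (card_pos.1 (by omega)) ⟨m + 1, hm⟩ hp
    obtain ⟨P, hP, hPp⟩ := ih hrest (by rw [card_sdiff_of_subset hts]; omega)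
    refine ⟨{t} ∪ P, ?_, ?_⟩
    · rw [← union_sdiff_of_subset hts]
      exact (IsTriplePartition.singleton ht3).union hP disjoint_sdiff
    · simp only [mem_union, mem_singleton]
      rintro u (rfl | hu)
      exacts [htp, hPp u hu]

end Finset

open Finset

theorem EStar.ext {n e : ℕ} {S S' : EStar n e} (hc : S.centre = S'.centre)
    (hl : S.leaves = S'.leaves) : S = S' := by
  cases S
  cases S'
  simp_all

noncomputable instance {n e : ℕ} : Fintype (EStar n e) :=
  Fintype.ofInjective (fun S => (S.centre, S.leaves))
    fun _ _ h => EStar.ext (congrArg Prod.fst h) (congrArg Prod.snd h)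

theorem EStar.mk_mem_edges_iff {n e : ℕ} {S : EStar n e} {x y : Fin n} :
    s(x, y) ∈ S.edges ↔
      (S.centre = x ∧ y ∈ S.leaves) ∨ (S.centre = y ∧ x ∈ S.leaves) := by
  simp only [EStar.edges, mem_image, Sym2.eq_iff]
  constructor
  · rintro ⟨a, ha, ⟨rfl, rfl⟩ | ⟨rfl, rfl⟩⟩
    exacts [Or.inl ⟨rfl, ha⟩, Or.inr ⟨rfl, ha⟩]
  · rintro (⟨rfl, hy⟩ | ⟨rfl, hx⟩)
    exacts [⟨y, hy, Or.inl ⟨rfl, rfl⟩⟩, ⟨x, hx, Or.inr ⟨rfl, rfl⟩⟩]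

theorem EStarSystem.eq_of_mem_edges {n e : ℕ} (sys : EStarSystem n e) {S S' : EStar n e}
    (hS : S ∈ sys.stars) (hS' : S' ∈ sys.stars) {x y : Fin n} (hxy : x ≠ y)
    (h : s(x, y) ∈ S.edges) (h' : s(x, y) ∈ S'.edges) : S = S' :=
  (sys.partition _ (Sym2.mk_isDiag_iff.not.2 hxy)).unique ⟨hS, h⟩ ⟨hS', h'⟩

/-- A 3-star system given centre by centre: every edge is oriented away from the centre of the
star containing it, and `parts v` are the leaf sets of the stars centred at `v`. -/
structure OrientedStarSystem (V : Type*) where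
  out : V → Finset V
  parts : V → Finset (Finset V)
  notMem_out : ∀ v, v ∉ out v
  mem_out_iff : ∀ ⦃v w⦄, v ≠ w → (w ∈ out v ↔ v ∉ out w)
  isTriplePartition : ∀ v, (parts v).IsTriplePartition (out v)

namespace OrientedStarSystem

variable {V : Type*} (S : OrientedStarSystem V)

def IsWeakColouring {α : Type*} (c : V → α) : Prop :=
  ∀ v, ∀ T ∈ S.parts v, ∃ a ∈ T, c a ≠ c v

def Colourable (m : ℕ) : Prop :=
  ∃ c : V → Fin m, S.IsWeakColouring c

variable {S}

theorem ne_of_mem_out {v w : V} (h : w ∈ S.out v) : v ≠ w := by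
  rintro rfl
  exact S.notMem_out v h

theorem IsWeakColouring.surjective {m : ℕ} {c : V → Fin m} (hc : S.IsWeakColouring c)
    (h : ¬ S.Colourable (m - 1)) : Function.Surjective c := by
  by_contra hsurj
  obtain ⟨β, hβ⟩ := not_forall.1 hsurj
  obtain ⟨m', rfl⟩ : ∃ m', m = m' + 1 := ⟨m - 1, by have := β.isLt; omega⟩
  have hne (v : V) : c v ≠ β := fun hv => hβ ⟨v, hv⟩
  choose c' hc' using fun v => Fin.exists_succAbove_eq (hne v)
  refine h ⟨c', fun v T hT => ?_⟩
  obtain ⟨a, ha, hca⟩ := hc v T hT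
  exact ⟨a, ha, fun h' => hca (by rw [← hc' a, ← hc' v, h'])⟩

end OrientedStarSystem

namespace EStarSystem

variable {n : ℕ} (sys : EStarSystem n 3)

def toOrientedStarSystem : OrientedStarSystem (Fin n) where
  out p := (sys.stars.filter (·.centre = p)).biUnion EStar.leaves
  parts p := (sys.stars.filter (·.centre = p)).image EStar.leaves
  notMem_out p h := by
    obtain ⟨S, hS, hp⟩ := mem_biUnion.1 h
    exact S.centre_not_leaf ((mem_filter.1 hS).2 ▸ hp)
  mem_out_iff p q hpq := by
    simp only [mem_biUnion, mem_filter, not_exists, not_and, and_imp]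
    constructor
    · rintro ⟨S, ⟨hS, rfl⟩, hq⟩ S' hS' rfl hp
      have hedge' : s(S.centre, S'.centre) ∈ S'.edges := by
        rw [Sym2.eq_swap]
        exact EStar.mk_mem_edges_iff.2 (Or.inl ⟨rfl, hp⟩)
      have hedge : s(S.centre, S'.centre) ∈ S.edges :=
        EStar.mk_mem_edges_iff.2 (Or.inl ⟨rfl, hq⟩)
      exact hpq (sys.eq_of_mem_edges hS hS' hpq hedge hedge' ▸ rfl)
    · intro h
      obtain ⟨S, ⟨hS, hedge⟩, -⟩ := sys.partition s(p, q) (Sym2.mk_isDiag_iff.not.2 hpq)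
      rcases EStar.mk_mem_edges_iff.1 hedge with ⟨hc, hq⟩ | ⟨hc, hp⟩
      · exact ⟨S, ⟨hS, hc⟩, hq⟩
      · exact absurd hp (h S hS hc)
  isTriplePartition p := by
    refine ⟨fun T hT => ?_, fun T hT => ?_, fun q hq => ?_⟩
    · obtain ⟨S, hS, rfl⟩ := mem_image.1 hT
      exact subset_biUnion_of_mem _ hS
    · obtain ⟨S, -, rfl⟩ := mem_image.1 hT
      exact S.card_leaves
    · obtain ⟨S, hS, hq⟩ := mem_biUnion.1 hq
      refine ⟨S.leaves, ⟨mem_image_of_mem _ hS, hq⟩, ?_⟩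
      rintro _ ⟨hT, hq'⟩
      obtain ⟨S', hS', rfl⟩ := mem_image.1 hT
      rw [mem_filter] at hS hS'
      have hpq : p ≠ q := fun h => S.centre_not_leaf (hS.2 ▸ h ▸ hq)
      have hedge {R : EStar n 3} (hR : R.centre = p) (hqR : q ∈ R.leaves) : s(p, q) ∈ R.edges :=
        EStar.mk_mem_edges_iff.2 (Or.inl ⟨hR, hqR⟩)
      rw [sys.eq_of_mem_edges hS'.1 hS.1 hpq (hedge hS'.2 hq') (hedge hS.2 hq)]

theorem isWeakColouring_toOrientedStarSystem_iff {k : ℕ} {c : Fin n → Fin k} :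
    IsWeakColouring sys c ↔ sys.toOrientedStarSystem.IsWeakColouring c := by
  constructor
  · intro hc p T hT
    obtain ⟨S, hS, rfl⟩ := mem_image.1 hT
    obtain ⟨hS', rfl⟩ := mem_filter.1 hS
    exact hc S hS'
  · intro hc S hS
    exact hc S.centre S.leaves (mem_image_of_mem _ (mem_filter.2 ⟨hS, rfl⟩))

theorem colourable_toOrientedStarSystem_iff {k : ℕ} :
    Colourable sys k ↔ sys.toOrientedStarSystem.Colourable k :=
  exists_congr fun _ => sys.isWeakColouring_toOrientedStarSystem_iff

end EStarSystem

namespace OrientedStarSystem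

variable {V : Type*} [DecidableEq V] (S : OrientedStarSystem V) {N : ℕ} (e : V ≃ Fin N)

noncomputable def stars : Finset (EStar N 3) :=
  univ.filter fun E => e.finsetCongr.symm E.leaves ∈ S.parts (e.symm E.centre)

def star {v : V} {T : Finset V} (hT : T ∈ S.parts v) : EStar N 3 where
  centre := e v
  leaves := e.finsetCongr T
  card_leaves := by
    rw [Equiv.finsetCongr_apply, card_map, (S.isTriplePartition v).card_eq_three T hT]
  centre_not_leaf h :=
    S.notMem_out v ((S.isTriplePartition v).subset T hT (by simpa using h))

variable {S e}

theorem mem_stars {E : EStar N 3} :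
    E ∈ S.stars e ↔ e.finsetCongr.symm E.leaves ∈ S.parts (e.symm E.centre) := by
  rw [stars, mem_filter]
  exact and_iff_right (mem_univ E)

theorem star_mem_stars {v : V} {T : Finset V} (hT : T ∈ S.parts v) :
    S.star e hT ∈ S.stars e := by
  rw [mem_stars]
  simpa only [star, Equiv.symm_apply_apply] using hT

theorem existsUnique_star_of_mem_out {v w : V} (hw : w ∈ S.out v) :
    ∃! E, E ∈ S.stars e ∧ s(e v, e w) ∈ E.edges := by
  obtain ⟨T, ⟨hT, hwT⟩, huniq⟩ := (S.isTriplePartition v).existsUnique w hw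
  have hedge : s(e v, e w) ∈ (S.star e hT).edges :=
    EStar.mk_mem_edges_iff.2 (Or.inl ⟨rfl, by simpa [star] using hwT⟩)
  refine ⟨S.star e hT, ⟨star_mem_stars hT, hedge⟩, ?_⟩
  rintro E ⟨hE, hedge⟩
  rw [mem_stars] at hE
  rcases EStar.mk_mem_edges_iff.1 hedge with ⟨hc, hl⟩ | ⟨hc, hl⟩
  · rw [hc, e.symm_apply_apply] at hE
    have hET := huniq _ ⟨hE, by simpa using hl⟩
    exact EStar.ext hc (e.finsetCongr.symm_apply_eq.1 hET)
  · rw [hc, e.symm_apply_apply] at hE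
    have hv : v ∈ S.out w := (S.isTriplePartition w).subset _ hE (by simpa using hl)
    exact absurd hv ((S.mem_out_iff (ne_of_mem_out hw)).1 hw)

theorem stars_partition (p : Sym2 (Fin N)) (hp : ¬ p.IsDiag) :
    ∃! E, E ∈ S.stars e ∧ p ∈ E.edges := by
  induction p using Sym2.inductionOn with
  | hf x y =>
    obtain ⟨v, rfl⟩ := e.surjective x
    obtain ⟨w, rfl⟩ := e.surjective y
    have hvw : v ≠ w := fun h => hp (by simp [h])
    by_cases hw : w ∈ S.out v
    · exact existsUnique_star_of_mem_out hw
    · rw [Sym2.eq_swap]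
      exact existsUnique_star_of_mem_out (not_not.1 ((S.mem_out_iff hvw).not.1 hw))

variable (S e)

noncomputable def toEStarSystem : EStarSystem N 3 :=
  ⟨S.stars e, stars_partition⟩

theorem colourable_toEStarSystem_iff {m : ℕ} :
    _root_.Colourable (S.toEStarSystem e) m ↔ S.Colourable m := by
  constructor
  · rintro ⟨c, hc⟩
    refine ⟨c ∘ e, fun v T hT => ?_⟩
    obtain ⟨a, ha, hca⟩ := hc _ (star_mem_stars hT)
    obtain ⟨b, hb, rfl⟩ := mem_map.1 ha
    exact ⟨b, hb, hca⟩
  · rintro ⟨c, hc⟩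
    refine ⟨c ∘ e.symm, fun E hE => ?_⟩
    obtain ⟨b, hb, hcb⟩ := hc _ _ (mem_stars.1 hE)
    obtain ⟨a, ha, rfl⟩ := mem_map.1 hb
    exact ⟨a, ha, by simpa using hcb⟩

end OrientedStarSystem

theorem Finset.card_le_of_subset_Ico_of_modEq {s : Finset ℕ} {a L k : ℕ}
    (hs : s ⊆ Ico a (a + L)) (hmod : ∀ x ∈ s, ∀ y ∈ s, x ≡ y [MOD k]) :
    s.card ≤ L / k + 1 := by
  have hmem {x : ℕ} (hx : x ∈ s) : a ≤ x ∧ x < a + L := mem_Ico.1 (hs hx)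
  calc s.card ≤ (range (L / k + 1)).card := by
        refine card_le_card_of_injOn (fun x => (x - a) / k) (fun x hx => ?_)
          fun x hx y hy hxy => ?_
        · have := hmem hx
          exact mem_range.2 (Nat.lt_succ_of_le (Nat.div_le_div_right (by omega)))
        · have hx' := hmem hx
          have hy' := hmem hy
          have hrem : (x - a) % k = (y - a) % k := Nat.ModEq.add_right_cancel' a (by
            rw [Nat.sub_add_cancel hx'.1, Nat.sub_add_cancel hy'.1]
            exact hmod x hx y hy)
          have : x - a = y - a := by
            rw [← Nat.div_add_mod (x - a) k, ← Nat.div_add_mod (y - a) k, hrem]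
            exact congrArg (k * · + _) hxy
          omega
    _ = L / k + 1 := card_range _

/-- The run `b + 1, …, b + W` wraps around modulo `t` at most once, so it splits into two runs of
consecutive integers. -/
theorem card_filter_Icc_mod_mod_le {t W k a b γ : ℕ} (hb : b < t) (hW : W < t) :
    ((Icc 1 W).filter fun d => (a + (b + d) % t) % k = γ).card ≤ W / k + 2 := by
  set s := (Icc 1 W).filter fun d => (a + (b + d) % t) % k = γ
  set L := min W (t - 1 - b)
  have hmem {d : ℕ} (hd : d ∈ s) : (1 ≤ d ∧ d ≤ W) ∧ (a + (b + d) % t) % k = γ := by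
    simpa [s] using hd
  have hlow : (s.filter (b + · < t)).card ≤ L / k + 1 := by
    refine card_le_of_subset_Ico_of_modEq (a := 1) (fun d hd => ?_) fun d hd d' hd' => ?_
    · obtain ⟨hd, hdt⟩ := mem_filter.1 hd
      have := (hmem hd).1
      exact mem_Ico.2 ⟨by omega, by omega⟩
    · obtain ⟨hd, hdt⟩ := mem_filter.1 hd
      obtain ⟨hd', hdt'⟩ := mem_filter.1 hd'
      have h := (hmem hd).2.trans (hmem hd').2.symm
      rw [Nat.mod_eq_of_lt hdt, Nat.mod_eq_of_lt hdt', ← add_assoc, ← add_assoc] at h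
      exact Nat.ModEq.add_left_cancel' (a + b) h
  have hhigh : (s.filter (¬ b + · < t)).card ≤ (W - L) / k + 1 := by
    refine card_le_of_subset_Ico_of_modEq (a := t - b) (fun d hd => ?_) fun d hd d' hd' => ?_
    · obtain ⟨hd, hdt⟩ := mem_filter.1 hd
      have := (hmem hd).1
      exact mem_Ico.2 ⟨by omega, by omega⟩
    · obtain ⟨hd, hdt⟩ := mem_filter.1 hd
      obtain ⟨hd', hdt'⟩ := mem_filter.1 hd'
      have hwrap {e : ℕ} (he : e ∈ s) (het : ¬ b + e < t) : (b + e) % t + t = b + e := by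
        have := (hmem he).1
        rw [Nat.mod_eq_sub_mod (by omega), Nat.mod_eq_of_lt (by omega)]
        omega
      have h : a + (b + d) % t ≡ a + (b + d') % t [MOD k] := (hmem hd).2.trans (hmem hd').2.symm
      have h' := (Nat.ModEq.add_left_cancel' a h).add_right t
      rw [hwrap hd hdt, hwrap hd' hdt'] at h'
      exact Nat.ModEq.add_left_cancel' b h'
  have hsplit := card_filter_add_card_filter_not (s := s) (b + · < t)
  have hdiv : L / k + (W - L) / k ≤ (L + (W - L)) / k := Nat.div_add_div_le_add_div
  rw [Nat.add_sub_cancel' (min_le_left _ _)] at hdiv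
  omega

def cyclicWindow (W : ℕ) (i : ZMod (2 * W + 1)) : Finset (ZMod (2 * W + 1)) :=
  (Icc 1 W).image fun d : ℕ => i + d

section cyclicWindow

variable {W : ℕ}

theorem mem_cyclicWindow {i j : ZMod (2 * W + 1)} :
    j ∈ cyclicWindow W i ↔ 1 ≤ (j - i).val ∧ (j - i).val ≤ W := by
  constructor
  · rintro hj
    obtain ⟨d, hd, rfl⟩ := mem_image.1 hj
    rw [add_sub_cancel_left, ZMod.val_cast_of_lt (by simp at hd; omega)]
    simpa using hd
  · rintro hd
    exact mem_image.2 ⟨(j - i).val, mem_Icc.2 hd, by simp⟩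

theorem self_notMem_cyclicWindow (i : ZMod (2 * W + 1)) : i ∉ cyclicWindow W i := by
  simp [mem_cyclicWindow]

theorem mem_cyclicWindow_iff_notMem {i j : ZMod (2 * W + 1)} (hij : i ≠ j) :
    j ∈ cyclicWindow W i ↔ i ∉ cyclicWindow W j := by
  have hne : j - i ≠ 0 := sub_ne_zero.2 hij.symm
  have : NeZero (j - i) := ⟨hne⟩
  have hneg : (i - j).val = 2 * W + 1 - (j - i).val := by
    rw [← neg_sub, ZMod.val_neg_of_ne_zero]
  have hpos : 0 < (j - i).val := Nat.pos_of_ne_zero ((ZMod.val_ne_zero _).2 hne)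
  have hlt := ZMod.val_lt (j - i)
  rw [mem_cyclicWindow, mem_cyclicWindow, hneg]
  omega

theorem card_cyclicWindow (i : ZMod (2 * W + 1)) : (cyclicWindow W i).card = W := by
  rw [cyclicWindow, card_image_of_injOn, Nat.card_Icc, Nat.add_sub_cancel]
  intro d hd d' hd' h
  simp only [coe_Icc, Set.mem_Icc] at hd hd'
  have := congrArg ZMod.val (add_left_cancel h)
  rwa [ZMod.val_cast_of_lt (by omega), ZMod.val_cast_of_lt (by omega)] at this

theorem card_filter_cyclicWindow_mod_le (i : ZMod (2 * W + 1)) (a k γ : ℕ) :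
    ((cyclicWindow W i).filter fun j => (a + j.val) % k = γ).card ≤ W / k + 2 := by
  have hval : (Icc 1 W).filter (fun d : ℕ => (a + (i + d).val) % k = γ) =
      (Icc 1 W).filter fun d => (a + (i.val + d) % (2 * W + 1)) % k = γ :=
    filter_congr fun d _ => by rw [ZMod.val_add, ZMod.val_natCast, Nat.add_mod_mod]
  rw [cyclicWindow, filter_image]
  exact card_image_le.trans (hval ▸ card_filter_Icc_mod_mod_le (ZMod.val_lt i) (by omega))

end cyclicWindow

noncomputable section

namespace Blowup

abbrev BlockTriple (k : ℕ) := {T : Finset (Fin (2 * k - 1)) // T.card = 3}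

/-- A multiple of `3`, at least `18`, and large enough for the window of every server to contain
the block column. -/
def reach (k : ℕ) : ℕ := 3 * (Fintype.card (BlockTriple k) + 2 * k)

abbrev Copy (k : ℕ) := ZMod (2 * reach k + 1)

variable {k : ℕ}

/-- With `M` block triples, copies `0, …, M - 1` serve them, and the block column consists of the
copies `M, …, M + 2k - 2` of a fixed vertex. -/
def server (T : BlockTriple k) : Copy k := (Fintype.equivFin (BlockTriple k) T : ℕ)

def blockCopy (j : Fin (2 * k - 1)) : Copy k := (Fintype.card (BlockTriple k) + j : ℕ)

theorem val_server (T : BlockTriple k) :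
    (server T).val = Fintype.equivFin (BlockTriple k) T := by
  have := (Fintype.equivFin (BlockTriple k) T).isLt
  rw [server, ZMod.val_cast_of_lt (by rw [reach]; omega)]

theorem server_injective : Function.Injective (server (k := k)) := fun T T' h => by
  have := congrArg ZMod.val h
  rw [val_server, val_server] at this
  exact (Fintype.equivFin _).injective (Fin.ext this)

theorem val_blockCopy (j : Fin (2 * k - 1)) :
    (blockCopy j).val = Fintype.card (BlockTriple k) + j := by
  have := j.isLt
  rw [blockCopy, ZMod.val_cast_of_lt (by rw [reach]; omega)]

theorem blockCopy_mem_cyclicWindow_server (T : BlockTriple k) (j : Fin (2 * k - 1)) :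
    blockCopy j ∈ cyclicWindow (reach k) (server T) := by
  have hT := (Fintype.equivFin (BlockTriple k) T).isLt
  have hj := j.isLt
  have hsub : blockCopy j - server T =
      ((Fintype.card (BlockTriple k) + j - Fintype.equivFin (BlockTriple k) T : ℕ) : Copy k) := by
    rw [blockCopy, server, Nat.cast_sub (by omega)]
  rw [mem_cyclicWindow, hsub, ZMod.val_cast_of_lt (by rw [reach]; omega), reach]
  omega

variable {V : Type*}

def blockEmb (q₀ : V) : Fin (2 * k - 1) ↪ Copy k × V where
  toFun j := (blockCopy j, q₀)
  inj' j j' h := by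
    have := congrArg (fun x => x.1.val) h
    simp only [val_blockCopy, Nat.add_left_cancel_iff] at this
    exact Fin.ext this

theorem blockEmb_apply (q₀ : V) (j : Fin (2 * k - 1)) :
    blockEmb q₀ j = (blockCopy j, q₀) := rfl

def windowVerts [Fintype V] (i : Copy k) : Finset (Copy k × V) :=
  cyclicWindow (reach k) i ×ˢ univ

def colour (c₀ : V → Fin (k - 1)) (x : Copy k × V) : Fin k :=
  ⟨(c₀ x.2 + x.1.val) % k, Nat.mod_lt _ (by have := (c₀ x.2).isLt; omega)⟩

variable (c₀ : V → Fin (k - 1))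

theorem val_colour (x : Copy k × V) : (colour c₀ x : ℕ) = (c₀ x.2 + x.1.val) % k := rfl

theorem colour_ne_of_ne (i : Copy k) {p q : V} (h : c₀ p ≠ c₀ q) :
    colour c₀ (i, p) ≠ colour c₀ (i, q) := by
  intro hc
  have hp := (c₀ p).isLt
  have hq := (c₀ q).isLt
  have hmod : (c₀ p : ℕ) ≡ c₀ q [MOD k] :=
    Nat.ModEq.add_right_cancel' i.val (congrArg Fin.val hc)
  rw [Nat.ModEq, Nat.mod_eq_of_lt (by omega), Nat.mod_eq_of_lt (by omega)] at hmod
  exact h (Fin.ext hmod)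

theorem card_filter_windowVerts_colour_le [Fintype V] (i : Copy k) (γ : Fin k) :
    ((windowVerts i).filter fun x => colour c₀ x = γ).card ≤
      Fintype.card V * (reach k / k + 2) := by
  rw [windowVerts, card_filter, sum_product_right]
  calc _ ≤ ∑ _q : V, (reach k / k + 2) := sum_le_sum fun q _ => by
          rw [← card_filter]
          refine le_of_eq_of_le (congrArg card (filter_congr fun j _ => ?_))
            (card_filter_cyclicWindow_mod_le i (c₀ q) k γ)
          exact Fin.ext_iff
    _ = Fintype.card V * (reach k / k + 2) := by rw [sum_const, card_univ, smul_eq_mul]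

variable [DecidableEq V]

def blockParts (q₀ : V) (i : Copy k) : Finset (Finset (Copy k × V)) :=
  (univ.filter fun T : BlockTriple k => server T = i).image fun T => T.1.map (blockEmb q₀)

def blockSet (q₀ : V) (i : Copy k) : Finset (Copy k × V) := (blockParts q₀ i).biUnion id

theorem mem_blockParts {q₀ : V} {i : Copy k} {U : Finset (Copy k × V)} :
    U ∈ blockParts q₀ i ↔
      ∃ T : BlockTriple k, server T = i ∧ T.1.map (blockEmb q₀) = U := by
  simp [blockParts]

theorem eq_of_mem_blockParts {q₀ : V} {i : Copy k} {U U' : Finset (Copy k × V)}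
    (hU : U ∈ blockParts q₀ i) (hU' : U' ∈ blockParts q₀ i) : U = U' := by
  obtain ⟨T, rfl, rfl⟩ := mem_blockParts.1 hU
  obtain ⟨T', hT', rfl⟩ := mem_blockParts.1 hU'
  rw [server_injective hT']

theorem isTriplePartition_blockParts (q₀ : V) (i : Copy k) :
    (blockParts q₀ i).IsTriplePartition (blockSet q₀ i) := by
  refine IsTriplePartition.of_pairwiseDisjoint (fun U hU => ?_)
    fun U hU U' hU' hne => absurd (eq_of_mem_blockParts hU hU') hne
  obtain ⟨T, -, rfl⟩ := mem_blockParts.1 hU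
  rw [card_map, T.2]

theorem card_blockSet_le (q₀ : V) (i : Copy k) : (blockSet q₀ i).card ≤ 3 := by
  rw [(isTriplePartition_blockParts q₀ i).card_eq]
  have := card_le_one.2 fun U hU U' hU' => eq_of_mem_blockParts (q₀ := q₀) (i := i) hU hU'
  omega

theorem blockSet_subset_windowVerts [Fintype V] (q₀ : V) (i : Copy k) :
    blockSet q₀ i ⊆ windowVerts i := by
  intro x hx
  obtain ⟨U, hU, hxU⟩ := mem_biUnion.1 hx
  obtain ⟨T, rfl, rfl⟩ := mem_blockParts.1 hU
  obtain ⟨j, -, rfl⟩ := mem_map.1 hxU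
  exact mem_product.2 ⟨blockCopy_mem_cyclicWindow_server T j, mem_univ _⟩

/-- Three copies among `2k - 1` consecutive ones never share a residue modulo `k`. -/
theorem exists_colour_ne_of_mem_blockParts (hk : 0 < k) {q₀ : V} {i : Copy k}
    {U : Finset (Copy k × V)} (hU : U ∈ blockParts q₀ i) (γ : Fin k) :
    ∃ a ∈ U, colour c₀ a ≠ γ := by
  obtain ⟨T, -, rfl⟩ := mem_blockParts.1 hU
  by_contra! h
  have hcol (j : Fin (2 * k - 1)) (hj : j ∈ T.1) :
      (c₀ q₀ + Fintype.card (BlockTriple k)) + j ≡ γ [MOD k] := by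
    have := congrArg Fin.val (h _ (mem_map_of_mem _ hj))
    rw [val_colour, blockEmb_apply, val_blockCopy] at this
    rw [Nat.ModEq, add_assoc, this, Nat.mod_eq_of_lt γ.isLt]
  have hcard := card_le_of_subset_Ico_of_modEq (s := T.1.map Fin.valEmbedding) (a := 0)
    (L := 2 * k - 1) (k := k) (fun x hx => ?_) fun x hx y hy => ?_
  · rw [card_map, T.2] at hcard
    have : (2 * k - 1) / k < 2 := (Nat.div_lt_iff_lt_mul hk).2 (by omega)
    omega
  · obtain ⟨j, -, rfl⟩ := mem_map.1 hx
    exact mem_Ico.2 ⟨Nat.zero_le _, by simp⟩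
  · obtain ⟨j, hj, rfl⟩ := mem_map.1 hx
    obtain ⟨j', hj', rfl⟩ := mem_map.1 hy
    exact Nat.ModEq.add_left_cancel' _ ((hcol j hj).trans (hcol j' hj').symm)

variable [Fintype V]

/-- A colour meets each column of a window at most `W / k + 2 ≤ W / 3 + 2` times, so at least a
third of what the block triple leaves of the window has a colour other than that of `u`. -/
theorem exists_fillPartition (hk : 3 ≤ k) (q₀ : V) (u : Copy k × V) :
    ∃ P : Finset (Finset (Copy k × V)),
      P.IsTriplePartition (windowVerts u.1 \ blockSet q₀ u.1) ∧
      ∀ T ∈ P, ∃ a ∈ T, colour c₀ a ≠ colour c₀ u := by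
  set X := windowVerts u.1 \ blockSet q₀ u.1
  set n := Fintype.card V
  set W := reach k
  have hn : 0 < n := Fintype.card_pos_iff.2 ⟨q₀⟩
  have hX : X.card = W * n - (blockSet q₀ u.1).card := by
    rw [card_sdiff_of_subset (blockSet_subset_windowVerts q₀ u.1), windowVerts, card_product,
      card_cyclicWindow, card_univ]
  have hblock := card_blockSet_le q₀ u.1
  have hblock3 : 3 ∣ (blockSet q₀ u.1).card :=
    (isTriplePartition_blockParts q₀ u.1).card_eq ▸ dvd_mul_right 3 _
  have hW3 : 3 ∣ W := dvd_mul_right 3 _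
  have hW : 18 ≤ W := by simp only [W, reach]; omega
  have hbad : (X.filter (colour c₀ · = colour c₀ u)).card ≤ n * (W / k) + 2 * n :=
    (card_le_card (filter_subset_filter _ sdiff_subset)).trans
      ((card_filter_windowVerts_colour_le c₀ u.1 (colour c₀ u)).trans_eq (by ring))
  have hsplit := card_filter_add_card_filter_not (s := X) (colour c₀ · = colour c₀ u)
  have hdiv : 3 * (W / k) ≤ W :=
    (Nat.mul_le_mul_left 3 (Nat.div_le_div_left hk (by norm_num))).trans (Nat.mul_div_le W 3)
  have h1 : 3 * (n * (W / k)) ≤ W * n := by nlinarith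
  have h2 : 18 * n ≤ W * n := Nat.mul_le_mul_right n hW
  refine exists_isTriplePartition_of_card_le (fun a => ¬ colour c₀ a = colour c₀ u) ?_ ?_
  · rw [hX]
    exact Nat.dvd_sub (Dvd.dvd.mul_right hW3 n) hblock3
  · omega

end Blowup

end

noncomputable section

namespace OrientedStarSystem

open Blowup

variable {V : Type*} [Fintype V] {k : ℕ}

theorem disjoint_map_sectR_windowVerts (X : Finset V) (i : Copy k) :
    Disjoint (X.map (.sectR i V)) (windowVerts i) := by
  refine disjoint_left.2 fun w hw hw' => ?_
  obtain ⟨q, -, rfl⟩ := mem_map.1 hw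
  exact self_notMem_cyclicWindow i (mem_product.1 hw').1

variable [DecidableEq V] (B : OrientedStarSystem V)

theorem mem_map_sectR_union_windowVerts {X : Finset V} {i : Copy k} {w : Copy k × V} :
    w ∈ X.map (.sectR i V) ∪ windowVerts i ↔
      (w.1 = i ∧ w.2 ∈ X) ∨ w.1 ∈ cyclicWindow (reach k) i := by
  obtain ⟨j, q⟩ := w
  simp [windowVerts, eq_comm, and_comm]

def blowup (hk : 3 ≤ k) (c₀ : V → Fin (k - 1)) (q₀ : V) :
    OrientedStarSystem (Copy k × V) where
  out u := (B.out u.2).map (.sectR u.1 V) ∪ windowVerts u.1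
  parts u := (B.parts u.2).image (map (.sectR u.1 V)) ∪
    (blockParts q₀ u.1 ∪ (exists_fillPartition c₀ hk q₀ u).choose)
  notMem_out u h := by
    rcases mem_map_sectR_union_windowVerts.1 h with ⟨-, h⟩ | h
    exacts [B.notMem_out u.2 h, self_notMem_cyclicWindow u.1 h]
  mem_out_iff u w huw := by
    rw [mem_map_sectR_union_windowVerts, mem_map_sectR_union_windowVerts]
    obtain ⟨i, p⟩ := u
    obtain ⟨j, q⟩ := w
    by_cases hij : i = j
    · subst hij
      have hpq : p ≠ q := fun h => huw (h ▸ rfl)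
      simp only [true_and, self_notMem_cyclicWindow, or_false]
      exact B.mem_out_iff hpq
    · simp only [Ne.symm hij, hij, false_and, false_or]
      exact mem_cyclicWindow_iff_notMem hij
  isTriplePartition u := by
    have hfill := (exists_fillPartition c₀ hk q₀ u).choose_spec.1
    have hblock := blockSet_subset_windowVerts q₀ u.1
    have h := ((B.isTriplePartition u.2).map (.sectR u.1 V)).union
      ((isTriplePartition_blockParts q₀ u.1).union hfill disjoint_sdiff)
      (by rw [union_sdiff_of_subset hblock]; exact disjoint_map_sectR_windowVerts (B.out u.2) u.1)
    rwa [union_sdiff_of_subset hblock] at h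

variable {B}

theorem isWeakColouring_blowup_colour (hk : 3 ≤ k) {c₀ : V → Fin (k - 1)} (q₀ : V)
    (hc₀ : B.IsWeakColouring c₀) : (B.blowup hk c₀ q₀).IsWeakColouring (colour c₀) := by
  rintro ⟨i, p⟩ U hU
  rcases mem_union.1 hU with hU | hU
  · obtain ⟨T, hT, rfl⟩ := mem_image.1 hU
    obtain ⟨a, ha, hca⟩ := hc₀ p T hT
    exact ⟨(i, a), mem_map_of_mem _ ha, colour_ne_of_ne c₀ i hca⟩
  rcases mem_union.1 hU with hU | hU
  · exact exists_colour_ne_of_mem_blockParts c₀ (by omega) hU _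
  · exact (exists_fillPartition c₀ hk q₀ (i, p)).choose_spec.2 U hU

theorem IsWeakColouring.of_blowup {hk : 3 ≤ k} {c₀ : V → Fin (k - 1)} {q₀ : V} {α : Type*}
    {φ : Copy k × V → α} (hφ : (B.blowup hk c₀ q₀).IsWeakColouring φ) (i : Copy k) :
    B.IsWeakColouring fun q => φ (i, q) := by
  intro p T hT
  obtain ⟨a, ha, hφa⟩ :=
    hφ (i, p) (T.map (.sectR i V)) (mem_union_left _ (mem_image_of_mem _ hT))
  obtain ⟨b, hb, rfl⟩ := mem_map.1 ha
  exact ⟨b, hb, hφa⟩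

theorem not_colourable_blowup (hk : 3 ≤ k) (c₀ : V → Fin (k - 1)) (q₀ : V)
    (hB : ¬ B.Colourable (k - 1 - 1)) : ¬ (B.blowup hk c₀ q₀).Colourable (k - 1) := by
  rintro ⟨φ, hφ⟩
  obtain ⟨γ, hγ⟩ := Fintype.exists_lt_card_fiber_of_mul_lt_card
    (fun j : Fin (2 * k - 1) => φ (blockEmb q₀ j)) (n := 2)
    (by simp only [Fintype.card_fin]; omega)
  obtain ⟨T, hTγ, hT3⟩ := exists_subset_card_eq hγ
  obtain ⟨p, hp⟩ := (hφ.of_blowup (server ⟨T, hT3⟩)).surjective hB γ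
  have hblock : T.map (blockEmb q₀) ∈ (B.blowup hk c₀ q₀).parts (server ⟨T, hT3⟩, p) :=
    mem_union_right _ (mem_union_left _ (mem_blockParts.2 ⟨⟨T, hT3⟩, rfl, rfl⟩))
  obtain ⟨a, ha, hφa⟩ := hφ _ _ hblock
  obtain ⟨j, hj, rfl⟩ := mem_map.1 ha
  exact hφa ((mem_filter.1 (hTγ hj)).2.trans hp.symm)

end OrientedStarSystem

end

/-- From a `(k-1)`-chromatic 3-star system one obtains a `k`-chromatic 3-star system. -/
theorem stmt7 (k : ℕ) (hk : 3 ≤ k)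
    (h : ∃ (n : ℕ) (sys : EStarSystem n 3), Chromatic sys (k - 1)) :
    ∃ (n : ℕ) (sys : EStarSystem n 3), Chromatic sys k := by
  obtain ⟨n, sys, hcol, hnot⟩ := h
  rw [sys.colourable_toOrientedStarSystem_iff] at hcol hnot
  obtain ⟨c₀, hc₀⟩ := hcol
  obtain ⟨q₀, -⟩ := hc₀.surjective hnot ⟨0, by omega⟩
  let S := sys.toOrientedStarSystem.blowup hk c₀ q₀
  refine ⟨_, S.toEStarSystem (Fintype.equivFin _), ?_, ?_⟩
  · rw [S.colourable_toEStarSystem_iff]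
    exact ⟨_, OrientedStarSystem.isWeakColouring_blowup_colour hk q₀ hc₀⟩
  · rw [S.colourable_toEStarSystem_iff]
    exact OrientedStarSystem.not_colourable_blowup hk c₀ q₀ hnot
end

section
/- Let k >= 2 and e >= 3. If there exists a k-chromatic e-star system of order n_0 with n_0 ≡ 0 or 1 (mod 2e), then for every n > n_0 with n ≡ 0 or 1 (mod 2e) there exists a k-chromatic e-star system of order n. -/
section helpers

lemma mem_edges_iff {n e : ℕ} (S : EStar n e) (p : Sym2 (Fin n)) :
    p ∈ S.edges ↔ ∃ a ∈ S.leaves, s(S.centre, a) = p := by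
  simp [EStar.edges]

lemma centre_mem_of_mem_edges {n e : ℕ} (S : EStar n e) (p : Sym2 (Fin n))
    (hp : p ∈ S.edges) : S.centre ∈ p := by
  obtain ⟨a, _, rfl⟩ := (mem_edges_iff S p).mp hp
  simp

def Owns (u i i' : ℕ) : Prop :=
  ∃ s, 1 ≤ s ∧ s ≤ u ∧ (i + s) % (2 * u + 1) = i'

lemma owns_total (u i i' : ℕ) (hi : i < 2 * u + 1) (hi' : i' < 2 * u + 1)
    (hne : i ≠ i') : Owns u i i' ∨ Owns u i' i := by
  set t := 2 * u + 1 with ht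
  rcases lt_or_gt_of_ne hne with h | h
  · rcases le_or_gt (i' - i) u with hd | hd
    · left
      refine ⟨i' - i, by omega, hd, ?_⟩
      have : i + (i' - i) = i' := by omega
      rw [this, Nat.mod_eq_of_lt hi']
    · right
      refine ⟨t - (i' - i), by omega, by omega, ?_⟩
      have : i' + (t - (i' - i)) = t + i := by omega
      rw [this, Nat.add_mod_left, Nat.mod_eq_of_lt hi]
  · rcases le_or_gt (i - i') u with hd | hd
    · right
      refine ⟨i - i', by omega, hd, ?_⟩
      have : i' + (i - i') = i := by omega
      rw [this, Nat.mod_eq_of_lt hi]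
    · left
      refine ⟨t - (i - i'), by omega, by omega, ?_⟩
      have : i + (t - (i - i')) = t + i' := by omega
      rw [this, Nat.add_mod_left, Nat.mod_eq_of_lt hi']

lemma owns_asymm (u i i' : ℕ) (hi : i < 2 * u + 1) :
    Owns u i i' → Owns u i' i → False := by
  rintro ⟨s, hs1, hs2, hs3⟩ ⟨s', hs'1, hs'2, hs'3⟩
  set t := 2 * u + 1 with ht
  have h1 : (i + s + s') % t = i := by
    rw [← Nat.mod_add_mod, hs3, hs'3]
  have h2 : (i + (s + s')) % t = (i + 0) % t := by
    rw [← add_assoc, h1, add_zero, Nat.mod_eq_of_lt hi]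
  have h3 : t ∣ s + s' := by
    have := (Nat.ModEq.add_left_cancel' i h2.symm)
    exact (Nat.modEq_zero_iff_dvd).mp this.symm
  have := Nat.le_of_dvd (by omega) h3
  omega

lemma owns_mod_ne (u i s : ℕ) (hi : i < 2 * u + 1) (hs1 : 1 ≤ s) (hs2 : s ≤ u) :
    (i + s) % (2 * u + 1) ≠ i := by
  intro hcon
  have h2 : (i + s) % (2*u+1) = (i + 0) % (2*u+1) := by
    simpa [Nat.mod_eq_of_lt hi] using hcon
  have h3 : (2*u+1) ∣ s := by
    have := (Nat.ModEq.add_left_cancel' i h2.symm)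
    exact (Nat.modEq_zero_iff_dvd).mp this.symm
  have := Nat.le_of_dvd (by omega) h3
  omega

lemma exists_small_class {m k : ℕ} (c : Fin m → Fin k) (v w : Fin m) (hvw : c v ≠ c w) :
    ∃ b : Fin k, 2 * (Finset.univ.filter (fun x => c x = b)).card ≤ m := by
  have hdisj : Disjoint (Finset.univ.filter (fun x => c x = c v))
      (Finset.univ.filter (fun x => c x = c w)) := by
    refine Finset.disjoint_left.mpr fun x hx hx' => ?_
    simp only [Finset.mem_filter] at hx hx'
    exact hvw (hx.2 ▸ hx'.2 ▸ rfl)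
  have hsum := Finset.card_union_of_disjoint hdisj
  have hle : (Finset.univ.filter (fun x => c x = c v) ∪
      Finset.univ.filter (fun x => c x = c w)).card ≤ m := by
    have := Finset.card_le_univ (Finset.univ.filter (fun x => c x = c v) ∪
      Finset.univ.filter (fun x => c x = c w))
    simpa using this
  rcases le_total ((Finset.univ.filter (fun x => c x = c v)).card)
      ((Finset.univ.filter (fun x => c x = c w)).card) with h | h
  · exact ⟨c v, by omega⟩
  · exact ⟨c w, by omega⟩

lemma exists_blocks {α : Type*} [DecidableEq α] (e : ℕ) (he : 1 ≤ e) :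
    ∀ (q : ℕ) (P A : Finset α), A ⊆ P → P.card = q * e → q ≤ A.card →
    ∃ B : Fin q → Finset α,
      (∀ i, (B i).card = e) ∧ (∀ i, ∃ a ∈ B i, a ∈ A) ∧
      (∀ i, B i ⊆ P) ∧ (∀ x ∈ P, ∃! i, x ∈ B i) := by
  intro q
  induction q with
  | zero =>
    intro P A _ hP _
    refine ⟨fun i => i.elim0, fun i => i.elim0, fun i => i.elim0, fun i => i.elim0, ?_⟩
    intro x hx
    simp at hP
    simp [hP] at hx
  | succ q ih =>
    intro P A hAP hP hqA
    have hA : A.Nonempty := Finset.card_pos.mp (by omega)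
    obtain ⟨a, ha⟩ := hA
    set W : Finset α := P \ A with hW
    -- choose T₁ ⊆ W of size min (e-1) |W|, T₂ ⊆ A \ {a} of size e - 1 - |T₁|
    obtain ⟨T₁, hT₁sub, hT₁card⟩ := Finset.exists_subset_card_eq (min_le_right (e-1) W.card)
    have hcardA : A.card ≤ P.card := Finset.card_le_card hAP
    have hcardsplit : W.card + A.card = P.card := by
      rw [Finset.card_sdiff_of_subset hAP]; omega
    have hPcard' : P.card = q * e + e := by rw [hP, Nat.succ_mul]
    have h2 : e - 1 - T₁.card ≤ (A \ {a}).card := by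
      rw [hT₁card, Finset.card_sdiff_of_subset (Finset.singleton_subset_iff.mpr ha),
        Finset.card_singleton]
      rcases le_or_gt (e-1) W.card with h | h
      · rw [min_eq_left h]; omega
      · rw [min_eq_right h.le]; omega
    obtain ⟨T₂, hT₂sub, hT₂card⟩ := Finset.exists_subset_card_eq h2
    set D : Finset α := insert a (T₁ ∪ T₂) with hD
    have haT₁ : a ∉ T₁ := fun hc => (Finset.mem_sdiff.mp (hT₁sub hc)).2 ha
    have haT₂ : a ∉ T₂ := fun hc => (Finset.mem_sdiff.mp (hT₂sub hc)).2 (by simp)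
    have hT₁T₂ : Disjoint T₁ T₂ := by
      refine Finset.disjoint_left.mpr fun x hx hx' => ?_
      exact (Finset.mem_sdiff.mp (hT₁sub hx)).2 (Finset.mem_sdiff.mp (hT₂sub hx')).1
    have hDcard : D.card = e := by
      rw [hD, Finset.card_insert_of_notMem (by simp [haT₁, haT₂]),
        Finset.card_union_of_disjoint hT₁T₂]
      have := min_le_left (e-1) W.card
      omega
    have hDP : D ⊆ P := by
      intro x hx
      rcases Finset.mem_insert.mp hx with rfl | hx
      · exact hAP ha
      rcases Finset.mem_union.mp hx with hx | hx
      · exact (Finset.mem_sdiff.mp (hT₁sub hx)).1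
      · exact hAP (Finset.mem_sdiff.mp (hT₂sub hx)).1
    have haD : a ∈ D := Finset.mem_insert_self _ _
    -- remaining
    have hP'card : (P \ D).card = q * e := by
      rw [Finset.card_sdiff_of_subset hDP, hDcard, hPcard']; omega
    have hA' : q ≤ (A \ D).card := by
      rcases le_or_gt (e-1) W.card with h | h
      · -- T₁ card = e-1, T₂ = ∅, so D ∩ A = {a}
        have hT₂empty : T₂ = ∅ := by
          have : T₂.card = 0 := by rw [hT₂card, hT₁card, min_eq_left h]; omega
          exact Finset.card_eq_zero.mp this
        have : A \ {a} ⊆ A \ D := by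
          intro x hx
          rcases Finset.mem_sdiff.mp hx with ⟨hxA, hxa⟩
          refine Finset.mem_sdiff.mpr ⟨hxA, fun hxD => ?_⟩
          rcases Finset.mem_insert.mp hxD with rfl | hxD
          · simp at hxa
          rcases Finset.mem_union.mp hxD with hx1 | hx1
          · exact (Finset.mem_sdiff.mp (hT₁sub hx1)).2 hxA
          · simp [hT₂empty] at hx1
        have := Finset.card_le_card this
        rw [Finset.card_sdiff_of_subset (by simpa using ha), Finset.card_singleton] at this
        omega
      · -- W ⊆ D, so P \ D ⊆ A \ D
        have hWD : W ⊆ D := by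
          have : T₁ = W := Finset.eq_of_subset_of_card_le hT₁sub
            (by rw [hT₁card, min_eq_right h.le])
          rw [← this]; intro x hx; exact Finset.mem_insert_of_mem (Finset.mem_union_left _ hx)
        have : P \ D ⊆ A \ D := by
          intro x hx
          rcases Finset.mem_sdiff.mp hx with ⟨hxP, hxD⟩
          refine Finset.mem_sdiff.mpr ⟨?_, hxD⟩
          by_contra hxA
          exact hxD (hWD (Finset.mem_sdiff.mpr ⟨hxP, hxA⟩))
        have h3 := Finset.card_le_card this
        have h4 : q ≤ q * e := Nat.le_mul_of_pos_right q (by omega)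
        omega
    have hA'P' : A \ D ⊆ P \ D := fun x hx => by
      rcases Finset.mem_sdiff.mp hx with ⟨h1, h2⟩
      exact Finset.mem_sdiff.mpr ⟨hAP h1, h2⟩
    obtain ⟨B', hB'card, hB'A, hB'P, hB'uniq⟩ := ih (P \ D) (A \ D) hA'P' hP'card hA'
    refine ⟨Fin.cases D B', ?_, ?_, ?_, ?_⟩
    · intro i; induction i using Fin.cases with
      | zero => simpa using hDcard
      | succ i => simpa using hB'card i
    · intro i; induction i using Fin.cases with
      | zero => exact ⟨a, by simpa using haD, ha⟩
      | succ i =>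
        obtain ⟨x, hx1, hx2⟩ := hB'A i
        exact ⟨x, by simpa using hx1, (Finset.mem_sdiff.mp hx2).1⟩
    · intro i; induction i using Fin.cases with
      | zero => simpa using hDP
      | succ i =>
        intro x hx
        exact (Finset.mem_sdiff.mp (hB'P i (by simpa using hx))).1
    · intro x hxP
      by_cases hxD : x ∈ D
      · refine ⟨0, by simpa using hxD, ?_⟩
        intro i hi
        induction i using Fin.cases with
        | zero => rfl
        | succ i =>
          exfalso
          have := hB'P i (by simpa using hi)
          exact (Finset.mem_sdiff.mp this).2 hxD
      · obtain ⟨i, hi1, hi2⟩ := hB'uniq x (Finset.mem_sdiff.mpr ⟨hxP, hxD⟩)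
        refine ⟨i.succ, by simpa using hi1, ?_⟩
        intro j hj
        induction j using Fin.cases with
        | zero => exact absurd (by simpa using hj) hxD
        | succ j => simp only [Fin.cases_succ] at hj; rw [hi2 j hj]

def mapStar {m n e : ℕ} (h : m ≤ n) (S : EStar m e) : EStar n e where
  centre := Fin.castLE h S.centre
  leaves := S.leaves.map (Fin.castLEEmb h)
  card_leaves := by rw [Finset.card_map, S.card_leaves]
  centre_not_leaf := by
    simp only [Finset.mem_map, Fin.castLEEmb_apply, Fin.castLE_inj, not_exists]
    rintro a ⟨ha, rfl⟩
    exact S.centre_not_leaf ha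

lemma mapStar_edges {m n e : ℕ} (h : m ≤ n) (S : EStar m e) (x y : Fin m) :
    s(Fin.castLE h x, Fin.castLE h y) ∈ (mapStar h S).edges ↔ s(x, y) ∈ S.edges := by
  simp only [mem_edges_iff, mapStar, Finset.mem_map, Fin.castLEEmb_apply]
  constructor
  · rintro ⟨a', ⟨a, ha, rfl⟩, heq⟩
    rw [Sym2.eq_iff] at heq
    refine ⟨a, ha, ?_⟩
    rw [Sym2.eq_iff]
    rcases heq with ⟨h1, h2⟩ | ⟨h1, h2⟩
    · exact Or.inl ⟨Fin.castLE_inj.mp h1, Fin.castLE_inj.mp h2⟩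
    · exact Or.inr ⟨Fin.castLE_inj.mp h1, Fin.castLE_inj.mp h2⟩
  · rintro ⟨a, ha, heq⟩
    refine ⟨Fin.castLE h a, ⟨a, ha, rfl⟩, ?_⟩
    rw [Sym2.eq_iff] at heq ⊢
    rcases heq with ⟨h1, h2⟩ | ⟨h1, h2⟩
    · exact Or.inl ⟨by rw [h1], by rw [h2]⟩
    · exact Or.inr ⟨by rw [h1], by rw [h2]⟩

lemma mapStar_val_lt {m n e : ℕ} (h : m ≤ n) (S : EStar m e) (p : Sym2 (Fin n))
    (hp : p ∈ (mapStar h S).edges) : ∀ z ∈ p, z.val < m := by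
  obtain ⟨a', ha', rfl⟩ := (mem_edges_iff _ _).mp hp
  obtain ⟨a, _, rfl⟩ := Finset.mem_map.mp ha'
  intro z hz
  rcases Sym2.mem_iff.mp hz with rfl | rfl
  · simpa [mapStar] using S.centre.isLt
  · simpa using a.isLt

def newV (m u : ℕ) (i : Fin (2 * u + 1)) : Fin (m + (2 * u + 1)) :=
  ⟨m + i.val, by omega⟩

def Pool (m u : ℕ) (i : Fin (2 * u + 1)) : Finset (Fin (m + (2 * u + 1))) :=
  (Finset.univ.map (Fin.castLEEmb (by omega : m ≤ m + (2 * u + 1)))) ∪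
  (Finset.Icc 1 u).image (fun s =>
    ⟨m + ((i.val + s) % (2 * u + 1)), by
      have := Nat.mod_lt (i.val + s) (show 0 < 2 * u + 1 by omega); omega⟩)

lemma mem_Pool {m u : ℕ} (i : Fin (2 * u + 1)) (v : Fin (m + (2 * u + 1))) :
    v ∈ Pool m u i ↔ v.val < m ∨
      ∃ s, 1 ≤ s ∧ s ≤ u ∧ v.val = m + ((i.val + s) % (2 * u + 1)) := by
  simp only [Pool, Finset.mem_union, Finset.mem_map, Finset.mem_image,
    Fin.castLEEmb_apply, Finset.mem_Icc, Finset.mem_univ, true_and]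
  constructor
  · rintro (⟨w, hw⟩ | ⟨s, ⟨hs1, hs2⟩, hs3⟩)
    · left; rw [← hw]; exact w.isLt
    · right; exact ⟨s, hs1, hs2, by rw [← hs3]⟩
  · rintro (hv | ⟨s, hs1, hs2, hs3⟩)
    · exact Or.inl ⟨⟨v.val, hv⟩, by apply Fin.ext; rfl⟩
    · exact Or.inr ⟨s, ⟨hs1, hs2⟩, by apply Fin.ext; rw [hs3]⟩

lemma Pool_card {m u : ℕ} (i : Fin (2 * u + 1)) : (Pool m u i).card = m + u := by
  rw [Pool, Finset.card_union_of_disjoint, Finset.card_map, Finset.card_univ,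
    Fintype.card_fin, Finset.card_image_of_injOn, Nat.card_Icc]
  · omega
  · intro s hs s' hs' heq
    simp only [Finset.coe_Icc, Set.mem_Icc] at hs hs'
    have hval : (i.val + s) % (2 * u + 1) = (i.val + s') % (2 * u + 1) := by
      have h0 := congrArg Fin.val heq
      simp only at h0
      omega
    have h1 : s % (2 * u + 1) = s' % (2 * u + 1) :=
      Nat.ModEq.add_left_cancel' i.val hval
    rwa [Nat.mod_eq_of_lt (by omega), Nat.mod_eq_of_lt (by omega)] at h1
  · refine Finset.disjoint_left.mpr fun x hx hx' => ?_
    obtain ⟨w, _, hw⟩ := Finset.mem_map.mp hx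
    obtain ⟨s, _, hs⟩ := Finset.mem_image.mp hx'
    have h1 : x.val < m := by rw [← hw]; exact w.isLt
    have h2 : m ≤ x.val := by rw [← hs]; simp
    omega

lemma newV_not_mem_Pool {m u : ℕ} (i : Fin (2 * u + 1)) :
    newV m u i ∉ Pool m u i := by
  rw [mem_Pool]
  rintro (h | ⟨s, hs1, hs2, hs3⟩)
  · simp [newV] at h
  · simp only [newV] at hs3
    exact owns_mod_ne u i.val s i.isLt hs1 hs2 (by omega)

lemma newV_mem_Pool_iff {m u : ℕ} (i i' : Fin (2 * u + 1)) :
    newV m u i' ∈ Pool m u i ↔ Owns u i.val i'.val := by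
  rw [mem_Pool]
  constructor
  · rintro (h | ⟨s, hs1, hs2, hs3⟩)
    · simp [newV] at h
    · exact ⟨s, hs1, hs2, by simp only [newV] at hs3; omega⟩
  · rintro ⟨s, hs1, hs2, hs3⟩
    exact Or.inr ⟨s, hs1, hs2, by simp only [newV]; omega⟩

end helpers

lemma extendSystem (e k m u : ℕ) (he : 3 ≤ e) (hk : 2 ≤ k) (hm : 2 ≤ m)
    (hdvd : (m + u) % e = 0) (hq2 : 2 * ((m + u) / e) ≤ m)
    (sys : EStarSystem m e) (hsys : Chromatic sys k) :
    ∃ sys' : EStarSystem (m + (2 * u + 1)) e, Chromatic sys' k := by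
  have hmn : m ≤ m + (2 * u + 1) := by omega
  set t : ℕ := 2 * u + 1 with ht
  set n : ℕ := m + t with hn
  set q : ℕ := (m + u) / e with hq
  have hqe : q * e = m + u := Nat.div_mul_cancel (Nat.dvd_of_mod_eq_zero hdvd)
  obtain ⟨⟨c₀, hc₀⟩, hnc⟩ := hsys
  -- c₀ is non-constant
  obtain ⟨S₀', ⟨hS₀'m, _⟩, _⟩ := sys.partition s(⟨0, by omega⟩, ⟨1, by omega⟩)
    (by simp [Sym2.mk_isDiag_iff, Fin.ext_iff])
  obtain ⟨v, hv, hvne⟩ := hc₀ S₀' hS₀'m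
  obtain ⟨b, hb⟩ := exists_small_class c₀ v S₀'.centre hvne
  -- the set of old vertices not coloured b
  set A : Finset (Fin n) :=
    (Finset.univ.filter (fun w : Fin m => c₀ w ≠ b)).map (Fin.castLEEmb hmn) with hA
  have hAmem : ∀ x : Fin n, x ∈ A ↔ ∃ w : Fin m, c₀ w ≠ b ∧ Fin.castLE hmn w = x := by
    intro x
    simp only [hA, Finset.mem_map, Finset.mem_filter, Finset.mem_univ, true_and,
      Fin.castLEEmb_apply]
  have hqA : q ≤ A.card := by
    have h1 : A.card = (Finset.univ.filter (fun w : Fin m => c₀ w ≠ b)).card :=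
      Finset.card_map _
    have h2 := Finset.card_filter_add_card_filter_not
      (s := (Finset.univ : Finset (Fin m))) (fun w => c₀ w = b)
    simp only [Finset.card_univ, Fintype.card_fin] at h2
    simp only [ne_eq] at h1
    have h3 : 2 * q ≤ m := hq2
    omega
  have hA_sub : ∀ i : Fin t, A ⊆ Pool m u i := by
    intro i x hx
    obtain ⟨w, _, rfl⟩ := (hAmem x).mp hx
    rw [mem_Pool]
    exact Or.inl w.isLt
  have hPoolcard : ∀ i : Fin t, (Pool m u i).card = q * e := by
    intro i; rw [Pool_card, hqe]
  choose B hB1 hB2 hB3 hB4 using fun i : Fin t =>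
    exists_blocks e (by omega) q (Pool m u i) A (hA_sub i) (hPoolcard i) hqA
  have hBnotleaf : ∀ (i : Fin t) (j : Fin q), newV m u i ∉ B i j := by
    intro i j hmem
    exact newV_not_mem_Pool i (hB3 i j hmem)
  set F : Fin t × Fin q → EStar n e :=
    fun p => ⟨newV m u p.1, B p.1 p.2, hB1 p.1 p.2, hBnotleaf p.1 p.2⟩ with hF
  set stars' : Finset (EStar n e) :=
    sys.stars.image (mapStar hmn) ∪ Finset.univ.image F with hstars'
  have hmem_stars' : ∀ S : EStar n e, S ∈ stars' ↔
      (∃ S₁ ∈ sys.stars, mapStar hmn S₁ = S) ∨ ∃ pr : Fin t × Fin q, F pr = S := by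
    intro S
    simp only [hstars', Finset.mem_union, Finset.mem_image, Finset.mem_univ, true_and]
  -- the colouring of the new system
  set c : Fin n → Fin k := fun x => if h : x.val < m then c₀ ⟨x.val, h⟩ else b with hc
  have hc_cast : ∀ w : Fin m, c (Fin.castLE hmn w) = c₀ w := by
    intro w
    simp only [hc]
    rw [dif_pos (by exact w.isLt)]
    exact congrArg c₀ (Fin.ext rfl)
  have hc_new : ∀ i : Fin t, c (newV m u i) = b := by
    intro i
    simp only [hc, newV]
    rw [dif_neg (by omega)]
  -- the partition property: mixed old-new edges
  have mixed : ∀ x y : Fin n, x.val < m → m ≤ y.val →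
      ∃! S, S ∈ stars' ∧ s(x, y) ∈ S.edges := by
    intro x y hx hy
    set i : Fin t := ⟨y.val - m, by have := y.isLt; omega⟩ with hi
    have hyv : newV m u i = y := by apply Fin.ext; simp [newV, hi]; omega
    have hxP : x ∈ Pool m u i := (mem_Pool i x).mpr (Or.inl hx)
    obtain ⟨j, hj, hju⟩ := hB4 i x hxP
    refine ⟨F (i, j), ⟨(hmem_stars' _).mpr (Or.inr ⟨(i, j), rfl⟩), ?_⟩, ?_⟩
    · rw [mem_edges_iff]
      exact ⟨x, hj, by rw [show (F (i, j)).centre = newV m u i from rfl, hyv, Sym2.eq_swap]⟩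
    · rintro S ⟨hSmem, hSedge⟩
      rcases (hmem_stars' S).mp hSmem with ⟨S₁, _, rfl⟩ | ⟨⟨i'', j''⟩, rfl⟩
      · exact absurd (mapStar_val_lt hmn S₁ _ hSedge y (by simp)) (by omega)
      · obtain ⟨a, haB, haeq⟩ := (mem_edges_iff _ _).mp hSedge
        rw [show (F (i'', j'')).centre = newV m u i'' from rfl] at haeq
        rw [show (F (i'', j'')).leaves = B i'' j'' from rfl] at haB
        rcases Sym2.eq_iff.mp haeq with ⟨h1, h2⟩ | ⟨h1, h2⟩
        · exfalso
          have := congrArg Fin.val h1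
          simp only [newV] at this
          omega
        · have hval := congrArg Fin.val h1
          simp only [newV] at hval
          have hii : i'' = i := by
            apply Fin.ext
            rw [hi]
            show i''.val = y.val - m
            omega
          subst hii
          subst h2
          have := hju j'' haB
          subst this
          rfl
  -- the partition property: new-new edges where the first owns the second
  have newnew : ∀ x y : Fin n, m ≤ x.val → m ≤ y.val →
      Owns u (x.val - m) (y.val - m) →
      ∃! S, S ∈ stars' ∧ s(x, y) ∈ S.edges := by
    intro x y hx hy hOwn
    set i : Fin t := ⟨x.val - m, by have := x.isLt; omega⟩ with hi
    set i' : Fin t := ⟨y.val - m, by have := y.isLt; omega⟩ with hi'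
    have hxv : newV m u i = x := by apply Fin.ext; simp [newV, hi]; omega
    have hyv : newV m u i' = y := by apply Fin.ext; simp [newV, hi']; omega
    have hyP : y ∈ Pool m u i := by
      rw [← hyv, newV_mem_Pool_iff]
      exact hOwn
    obtain ⟨j, hj, hju⟩ := hB4 i y hyP
    refine ⟨F (i, j), ⟨(hmem_stars' _).mpr (Or.inr ⟨(i, j), rfl⟩), ?_⟩, ?_⟩
    · rw [mem_edges_iff]
      exact ⟨y, hj, by rw [show (F (i, j)).centre = newV m u i from rfl, hxv]⟩
    · rintro S ⟨hSmem, hSedge⟩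
      rcases (hmem_stars' S).mp hSmem with ⟨S₁, _, rfl⟩ | ⟨⟨i'', j''⟩, rfl⟩
      · exact absurd (mapStar_val_lt hmn S₁ _ hSedge x (by simp)) (by omega)
      · obtain ⟨a, haB, haeq⟩ := (mem_edges_iff _ _).mp hSedge
        rw [show (F (i'', j'')).centre = newV m u i'' from rfl] at haeq
        rw [show (F (i'', j'')).leaves = B i'' j'' from rfl] at haB
        rcases Sym2.eq_iff.mp haeq with ⟨h1, h2⟩ | ⟨h1, h2⟩
        · have hval := congrArg Fin.val h1
          simp only [newV] at hval
          have hii : i'' = i := by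
            apply Fin.ext
            rw [hi]
            show i''.val = x.val - m
            omega
          subst hii
          subst h2
          have := hju j'' haB
          subst this
          rfl
        · exfalso
          have hval := congrArg Fin.val h1
          simp only [newV] at hval
          have hii : i'' = i' := by
            apply Fin.ext
            rw [hi']
            show i''.val = y.val - m
            omega
          have hxB : x ∈ B i' j'' := by rw [← h2, ← hii]; exact haB
          have hxP : x ∈ Pool m u i' := hB3 i' j'' hxB
          rw [← hxv, newV_mem_Pool_iff] at hxP
          exact owns_asymm u i.val i'.val i.isLt hOwn hxP
  refine ⟨⟨stars', ?_⟩, ⟨c, ?_⟩, ?_⟩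
  · -- partition
    intro p hp
    induction p using Sym2.inductionOn with
    | hf x y =>
      have hxy : x ≠ y := by simpa [Sym2.mk_isDiag_iff] using hp
      rcases lt_or_ge x.val m with hx | hx
      · rcases lt_or_ge y.val m with hy | hy
        · -- both old
          set x₀ : Fin m := ⟨x.val, hx⟩ with hx₀
          set y₀ : Fin m := ⟨y.val, hy⟩ with hy₀
          have hxc : Fin.castLE hmn x₀ = x := by apply Fin.ext; rfl
          have hyc : Fin.castLE hmn y₀ = y := by apply Fin.ext; rfl
          have hne₀ : ¬ (s(x₀, y₀)).IsDiag := by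
            rw [Sym2.mk_isDiag_iff]
            intro hcon
            exact hxy (by rw [← hxc, ← hyc, hcon])
          obtain ⟨T₀, ⟨hT₀m, hT₀e⟩, hT₀u⟩ := sys.partition s(x₀, y₀) hne₀
          refine ⟨mapStar hmn T₀, ⟨(hmem_stars' _).mpr (Or.inl ⟨T₀, hT₀m, rfl⟩), ?_⟩, ?_⟩
          · rw [← hxc, ← hyc]
            exact (mapStar_edges hmn T₀ x₀ y₀).mpr hT₀e
          · rintro S ⟨hSmem, hSedge⟩
            rcases (hmem_stars' S).mp hSmem with ⟨S₁, hS₁m, rfl⟩ | ⟨⟨i'', j''⟩, rfl⟩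
            · rw [← hxc, ← hyc] at hSedge
              have := (mapStar_edges hmn S₁ x₀ y₀).mp hSedge
              rw [hT₀u S₁ ⟨hS₁m, this⟩]
            · exfalso
              have := centre_mem_of_mem_edges _ _ hSedge
              rw [show (F (i'', j'')).centre = newV m u i'' from rfl] at this
              rcases Sym2.mem_iff.mp this with hcon | hcon <;>
              · have := congrArg Fin.val hcon
                simp only [newV] at this
                omega
        · exact mixed x y hx hy
      · rcases lt_or_ge y.val m with hy | hy
        · rw [Sym2.eq_swap]
          exact mixed y x hy hx
        · -- both new
          have hne' : x.val - m ≠ y.val - m := by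
            intro hcon
            exact hxy (Fin.ext (by omega))
          rcases owns_total u (x.val - m) (y.val - m)
              (by have := x.isLt; omega) (by have := y.isLt; omega) hne' with hO | hO
          · exact newnew x y hx hy hO
          · rw [Sym2.eq_swap]
            exact newnew y x hy hx hO
  · -- weak k-colouring
    intro S hS
    rcases (hmem_stars' S).mp hS with ⟨S₁, hS₁m, rfl⟩ | ⟨⟨i, j⟩, rfl⟩
    · obtain ⟨a, ha, hane⟩ := hc₀ S₁ hS₁m
      refine ⟨Fin.castLE hmn a, ?_, ?_⟩
      · exact Finset.mem_map.mpr ⟨a, ha, rfl⟩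
      · rw [show (mapStar hmn S₁).centre = Fin.castLE hmn S₁.centre from rfl,
          hc_cast, hc_cast]
        exact hane
    · obtain ⟨a, haB, haA⟩ := hB2 i j
      obtain ⟨w, hw, rfl⟩ := (hAmem a).mp haA
      refine ⟨Fin.castLE hmn w, haB, ?_⟩
      rw [show (F (i, j)).centre = newV m u i from rfl, hc_cast, hc_new]
      exact hw
  · -- not (k-1)-colourable
    rintro ⟨c', hc'⟩
    apply hnc
    refine ⟨fun w => c' (Fin.castLE hmn w), ?_⟩
    intro S hS
    obtain ⟨a', ha', hne'⟩ := hc' (mapStar hmn S)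
      ((hmem_stars' _).mpr (Or.inl ⟨S, hS, rfl⟩))
    obtain ⟨a, ha, rfl⟩ := Finset.mem_map.mp ha'
    exact ⟨a, ha, hne'⟩


/-- A non-trivially chromatic system has order at least 2. -/
lemma order_ge_two {n e k : ℕ} (he : 3 ≤ e) (hk : 2 ≤ k)
    (sys : EStarSystem n e) (hsys : Chromatic sys k) : 2 ≤ n := by
  by_contra hcon
  push_neg at hcon
  apply hsys.2
  refine ⟨fun _ => ⟨0, by omega⟩, ?_⟩
  intro S hS
  exfalso
  have h1 : S.leaves.card ≤ n := le_trans (Finset.card_le_univ _) (by simp)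
  rw [S.card_leaves] at h1
  omega

lemma adm_gap (M a b : ℕ) (hM : 0 < M) (ha : a % M = 0 ∨ a % M = 1)
    (hb : b % M = 0) (hab : a < b) : a + M - 1 ≤ b := by
  have hda := Nat.div_add_mod a M
  have hdb := Nat.div_add_mod b M
  have hlt : a / M < b / M := by
    by_contra hcon
    push_neg at hcon
    have := Nat.mul_le_mul_left M hcon
    omega
  have h2 := Nat.mul_le_mul_left M (show a / M + 1 ≤ b / M from hlt)
  have h3 : M * (a / M + 1) = M * (a / M) + M := by ring
  omega

/-- If a `k`-chromatic `e`-star system of order `n₀ ≡ 0,1 (mod 2e)` exists, then one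
exists of every order `n > n₀` with `n ≡ 0,1 (mod 2e)`. -/
theorem stmt11 (k e n₀ : ℕ) (hk : 2 ≤ k) (he : 3 ≤ e)
    (hadm₀ : n₀ % (2 * e) = 0 ∨ n₀ % (2 * e) = 1)
    (h : ∃ sys : EStarSystem n₀ e, Chromatic sys k)
    (n : ℕ) (hn : n₀ < n) (hadm : n % (2 * e) = 0 ∨ n % (2 * e) = 1) :
    ∃ sys : EStarSystem n e, Chromatic sys k := by
  obtain ⟨sys₀, hsys₀⟩ := h
  have hn₀2 : 2 ≤ n₀ := order_ge_two he hk sys₀ hsys₀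
  have hn₀ge : 2 * e ≤ n₀ := by
    rcases hadm₀ with h0 | h1
    · exact Nat.le_of_dvd (by omega) (Nat.dvd_of_mod_eq_zero h0)
    · have hd := Nat.div_add_mod n₀ (2 * e)
      have hpos : 1 ≤ n₀ / (2 * e) := by
        by_contra hcon
        push_neg at hcon
        interval_cases h : n₀ / (2 * e) <;> omega
      have := Nat.le_mul_of_pos_right (2 * e) (show 0 < n₀ / (2 * e) by omega)
      omega
  suffices H : ∀ N, n₀ < N → (N % (2 * e) = 0 ∨ N % (2 * e) = 1) →
      ∃ sys : EStarSystem N e, Chromatic sys k by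
    exact H n hn hadm
  intro N
  induction N using Nat.strong_induction_on with
  | _ N ih =>
    intro hN hadmN
    rcases hadmN with h0 | h1
    · -- N ≡ 0 (mod 2e) : go back 2e - 1 steps, use u = e - 1
      have hge : n₀ + 2 * e - 1 ≤ N := adm_gap (2 * e) n₀ N (by omega) hadm₀ h0 hN
      set M : ℕ := N - (2 * e - 1) with hM
      have hD := Nat.div_add_mod N (2 * e)
      set D : ℕ := N / (2 * e) with hDdef
      have hD2 : 2 ≤ D := by
        by_contra hcon
        push_neg at hcon
        have := Nat.mul_le_mul_left (2 * e) (show D ≤ 1 by omega)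
        omega
      have hDD : 2 * e * (D - 1) = 2 * e * D - 2 * e := by
        have h3 : 2 * e * ((D - 1) + 1) = 2 * e * (D - 1) + 2 * e := by ring
        have h4 : (D - 1) + 1 = D := by omega
        rw [h4] at h3
        omega
      have hMeq : M = 2 * e * (D - 1) + 1 := by omega
      have hMadm : M % (2 * e) = 1 := by
        rw [hMeq, Nat.mul_add_mod, Nat.mod_eq_of_lt (by omega)]
      -- divisibility facts for the extension
      have hclin : 2 * e * (D - 1) = e * (2 * (D - 1)) := by ring
      have hMe : M + (e - 1) = e * (2 * (D - 1) + 1) := by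
        have : e * (2 * (D - 1) + 1) = e * (2 * (D - 1)) + e := by ring
        omega
      have hdvd : (M + (e - 1)) % e = 0 := by
        rw [hMe]
        exact Nat.mul_mod_right e _
      have hqval : (M + (e - 1)) / e = 2 * (D - 1) + 1 := by
        rw [hMe]
        exact Nat.mul_div_cancel_left _ (by omega)
      have hq2 : 2 * ((M + (e - 1)) / e) ≤ M := by
        rw [hqval, hMeq]
        have h5 : 6 * (D - 1) ≤ 2 * e * (D - 1) :=
          Nat.mul_le_mul_right (D - 1) (by omega)
        omega
      have hMn₀ : n₀ ≤ M := by omega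
      have hsysM : ∃ sysM : EStarSystem M e, Chromatic sysM k := by
        rcases eq_or_lt_of_le hMn₀ with heq | hlt
        · rw [← heq]
          exact ⟨sys₀, hsys₀⟩
        · exact ih M (by omega) hlt (Or.inr hMadm)
      obtain ⟨sysM, hsysM⟩ := hsysM
      obtain ⟨sys', hsys'⟩ := extendSystem e k M (e - 1) he hk (by omega) hdvd hq2 sysM hsysM
      have hfin : M + (2 * (e - 1) + 1) = N := by omega
      rw [← hfin]
      exact ⟨sys', hsys'⟩
    · -- N ≡ 1 (mod 2e) : go back one step, use u = 0
      set M : ℕ := N - 1 with hM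
      have hD := Nat.div_add_mod N (2 * e)
      set D : ℕ := N / (2 * e) with hDdef
      have hMeq : M = 2 * e * D := by omega
      have hMadm : M % (2 * e) = 0 := by
        rw [hMeq]
        exact Nat.mul_mod_right _ _
      have hclin : 2 * e * D = e * (2 * D) := by ring
      have hdvd : (M + 0) % e = 0 := by
        have : M + 0 = e * (2 * D) := by omega
        rw [this]
        exact Nat.mul_mod_right e _
      have hqval : (M + 0) / e = 2 * D := by
        have : M + 0 = e * (2 * D) := by omega
        rw [this]
        exact Nat.mul_div_cancel_left _ (by omega)
      have hq2 : 2 * ((M + 0) / e) ≤ M := by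
        rw [hqval, hMeq]
        have h5 : 4 * D ≤ 2 * e * D := Nat.mul_le_mul_right D (by omega)
        omega
      have hMn₀ : n₀ ≤ M := by omega
      have hsysM : ∃ sysM : EStarSystem M e, Chromatic sysM k := by
        rcases eq_or_lt_of_le hMn₀ with heq | hlt
        · rw [← heq]
          exact ⟨sys₀, hsys₀⟩
        · exact ih M (by omega) hlt (Or.inl hMadm)
      obtain ⟨sysM, hsysM⟩ := hsysM
      obtain ⟨sys', hsys'⟩ := extendSystem e k M 0 he hk (by omega) hdvd hq2 sysM hsysM
      have hfin : M + (2 * 0 + 1) = N := by omega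
      rw [← hfin]
      exact ⟨sys', hsys'⟩
end

section
/- Let k >= 3 and e >= 3. If there exists a (k-1)-chromatic e-star system of order n_{k-1} with n_{k-1} ≡ 0 (mod 2e), then there exists a k-chromatic e-star system of order n_k with n_k ≡ 0 (mod 2e). -/
namespace S12

section Generic

variable {V : Type} [DecidableEq V] {e : ℕ}

/-- Presentation of an e-star system as a family of blocks at each vertex. -/
structure BSys (V : Type) [DecidableEq V] (e : ℕ) : Type where
  B : V → Finset (Finset V)
  hcard : ∀ {v b}, b ∈ B v → b.card = e
  hnot : ∀ {v b}, b ∈ B v → v ∉ b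
  hdisj : ∀ {v b₁ b₂}, b₁ ∈ B v → b₂ ∈ B v → ∀ {x}, x ∈ b₁ → x ∈ b₂ → b₁ = b₂
  hxor₁ : ∀ {x y : V}, x ≠ y → (∃ b ∈ B x, y ∈ b) ∨ (∃ b ∈ B y, x ∈ b)
  hxor₂ : ∀ {x y : V}, (∃ b ∈ B x, y ∈ b) → (∃ b ∈ B y, x ∈ b) → False

lemma EStar.ext' {n : ℕ} {S T : EStar n e} (h1 : S.centre = T.centre)
    (h2 : S.leaves = T.leaves) : S = T := by
  cases S; cases T; simp_all

def BSys.toSystem {n : ℕ} (bs : BSys (Fin n) e) : EStarSystem n e where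
  stars := Finset.univ.biUnion fun v => (bs.B v).attach.image fun b =>
    ⟨v, b.1, bs.hcard b.2, bs.hnot b.2⟩
  partition := by
    intro p hp
    induction p with
    | _ x y =>
      have hxy : x ≠ y := by simpa using hp
      have mem_stars : ∀ S : EStar n e,
          (S ∈ Finset.univ.biUnion fun v => (bs.B v).attach.image fun b =>
            (⟨v, b.1, bs.hcard b.2, bs.hnot b.2⟩ : EStar n e)) ↔ S.leaves ∈ bs.B S.centre := by
        intro S
        simp only [Finset.mem_biUnion, Finset.mem_univ, true_and, Finset.mem_image,
          Finset.mem_attach]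
        constructor
        · rintro ⟨v, ⟨b, hb⟩, rfl⟩; exact hb
        · intro h; exact ⟨S.centre, ⟨S.leaves, h⟩, EStar.ext' rfl rfl⟩
      have key : ∀ (a c : Fin n) (b : Finset (Fin n)), b ∈ bs.B a → c ∈ b →
          ∃! S : EStar n e, (S ∈ Finset.univ.biUnion fun v => (bs.B v).attach.image fun bb =>
            (⟨v, bb.1, bs.hcard bb.2, bs.hnot bb.2⟩ : EStar n e)) ∧ s(a, c) ∈ EStar.edges S := by
        intro a c b hb hc
        refine ⟨⟨a, b, bs.hcard hb, bs.hnot hb⟩, ⟨(mem_stars _).2 hb, ?_⟩, ?_⟩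
        · simp only [EStar.edges, Finset.mem_image]
          exact ⟨c, hc, rfl⟩
        · rintro S ⟨hS, hedge⟩
          simp only [EStar.edges, Finset.mem_image] at hedge
          obtain ⟨l, hl, hledge⟩ := hedge
          rw [Sym2.eq_iff] at hledge
          have hSB := (mem_stars S).1 hS
          rcases hledge with ⟨h1, h2⟩ | ⟨h1, h2⟩
          · -- centre = a, leaf = c
            subst h1; subst h2
            exact EStar.ext' rfl (bs.hdisj hSB hb hl hc)
          · -- centre = c, leaf = a : contradicts xor₂
            exfalso
            exact bs.hxor₂ ⟨b, hb, hc⟩ ⟨S.leaves, h1 ▸ hSB, h2 ▸ hl⟩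
      rcases bs.hxor₁ hxy with ⟨b, hb, hy⟩ | ⟨b, hb, hx⟩
      · exact key x y b hb hy
      · have := key y x b hb hx
        simpa [Sym2.eq_swap] using this

lemma BSys.weak_iff {n : ℕ} (bs : BSys (Fin n) e) {K : ℕ} (c : Fin n → Fin K) :
    IsWeakColouring bs.toSystem c ↔ ∀ v b, b ∈ bs.B v → ∃ a ∈ b, c a ≠ c v := by
  constructor
  · intro h v b hb
    exact h ⟨v, b, bs.hcard hb, bs.hnot hb⟩ (by
      simp only [BSys.toSystem, Finset.mem_biUnion, Finset.mem_univ, true_and,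
        Finset.mem_image, Finset.mem_attach]
      exact ⟨v, ⟨b, hb⟩, rfl⟩)
  · intro h S hS
    have : S.leaves ∈ bs.B S.centre := by
      simp only [BSys.toSystem, Finset.mem_biUnion, Finset.mem_univ, true_and,
        Finset.mem_image, Finset.mem_attach] at hS
      obtain ⟨v, ⟨b, hb⟩, rfl⟩ := hS
      exact hb
    exact h _ _ this

end Generic

section Generic2
variable {V : Type} [DecidableEq V] {e : ℕ}

/-- Transport a block system along an equivalence. -/
def BSys.map {W : Type} [DecidableEq W] (σ : V ≃ W) (bs : BSys V e) : BSys W e where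
  B w := (bs.B (σ.symm w)).image (Finset.image σ)
  hcard := by
    intro v b hb
    simp only [Finset.mem_image] at hb
    obtain ⟨b0, hb0, rfl⟩ := hb
    rw [Finset.card_image_of_injective _ σ.injective]
    exact bs.hcard hb0
  hnot := by
    intro v b hb
    simp only [Finset.mem_image] at hb
    obtain ⟨b0, hb0, rfl⟩ := hb
    intro hv
    simp only [Finset.mem_image] at hv
    obtain ⟨x, hx, hxv⟩ := hv
    have : x = σ.symm v := by rw [← hxv]; simp
    exact bs.hnot hb0 (this ▸ hx)
  hdisj := by
    intro v b₁ b₂ h1 h2 x hx1 hx2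
    simp only [Finset.mem_image] at h1 h2
    obtain ⟨c1, hc1, rfl⟩ := h1
    obtain ⟨c2, hc2, rfl⟩ := h2
    simp only [Finset.mem_image] at hx1 hx2
    obtain ⟨y1, hy1, hxy1⟩ := hx1
    obtain ⟨y2, hy2, hxy2⟩ := hx2
    have : y1 = y2 := σ.injective (by rw [hxy1, hxy2])
    subst this
    rw [bs.hdisj hc1 hc2 hy1 hy2]
  hxor₁ := by
    intro x y hxy
    have : σ.symm x ≠ σ.symm y := fun h => hxy (by
      have := congrArg σ h; simpa using this)
    rcases bs.hxor₁ this with ⟨b, hb, hy⟩ | ⟨b, hb, hx⟩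
    · left
      exact ⟨b.image σ, Finset.mem_image_of_mem _ hb, by
        simp only [Finset.mem_image]; exact ⟨σ.symm y, hy, by simp⟩⟩
    · right
      exact ⟨b.image σ, Finset.mem_image_of_mem _ hb, by
        simp only [Finset.mem_image]; exact ⟨σ.symm x, hx, by simp⟩⟩
  hxor₂ := by
    rintro x y ⟨b, hb, hy⟩ ⟨b', hb', hx⟩
    simp only [Finset.mem_image] at hb hb'
    obtain ⟨c, hc, rfl⟩ := hb
    obtain ⟨c', hc', rfl⟩ := hb'
    simp only [Finset.mem_image] at hy hx
    obtain ⟨z, hz, hzy⟩ := hy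
    obtain ⟨z', hz', hzx⟩ := hx
    have hz1 : z = σ.symm y := by rw [← hzy]; simp
    have hz2 : z' = σ.symm x := by rw [← hzx]; simp
    exact bs.hxor₂ ⟨c, hc, hz1 ▸ hz⟩ ⟨c', hc', hz2 ▸ hz'⟩

lemma BSys.map_weak_iff {n : ℕ} (σ : V ≃ Fin n)
    (bs : BSys V e) {K : ℕ} (c : Fin n → Fin K) :
    IsWeakColouring (bs.map σ).toSystem c ↔ ∀ v b, b ∈ bs.B v → ∃ a ∈ b, c (σ a) ≠ c (σ v) := by
  rw [BSys.weak_iff]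
  constructor
  · intro h v b hb
    have := h (σ v) (b.image σ) (by
      simp only [BSys.map, Finset.mem_image]
      exact ⟨b, by simpa using hb, rfl⟩)
    obtain ⟨a, ha, hne⟩ := this
    simp only [Finset.mem_image] at ha
    obtain ⟨a0, ha0, rfl⟩ := ha
    exact ⟨a0, ha0, hne⟩
  · intro h v b hb
    simp only [BSys.map, Finset.mem_image] at hb
    obtain ⟨b0, hb0, rfl⟩ := hb
    obtain ⟨a, ha, hne⟩ := h _ _ hb0
    refine ⟨σ a, Finset.mem_image_of_mem _ ha, by simpa using hne⟩




end Generic2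

def runL (s : ℕ) (u : Fin (2*s)) : ℕ := if u.val < s then s else s - 1

def cLen (s : ℕ) (u : Fin (2*s)) : ℕ :=
  if u.val < s then s else if u.val = s then 0 else s

def cF {s : ℕ} (hs : 0 < s) (u : Fin (2*s)) (i : ℕ) : Fin (2*s) :=
  if i < runL s u then ⟨(u.val + i + 1) % (2*s), Nat.mod_lt _ (by omega)⟩
  else ⟨s, by omega⟩

def covs {s : ℕ} (hs : 0 < s) (u v : Fin (2*s)) : Prop :=
  ∃ i, i < cLen s u ∧ cF hs u i = v

private lemma mod_twos {s a : ℕ} (h : a < 4*s) (hs : 0 < s) :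
    a % (2*s) = if a < 2*s then a else a - 2*s := by
  split
  · exact Nat.mod_eq_of_lt (by omega)
  · rw [Nat.mod_eq_sub_mod (by omega), Nat.mod_eq_of_lt (by omega)]

lemma cLen_le_s {s : ℕ} (u : Fin (2*s)) : cLen s u ≤ s := by
  unfold cLen; split_ifs <;> omega

lemma covs_iff {s : ℕ} (hs : 0 < s) (u v : Fin (2*s)) :
    covs hs u v ↔ (u.val < s ∧ u.val < v.val ∧ v.val ≤ u.val + s) ∨
      (s < u.val ∧ (u.val < v.val ∨ v.val + s + 1 ≤ u.val ∨ v.val = s)) := by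
  have hu := u.isLt
  have hv := v.isLt
  constructor
  · rintro ⟨i, hi, hF⟩
    have hival : (cF hs u i).val = v.val := by rw [hF]
    unfold cLen at hi
    unfold cF runL at hival
    by_cases h1 : u.val < s
    · rw [if_pos h1] at hi
      rw [if_pos (by simpa [h1] using hi : i < if u.val < s then s else s - 1)] at hival
      simp only at hival
      rw [Nat.mod_eq_of_lt (by omega)] at hival
      omega
    · by_cases h2 : u.val = s
      · simp [h1, h2] at hi
      · rw [if_neg h1, if_neg h2] at hi
        by_cases h3 : i < s - 1
        · rw [if_pos (by simp [h1]; omega)] at hival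
          simp only at hival
          rw [mod_twos (by omega) hs] at hival
          split_ifs at hival <;> omega
        · rw [if_neg (by simp [h1]; omega)] at hival
          simp only at hival
          omega
  · intro h
    rcases h with ⟨h1, h2, h3⟩ | ⟨h1, h2⟩
    · refine ⟨v.val - u.val - 1, by simp [cLen, h1]; omega, ?_⟩
      unfold cF runL
      rw [if_pos (by simp [h1]; omega)]
      apply Fin.ext
      simp only
      rw [Nat.mod_eq_of_lt (by omega)]
      omega
    · rcases h2 with h2 | h2 | h2
      · refine ⟨v.val - u.val - 1, by unfold cLen; rw [if_neg (by omega), if_neg (by omega)]; omega, ?_⟩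
        unfold cF runL
        rw [if_pos (by rw [if_neg (by omega)]; omega)]
        apply Fin.ext
        simp only
        rw [Nat.mod_eq_of_lt (by omega)]
        omega
      · refine ⟨v.val + 2*s - u.val - 1, by unfold cLen; rw [if_neg (by omega), if_neg (by omega)]; omega, ?_⟩
        unfold cF runL
        rw [if_pos (by rw [if_neg (by omega)]; omega)]
        apply Fin.ext
        simp only
        rw [mod_twos (by omega) hs]
        rw [if_neg (by omega)]
        omega
      · refine ⟨s - 1, by unfold cLen; rw [if_neg (by omega), if_neg (by omega)]; omega, ?_⟩
        unfold cF runL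
        rw [if_neg (by rw [if_neg (by omega)]; omega)]
        exact Fin.ext (by simp [h2])

lemma covs_xor {s : ℕ} (hs : 0 < s) {u v : Fin (2*s)} (h : u ≠ v) :
    covs hs u v ↔ ¬ covs hs v u := by
  have hne : u.val ≠ v.val := fun hh => h (Fin.ext hh)
  have hu := u.isLt
  have hv := v.isLt
  rw [covs_iff, covs_iff]
  omega

lemma covs_ne {s : ℕ} (hs : 0 < s) {u v : Fin (2*s)} (h : covs hs u v) : u ≠ v := by
  rw [covs_iff] at h
  intro hh
  subst hh
  omega

lemma cF_inj {s : ℕ} (hs : 0 < s) (u : Fin (2*s)) {i j : ℕ}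
    (hi : i < cLen s u) (hj : j < cLen s u) (h : cF hs u i = cF hs u j) : i = j := by
  have hu := u.isLt
  have hval : (cF hs u i).val = (cF hs u j).val := by rw [h]
  unfold cLen at hi hj
  unfold cF runL at hval
  by_cases h1 : u.val < s
  · rw [if_pos h1] at hi hj
    rw [if_pos (by simp [h1]; omega), if_pos (by simp [h1]; omega)] at hval
    simp only at hval
    rw [Nat.mod_eq_of_lt (by omega), Nat.mod_eq_of_lt (by omega)] at hval
    omega
  · by_cases h2 : u.val = s
    · simp [h1, h2] at hi
    · rw [if_neg h1, if_neg h2] at hi hj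
      by_cases h3 : i < s - 1 <;> by_cases h4 : j < s - 1
      · rw [if_pos (by simp [h1]; omega), if_pos (by simp [h1]; omega)] at hval
        simp only at hval
        rw [mod_twos (by omega) hs, mod_twos (by omega) hs] at hval
        split_ifs at hval <;> omega
      · rw [if_pos (by simp [h1]; omega), if_neg (by simp [h1]; omega)] at hval
        simp only at hval
        rw [mod_twos (by omega) hs] at hval
        split_ifs at hval <;> omega
      · rw [if_neg (by simp [h1]; omega), if_pos (by simp [h1]; omega)] at hval
        simp only at hval
        rw [mod_twos (by omega) hs] at hval
        split_ifs at hval <;> omega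
      · omega

lemma cF_run_val {s : ℕ} (hs : 0 < s) (u : Fin (2*s)) {i : ℕ} (hi : i < runL s u) :
    (cF hs u i).val = (u.val + i + 1) % (2*s) := by
  unfold cF
  rw [if_pos hi]

lemma chunk_pair_lt_runL {s e : ℕ} (he : 3 ≤ e) {u : Fin (2*s)} {j : ℕ}
    (h : j*e + e ≤ cLen s u) : j*e + 1 < runL s u := by
  unfold cLen at h
  unfold runL
  split_ifs at h ⊢ <;> omega

lemma cLen_dvd {s e : ℕ} (hd : e ∣ s) (u : Fin (2*s)) : e ∣ cLen s u := by
  unfold cLen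
  split_ifs
  · exact hd
  · exact Dvd.intro 0 rfl
  · exact hd

lemma parity_succ_mod {s a : ℕ} (hs : 0 < s) :
    (a % (2*s)) % 2 ≠ ((a+1) % (2*s)) % 2 := by
  rw [Nat.mod_mod_of_dvd _ ⟨s, rfl⟩, Nat.mod_mod_of_dvd _ ⟨s, rfl⟩]
  omega


structure Ctx where
  k : ℕ
  e : ℕ
  m : ℕ
  hk : 3 ≤ k
  he : 3 ≤ e
  hm : 0 < m
  hme : m % (2 * e) = 0
  sys : EStarSystem m e
  chi0 : Fin m → Fin (k - 1)
  hchi0 : IsWeakColouring sys chi0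
  hnc : ¬ Colourable sys (k - 1 - 1)

namespace Ctx

variable (C : Ctx)

def s1 : ℕ := C.e * (C.k - 1)
def T : ℕ := Fintype.card (Fin (2 * C.s1) → Fin (C.k - 1))
def sd : ℕ := C.e * C.m * (2 * C.s1 + C.T)

lemma hs1 : 0 < C.s1 := by
  have h1 := C.hk; have h2 := C.he
  exact Nat.mul_pos (by omega) (by omega)

lemma hT : 0 < C.T := by
  have h1 := C.hk
  have : Nonempty (Fin (2 * C.s1) → Fin (C.k - 1)) := ⟨fun _ => ⟨0, by omega⟩⟩
  exact Fintype.card_pos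

lemma hsd : 0 < C.sd := by
  have h1 := C.he; have h2 := C.hm; have h3 := C.hs1; have h4 := C.hT
  exact Nat.mul_pos (Nat.mul_pos (by omega) h2) (by omega)

lemma hem : C.e ∣ C.m := by
  have := C.hme
  exact Dvd.dvd.trans ⟨2, by ring⟩ (Nat.dvd_of_mod_eq_zero this)

lemma hm2e : 2 * C.e ≤ C.m := by
  have h1 := C.hme; have h2 := C.hm; have h3 := C.he
  have := Nat.le_of_dvd h2 (Nat.dvd_of_mod_eq_zero h1)
  omega

/-- the vertex type of the new system -/
abbrev V : Type := Fin (2 * C.s1) ⊕ ((Fin C.T × Fin C.m) ⊕ Fin (2 * C.sd))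

def eP : Fin (2 * C.s1) → C.V := Sum.inl
def eW : Fin C.T → Fin C.m → C.V := fun t i => Sum.inr (Sum.inl (t, i))
def eD : Fin (2 * C.sd) → C.V := fun x => Sum.inr (Sum.inr x)

lemma eP_inj : Function.Injective C.eP := fun a b h => by
  simpa [eP] using h
lemma eD_inj : Function.Injective C.eD := fun a b h => by
  simpa [eD] using h
lemma eW_inj (t : Fin C.T) : Function.Injective (C.eW t) := fun a b h => by
  simpa [eW] using h

def dAt (r : ℕ) : C.V := C.eD ⟨r % (2 * C.sd), Nat.mod_lt _ (by have := C.hsd; omega)⟩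

lemma dAt_eq {r : ℕ} (h : r < 2 * C.sd) : C.dAt r = C.eD ⟨r, h⟩ := by
  unfold dAt
  congr 1
  exact Fin.ext (Nat.mod_eq_of_lt h)

lemma dAt_inj {r r' : ℕ} (h : r < 2 * C.sd) (h' : r' < 2 * C.sd)
    (heq : C.dAt r = C.dAt r') : r = r' := by
  rw [C.dAt_eq h, C.dAt_eq h'] at heq
  have := C.eD_inj heq
  simpa using this

/-- decoding of gadget indices into colourings of the trigger zone -/
noncomputable def dec : Fin C.T → (Fin (2 * C.s1) → Fin (C.k - 1)) :=
  (Fintype.equivFin (Fin (2 * C.s1) → Fin (C.k - 1))).symm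

noncomputable def enc : (Fin (2 * C.s1) → Fin (C.k - 1)) → Fin C.T :=
  Fintype.equivFin _

lemma dec_enc (χ : Fin (2 * C.s1) → Fin (C.k - 1)) : C.dec (C.enc χ) = χ :=
  Equiv.symm_apply_apply _ _

/-- pigeonhole: some colour class of `dec t` has at least `e` elements -/
lemma hbig (t : Fin C.T) :
    ∃ γ : Fin (C.k - 1), C.e ≤ (Finset.univ.filter fun x => C.dec t x = γ).card := by
  by_contra hcon
  push_neg at hcon
  have key : (Finset.univ : Finset (Fin (2 * C.s1))).card =
      ∑ γ : Fin (C.k - 1), (Finset.univ.filter fun x => C.dec t x = γ).card :=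
    Finset.card_eq_sum_card_fiberwise (fun x _ => Finset.mem_univ _)
  have hb : ∑ γ : Fin (C.k - 1), (Finset.univ.filter fun x => C.dec t x = γ).card ≤
      (C.k - 1) * (C.e - 1) := by
    calc ∑ γ : Fin (C.k - 1), (Finset.univ.filter fun x => C.dec t x = γ).card
        ≤ ∑ _γ : Fin (C.k - 1), (C.e - 1) :=
          Finset.sum_le_sum (fun γ _ => by have := hcon γ; omega)
      _ = (C.k - 1) * (C.e - 1) := by
          rw [Finset.sum_const, Finset.card_univ, Fintype.card_fin, smul_eq_mul]
  rw [Finset.card_univ, Fintype.card_fin] at key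
  have h1 := C.hk; have h2 := C.he
  have hs : C.s1 = C.e * (C.k - 1) := rfl
  have hlt : (C.k - 1) * (C.e - 1) < C.e * (C.k - 1) := by
    have h3 : (C.k - 1) * (C.e - 1) = (C.e - 1) * (C.k - 1) := by ring
    rw [h3]
    exact (Nat.mul_lt_mul_right (by omega)).2 (by omega)
  omega

noncomputable def gam (t : Fin C.T) : Fin (C.k - 1) := (C.hbig t).choose

noncomputable def B0 (t : Fin C.T) : Finset (Fin (2 * C.s1)) :=
  (Finset.exists_subset_card_eq (C.hbig t).choose_spec).choose

lemma B0_spec (t : Fin C.T) :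
    C.B0 t ⊆ (Finset.univ.filter fun x => C.dec t x = C.gam t) ∧ (C.B0 t).card = C.e :=
  (Finset.exists_subset_card_eq (C.hbig t).choose_spec).choose_spec

lemma B0_col (t : Fin C.T) {x : Fin (2 * C.s1)} (hx : x ∈ C.B0 t) :
    C.dec t x = C.gam t := by
  have := (C.B0_spec t).1 hx
  simpa using this

lemma B0_card (t : Fin C.T) : (C.B0 t).card = C.e := (C.B0_spec t).2

/-- blocks of the given system `sys`, by centre -/
def SB (i : Fin C.m) : Finset (Finset (Fin C.m)) :=
  (C.sys.stars.filter fun S => S.centre = i).image EStar.leaves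

lemma SB_mem_iff {i : Fin C.m} {b : Finset (Fin C.m)} :
    b ∈ C.SB i ↔ ∃ S ∈ C.sys.stars, S.centre = i ∧ S.leaves = b := by
  unfold SB
  simp only [Finset.mem_image, Finset.mem_filter]
  constructor
  · rintro ⟨S, ⟨h1, h2⟩, h3⟩; exact ⟨S, h1, h2, h3⟩
  · rintro ⟨S, h1, h2, h3⟩; exact ⟨S, ⟨h1, h2⟩, h3⟩

lemma SB_card {i : Fin C.m} {b : Finset (Fin C.m)} (hb : b ∈ C.SB i) : b.card = C.e := by
  rw [SB_mem_iff] at hb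
  obtain ⟨S, _, _, rfl⟩ := hb
  exact S.card_leaves

lemma SB_not {i : Fin C.m} {b : Finset (Fin C.m)} (hb : b ∈ C.SB i) : i ∉ b := by
  rw [SB_mem_iff] at hb
  obtain ⟨S, _, h2, rfl⟩ := hb
  exact h2 ▸ S.centre_not_leaf

lemma SB_disj {i : Fin C.m} {b₁ b₂ : Finset (Fin C.m)} (h1 : b₁ ∈ C.SB i)
    (h2 : b₂ ∈ C.SB i) {x : Fin C.m} (hx1 : x ∈ b₁) (hx2 : x ∈ b₂) : b₁ = b₂ := by
  have hxi : x ≠ i := fun h => C.SB_not h1 (h ▸ hx1)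
  rw [SB_mem_iff] at h1 h2
  obtain ⟨S₁, hS₁, hc₁, rfl⟩ := h1
  obtain ⟨S₂, hS₂, hc₂, rfl⟩ := h2
  have hdiag : ¬ (s(i, x) : Sym2 (Fin C.m)).IsDiag := by simpa using (Ne.symm hxi)
  obtain ⟨S, -, hu⟩ := C.sys.partition s(i, x) hdiag
  have e₁ : S₁ = S := hu S₁ ⟨hS₁, by
    simp only [EStar.edges, Finset.mem_image]
    exact ⟨x, hx1, by rw [hc₁]⟩⟩
  have e₂ : S₂ = S := hu S₂ ⟨hS₂, by
    simp only [EStar.edges, Finset.mem_image]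
    exact ⟨x, hx2, by rw [hc₂]⟩⟩
  rw [e₁, e₂]

lemma SB_xor₁ {i j : Fin C.m} (hij : i ≠ j) :
    (∃ b ∈ C.SB i, j ∈ b) ∨ (∃ b ∈ C.SB j, i ∈ b) := by
  have hdiag : ¬ (s(i, j) : Sym2 (Fin C.m)).IsDiag := by simpa using hij
  obtain ⟨S, ⟨hS, hedge⟩, -⟩ := C.sys.partition s(i, j) hdiag
  simp only [EStar.edges, Finset.mem_image] at hedge
  obtain ⟨a, ha, haa⟩ := hedge
  rw [Sym2.eq_iff] at haa
  rcases haa with ⟨h1, h2⟩ | ⟨h1, h2⟩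
  · left
    exact ⟨S.leaves, C.SB_mem_iff.2 ⟨S, hS, h1, rfl⟩, h2 ▸ ha⟩
  · right
    exact ⟨S.leaves, C.SB_mem_iff.2 ⟨S, hS, h1, rfl⟩, h2 ▸ ha⟩

lemma SB_xor₂ {i j : Fin C.m} (h1 : ∃ b ∈ C.SB i, j ∈ b) (h2 : ∃ b ∈ C.SB j, i ∈ b) :
    False := by
  obtain ⟨b₁, hb₁, hj⟩ := h1
  obtain ⟨b₂, hb₂, hi⟩ := h2
  have hij : i ≠ j := fun h => C.SB_not hb₁ (h ▸ hj)
  rw [SB_mem_iff] at hb₁ hb₂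
  obtain ⟨S₁, hS₁, hc₁, rfl⟩ := hb₁
  obtain ⟨S₂, hS₂, hc₂, rfl⟩ := hb₂
  have hdiag : ¬ (s(i, j) : Sym2 (Fin C.m)).IsDiag := by simpa using hij
  obtain ⟨S, -, hu⟩ := C.sys.partition s(i, j) hdiag
  have e₁ : S₁ = S := hu S₁ ⟨hS₁, by
    simp only [EStar.edges, Finset.mem_image]
    exact ⟨j, hj, by rw [hc₁]⟩⟩
  have e₂ : S₂ = S := hu S₂ ⟨hS₂, by
    simp only [EStar.edges, Finset.mem_image]
    exact ⟨i, hi, by rw [hc₂, Sym2.eq_swap]⟩⟩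
  have : S₁.centre = S₂.centre := by rw [e₁, e₂]
  rw [hc₁, hc₂] at this
  exact hij this


end Ctx
end S12

namespace S12
namespace Ctx

variable (C : Ctx)

def pe : ℕ := 2 * C.s1 - C.e

lemma hpe : C.e ≤ 2 * C.s1 := by
  have h1 := C.hk; have h2 := C.he
  have h3 : C.e * 1 ≤ C.e * (C.k - 1) := Nat.mul_le_mul_left _ (by omega)
  show C.e ≤ 2 * (C.e * (C.k - 1))
  omega

lemma hpe_dvd : C.e ∣ C.pe := by
  have : C.e ∣ 2 * C.s1 := ⟨2 * (C.k - 1), by unfold s1; ring⟩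
  exact Nat.dvd_sub this dvd_rfl

lemma restE_card (t : Fin C.T) : (Finset.univ \ C.B0 t).card = C.pe := by
  rw [Finset.card_sdiff_of_subset (Finset.subset_univ _), C.B0_card, Finset.card_univ,
    Fintype.card_fin]
  rfl

noncomputable def restE (t : Fin C.T) : Fin C.pe → Fin (2 * C.s1) :=
  (Finset.univ \ C.B0 t).orderEmbOfFin (C.restE_card t)

lemma restE_inj (t : Fin C.T) : Function.Injective (C.restE t) :=
  ((Finset.univ \ C.B0 t).orderEmbOfFin (C.restE_card t)).injective

lemma restE_mem (t : Fin C.T) (q : Fin C.pe) : C.restE t q ∈ Finset.univ \ C.B0 t :=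
  Finset.orderEmbOfFin_mem _ _ _

lemma restE_surj (t : Fin C.T) {v : Fin (2 * C.s1)} (hv : v ∉ C.B0 t) :
    ∃ q, C.restE t q = v := by
  have h2 : v ∈ Set.range (C.restE t) := by
    show v ∈ Set.range ⇑((Finset.univ \ C.B0 t).orderEmbOfFin (C.restE_card t))
    rw [Finset.range_orderEmbOfFin]
    simp [hv]
  exact h2

def AwL (t : Fin C.T) : ℕ := C.pe + (C.T - 1 - t.val) * C.m

lemma gadget_bound {t g : Fin C.T} (hg : t.val < g.val) (j : Fin C.m) :
    C.m * (g.val - t.val - 1) + j.val < (C.T - 1 - t.val) * C.m := by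
  obtain ⟨d, hd⟩ : ∃ d, g.val - t.val = d + 1 := ⟨g.val - t.val - 1, by omega⟩
  have hdd : g.val - t.val - 1 = d := by omega
  rw [hdd]
  have hj := j.isLt
  have hg2 := g.isLt
  have h2 : C.m * (d + 1) ≤ (C.T - 1 - t.val) * C.m := by
    rw [Nat.mul_comm]
    exact Nat.mul_le_mul_right _ (by omega)
  have h3 : C.m * (d + 1) = C.m * d + C.m := by ring
  omega

noncomputable def Aw (t : Fin C.T) (q : ℕ) : C.V :=
  if h : q < C.pe then C.eP (C.restE t ⟨q, h⟩)
  else if h2 : q - C.pe < (C.T - 1 - t.val) * C.m then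
    C.eW ⟨t.val + 1 + (q - C.pe) / C.m, by
        have hlt := (Nat.div_lt_iff_lt_mul C.hm).2 h2
        have ht := t.isLt
        omega⟩
      ⟨(q - C.pe) % C.m, Nat.mod_lt _ C.hm⟩
  else C.dAt 0

lemma AwL_dvd (t : Fin C.T) : C.e ∣ C.AwL t :=
  Nat.dvd_add (C.hpe_dvd) (Dvd.dvd.mul_left C.hem _)

lemma Aw_shape {t : Fin C.T} {q : ℕ} (hq : q < C.AwL t) :
    (∃ (h : q < C.pe), C.Aw t q = C.eP (C.restE t ⟨q, h⟩)) ∨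
    (¬ q < C.pe ∧ ∃ (g : Fin C.T) (j : Fin C.m), C.Aw t q = C.eW g j ∧
      t.val < g.val ∧ g.val = t.val + 1 + (q - C.pe) / C.m ∧ j.val = (q - C.pe) % C.m) := by
  by_cases h : q < C.pe
  · exact Or.inl ⟨h, dif_pos h⟩
  · right
    refine ⟨h, ?_⟩
    have h2 : q - C.pe < (C.T - 1 - t.val) * C.m := by
      unfold AwL at hq; omega
    rw [Aw, dif_neg h, dif_pos h2]
    refine ⟨_, _, rfl, ?_, rfl, rfl⟩
    show t.val < t.val + 1 + (q - C.pe) / C.m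
    exact Nat.lt_of_lt_of_le (Nat.lt_succ_self _) (Nat.le_add_right _ _)

lemma Aw_nonD {t : Fin C.T} {q : ℕ} (hq : q < C.AwL t) :
    ∀ x, C.Aw t q ≠ C.eD x := by
  intro x
  rcases C.Aw_shape hq with ⟨h, heq⟩ | ⟨h, g, j, heq, _⟩
  · rw [heq]; simp [eP, eD]
  · rw [heq]; simp [eW, eD]

lemma Aw_inj {t : Fin C.T} {q q' : ℕ} (hq : q < C.AwL t) (hq' : q' < C.AwL t)
    (h : C.Aw t q = C.Aw t q') : q = q' := by
  rcases C.Aw_shape hq with ⟨h1, e1⟩ | ⟨h1, g, j, e1, hg, hgv, hjv⟩ <;>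
    rcases C.Aw_shape hq' with ⟨h2, e2⟩ | ⟨h2, g', j', e2, hg', hgv', hjv'⟩
  · rw [e1, e2] at h
    have := C.restE_inj t (C.eP_inj h)
    simpa using this
  · rw [e1, e2] at h; simp [eP, eW] at h
  · rw [e1, e2] at h; simp [eP, eW] at h
  · rw [e1, e2] at h
    simp only [eW, Sum.inr.injEq, Sum.inl.injEq, Prod.mk.injEq] at h
    obtain ⟨hgg, hjj⟩ := h
    have hv1 : g.val = g'.val := by rw [hgg]
    have hv2 : j.val = j'.val := by rw [hjj]
    rw [hgv, hgv'] at hv1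
    rw [hjv, hjv'] at hv2
    have hdiv : (q - C.pe) / C.m = (q' - C.pe) / C.m := by omega
    have d1 := Nat.div_add_mod (q - C.pe) C.m
    have d2 := Nat.div_add_mod (q' - C.pe) C.m
    rw [hdiv, hv2] at d1
    omega

lemma Aw_surjP {t : Fin C.T} {v : Fin (2 * C.s1)} (hv : v ∉ C.B0 t) :
    ∃ q < C.AwL t, C.Aw t q = C.eP v := by
  obtain ⟨qq, hqq⟩ := C.restE_surj t hv
  refine ⟨qq.val, by unfold AwL; have := qq.isLt; omega, ?_⟩
  rw [Aw, dif_pos qq.isLt]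
  exact congrArg C.eP hqq

lemma Aw_surjW {t g : Fin C.T} (hg : t.val < g.val) (j : Fin C.m) :
    ∃ q < C.AwL t, C.Aw t q = C.eW g j := by
  have hbd := C.gadget_bound hg j
  refine ⟨C.pe + (C.m * (g.val - t.val - 1) + j.val), by unfold AwL; omega, ?_⟩
  have hx : C.pe + (C.m * (g.val - t.val - 1) + j.val) - C.pe
      = C.m * (g.val - t.val - 1) + j.val := by omega
  have h1 : ¬ C.pe + (C.m * (g.val - t.val - 1) + j.val) < C.pe := by omega
  rw [Aw, dif_neg h1]
  have h2 : C.pe + (C.m * (g.val - t.val - 1) + j.val) - C.pe <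
      (C.T - 1 - t.val) * C.m := by rw [hx]; exact hbd
  rw [dif_pos h2]
  have hdiv : (C.pe + (C.m * (g.val - t.val - 1) + j.val) - C.pe) / C.m
      = g.val - t.val - 1 := by
    rw [hx, Nat.mul_add_div C.hm, Nat.div_eq_of_lt j.isLt, Nat.add_zero]
  have hmod : (C.pe + (C.m * (g.val - t.val - 1) + j.val) - C.pe) % C.m = j.val := by
    rw [hx, Nat.mul_add_mod, Nat.mod_eq_of_lt j.isLt]
  have hgeq : (⟨t.val + 1 + (C.pe + (C.m * (g.val - t.val - 1) + j.val) - C.pe) / C.m,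
      by rw [hdiv]; have := g.isLt; omega⟩ : Fin C.T) = g := by
    apply Fin.ext
    show t.val + 1 + _ = g.val
    rw [hdiv]
    omega
  have hjeq : (⟨(C.pe + (C.m * (g.val - t.val - 1) + j.val) - C.pe) % C.m,
      Nat.mod_lt _ C.hm⟩ : Fin C.m) = j := Fin.ext hmod
  unfold eW
  rw [hgeq, hjeq]

end Ctx
end S12

namespace S12

lemma euclid_unique {d j r j' r' : ℕ} (hd : 0 < d) (hr : r < d) (hr' : r' < d)
    (h : j * d + r = j' * d + r') : j = j' ∧ r = r' := by
  have h1 : (j * d + r) / d = j := by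
    rw [Nat.mul_comm j d, Nat.mul_add_div hd, Nat.div_eq_of_lt hr, Nat.add_zero]
  have h2 : (j' * d + r') / d = j' := by
    rw [Nat.mul_comm j' d, Nat.mul_add_div hd, Nat.div_eq_of_lt hr', Nat.add_zero]
  have hj : j = j' := by rw [← h1, ← h2, h]
  subst hj
  exact ⟨rfl, by omega⟩

namespace Ctx

variable (C : Ctx)

lemma hDdvd : C.e ∣ 2 * C.sd := ⟨2 * C.m * (2 * C.s1 + C.T), by unfold sd; ring⟩

lemma dAt_isD (r : ℕ) : ∃ x, C.dAt r = C.eD x := ⟨_, rfl⟩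

def padBlk (a : ℕ → C.V) (j : ℕ) : Finset C.V :=
  insert (a j) ((Finset.range (C.e - 1)).image fun r => C.dAt (j * (C.e - 1) + r))

def chopBlk (off j : ℕ) : Finset C.V :=
  (Finset.range C.e).image fun r => C.dAt (off + j * C.e + r)

def padFam (a : ℕ → C.V) (L : ℕ) : Finset (Finset C.V) :=
  (Finset.range L).image (C.padBlk a) ∪
    (Finset.range ((2 * C.sd - L * (C.e - 1)) / C.e)).image (C.chopBlk (L * (C.e - 1)))

lemma mem_padBlk {a : ℕ → C.V} {j : ℕ} {y : C.V} :
    y ∈ C.padBlk a j ↔ y = a j ∨ ∃ r < C.e - 1, y = C.dAt (j * (C.e - 1) + r) := by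
  unfold padBlk
  simp only [Finset.mem_insert, Finset.mem_image, Finset.mem_range]
  constructor
  · rintro (h | ⟨r, hr, rfl⟩)
    · exact Or.inl h
    · exact Or.inr ⟨r, hr, rfl⟩
  · rintro (h | ⟨r, hr, rfl⟩)
    · exact Or.inl h
    · exact Or.inr ⟨r, hr, rfl⟩

lemma mem_chopBlk {off j : ℕ} {y : C.V} :
    y ∈ C.chopBlk off j ↔ ∃ r < C.e, y = C.dAt (off + j * C.e + r) := by
  unfold chopBlk
  simp only [Finset.mem_image, Finset.mem_range]
  constructor
  · rintro ⟨r, hr, rfl⟩; exact ⟨r, hr, rfl⟩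
  · rintro ⟨r, hr, rfl⟩; exact ⟨r, hr, rfl⟩

lemma mem_padFam {a : ℕ → C.V} {L : ℕ} {b : Finset C.V} : b ∈ C.padFam a L ↔
    (∃ j < L, b = C.padBlk a j) ∨
    (∃ j < (2 * C.sd - L * (C.e - 1)) / C.e, b = C.chopBlk (L * (C.e - 1)) j) := by
  unfold padFam
  simp only [Finset.mem_union, Finset.mem_image, Finset.mem_range]
  constructor
  · rintro (⟨j, hj, rfl⟩ | ⟨j, hj, rfl⟩)
    · exact Or.inl ⟨j, hj, rfl⟩
    · exact Or.inr ⟨j, hj, rfl⟩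
  · rintro (⟨j, hj, rfl⟩ | ⟨j, hj, rfl⟩)
    · exact Or.inl ⟨j, hj, rfl⟩
    · exact Or.inr ⟨j, hj, rfl⟩

lemma pad_idx_lt {L j r : ℕ} (hj : j < L) (hr : r < C.e - 1)
    (hbnd : L * (C.e - 1) ≤ 2 * C.sd) : j * (C.e - 1) + r < 2 * C.sd := by
  have h1 : (j + 1) * (C.e - 1) ≤ L * (C.e - 1) := Nat.mul_le_mul_right _ (by omega)
  have h2 : (j + 1) * (C.e - 1) = j * (C.e - 1) + (C.e - 1) := by ring
  omega

lemma chop_idx_lt {L j r : ℕ} (hdvd : C.e ∣ L) (hbnd : L * (C.e - 1) ≤ 2 * C.sd)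
    (hj : j < (2 * C.sd - L * (C.e - 1)) / C.e) (hr : r < C.e) :
    L * (C.e - 1) + j * C.e + r < 2 * C.sd := by
  have hdvd2 : C.e ∣ 2 * C.sd - L * (C.e - 1) :=
    Nat.dvd_sub C.hDdvd (Dvd.dvd.mul_right hdvd _)
  have h1 : (j + 1) * C.e ≤ ((2 * C.sd - L * (C.e - 1)) / C.e) * C.e :=
    Nat.mul_le_mul_right _ (by omega)
  rw [Nat.div_mul_cancel hdvd2] at h1
  have h2 : (j + 1) * C.e = j * C.e + C.e := by ring
  omega

/-- hypotheses on the non-D enumeration used to build a padded family -/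
structure GoodEnum (C : Ctx) (a : ℕ → C.V) (L : ℕ) : Prop where
  inj : ∀ {q q'}, q < L → q' < L → a q = a q' → q = q'
  nonD : ∀ {q}, q < L → ∀ x, a q ≠ C.eD x
  dvdL : C.e ∣ L
  bnd : L * (C.e - 1) ≤ 2 * C.sd

variable {C}

lemma padFam_card {a : ℕ → C.V} {L : ℕ} (H : GoodEnum C a L) :
    ∀ b ∈ C.padFam a L, b.card = C.e := by
  intro b hb
  have he := C.he
  rw [C.mem_padFam] at hb
  rcases hb with ⟨j, hj, rfl⟩ | ⟨j, hj, rfl⟩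
  · unfold padBlk
    rw [Finset.card_insert_of_notMem, Finset.card_image_of_injOn]
    · rw [Finset.card_range]; omega
    · intro r hr r' hr' heq
      simp only [Finset.mem_coe, Finset.mem_range] at hr hr'
      have := C.dAt_inj (C.pad_idx_lt hj hr H.bnd) (C.pad_idx_lt hj hr' H.bnd) heq
      omega
    · intro hmem
      simp only [Finset.mem_image, Finset.mem_range] at hmem
      obtain ⟨r, hr, hre⟩ := hmem
      obtain ⟨x, hx⟩ := C.dAt_isD (j * (C.e - 1) + r)
      exact H.nonD hj x (by rw [← hre, hx])
  · unfold chopBlk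
    rw [Finset.card_image_of_injOn]
    · rw [Finset.card_range]
    · intro r hr r' hr' heq
      simp only [Finset.mem_coe, Finset.mem_range] at hr hr'
      have := C.dAt_inj (C.chop_idx_lt H.dvdL H.bnd hj hr)
        (C.chop_idx_lt H.dvdL H.bnd hj hr') heq
      omega

lemma padFam_notmem {a : ℕ → C.V} {L : ℕ} (H : GoodEnum C a L) {v : C.V}
    (hv1 : ∀ q, q < L → a q ≠ v) (hv2 : ∀ x, v ≠ C.eD x) :
    ∀ b ∈ C.padFam a L, v ∉ b := by
  intro b hb hvb
  rw [C.mem_padFam] at hb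
  rcases hb with ⟨j, hj, rfl⟩ | ⟨j, hj, rfl⟩
  · rw [C.mem_padBlk] at hvb
    rcases hvb with h | ⟨r, hr, h⟩
    · exact hv1 j hj h.symm
    · obtain ⟨x, hx⟩ := C.dAt_isD (j * (C.e - 1) + r)
      exact hv2 x (by rw [h, hx])
  · rw [C.mem_chopBlk] at hvb
    obtain ⟨r, hr, h⟩ := hvb
    obtain ⟨x, hx⟩ := C.dAt_isD (L * (C.e - 1) + j * C.e + r)
    exact hv2 x (by rw [h, hx])

lemma padFam_disj {a : ℕ → C.V} {L : ℕ} (H : GoodEnum C a L) {b₁ b₂ : Finset C.V}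
    (h1 : b₁ ∈ C.padFam a L) (h2 : b₂ ∈ C.padFam a L) {x : C.V}
    (hx1 : x ∈ b₁) (hx2 : x ∈ b₂) : b₁ = b₂ := by
  have he := C.he
  rw [C.mem_padFam] at h1 h2
  rcases h1 with ⟨j, hj, rfl⟩ | ⟨j, hj, rfl⟩ <;>
    rcases h2 with ⟨j', hj', rfl⟩ | ⟨j', hj', rfl⟩
  · rw [C.mem_padBlk] at hx1 hx2
    have hjj : j = j' := by
      rcases hx1 with h | ⟨r, hr, h⟩ <;> rcases hx2 with h' | ⟨r', hr', h'⟩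
      · exact H.inj hj hj' (by rw [← h, ← h'])
      · exfalso
        obtain ⟨z, hz⟩ := C.dAt_isD (j' * (C.e - 1) + r')
        exact H.nonD hj z (by rw [← h, h', hz])
      · exfalso
        obtain ⟨z, hz⟩ := C.dAt_isD (j * (C.e - 1) + r)
        exact H.nonD hj' z (by rw [← h', h, hz])
      · have := C.dAt_inj (C.pad_idx_lt hj hr H.bnd) (C.pad_idx_lt hj' hr' H.bnd)
          (by rw [← h, ← h'])
        exact (euclid_unique (by omega) hr hr' this).1
    rw [hjj]
  · exfalso
    rw [C.mem_padBlk] at hx1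
    rw [C.mem_chopBlk] at hx2
    obtain ⟨r', hr', h'⟩ := hx2
    rcases hx1 with h | ⟨r, hr, h⟩
    · obtain ⟨z, hz⟩ := C.dAt_isD (L * (C.e - 1) + j' * C.e + r')
      exact H.nonD hj z (by rw [← h, h', hz])
    · have heq := C.dAt_inj (C.pad_idx_lt hj hr H.bnd)
        (C.chop_idx_lt H.dvdL H.bnd hj' hr') (by rw [← h, ← h'])
      have := C.pad_idx_lt hj hr H.bnd
      have h1' : (j + 1) * (C.e - 1) ≤ L * (C.e - 1) := Nat.mul_le_mul_right _ (by omega)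
      have h2' : (j + 1) * (C.e - 1) = j * (C.e - 1) + (C.e - 1) := by ring
      omega
  · exfalso
    rw [C.mem_padBlk] at hx2
    rw [C.mem_chopBlk] at hx1
    obtain ⟨r', hr', h'⟩ := hx1
    rcases hx2 with h | ⟨r, hr, h⟩
    · obtain ⟨z, hz⟩ := C.dAt_isD (L * (C.e - 1) + j * C.e + r')
      exact H.nonD hj' z (by rw [← h, h', hz])
    · have heq := C.dAt_inj (C.chop_idx_lt H.dvdL H.bnd hj hr')
        (C.pad_idx_lt hj' hr H.bnd) (by rw [← h', ← h])
      have h1' : (j' + 1) * (C.e - 1) ≤ L * (C.e - 1) := Nat.mul_le_mul_right _ (by omega)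
      have h2' : (j' + 1) * (C.e - 1) = j' * (C.e - 1) + (C.e - 1) := by ring
      omega
  · rw [C.mem_chopBlk] at hx1 hx2
    obtain ⟨r, hr, h⟩ := hx1
    obtain ⟨r', hr', h'⟩ := hx2
    have heq := C.dAt_inj (C.chop_idx_lt H.dvdL H.bnd hj hr)
      (C.chop_idx_lt H.dvdL H.bnd hj' hr') (by rw [← h, ← h'])
    have : j = j' := (euclid_unique (by omega) hr hr'
      (by omega : j * C.e + r = j' * C.e + r')).1
    rw [this]

lemma padFam_cover {a : ℕ → C.V} {L : ℕ} (H : GoodEnum C a L) {y : C.V} :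
    (∃ b ∈ C.padFam a L, y ∈ b) ↔ (∃ q < L, y = a q) ∨ (∃ x, y = C.eD x) := by
  have he := C.he
  constructor
  · rintro ⟨b, hb, hy⟩
    rw [C.mem_padFam] at hb
    rcases hb with ⟨j, hj, rfl⟩ | ⟨j, hj, rfl⟩
    · rw [C.mem_padBlk] at hy
      rcases hy with h | ⟨r, hr, h⟩
      · exact Or.inl ⟨j, hj, h⟩
      · obtain ⟨z, hz⟩ := C.dAt_isD (j * (C.e - 1) + r)
        exact Or.inr ⟨z, by rw [h, hz]⟩
    · rw [C.mem_chopBlk] at hy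
      obtain ⟨r, hr, h⟩ := hy
      obtain ⟨z, hz⟩ := C.dAt_isD (L * (C.e - 1) + j * C.e + r)
      exact Or.inr ⟨z, by rw [h, hz]⟩
  · rintro (⟨q, hq, rfl⟩ | ⟨x, rfl⟩)
    · exact ⟨C.padBlk a q, C.mem_padFam.2 (Or.inl ⟨q, hq, rfl⟩),
        C.mem_padBlk.2 (Or.inl rfl)⟩
    · set r := x.val with hrdef
      have hrlt : r < 2 * C.sd := x.isLt
      have hye : C.eD x = C.dAt r := by rw [C.dAt_eq hrlt]
      by_cases hcase : r < L * (C.e - 1)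
      · refine ⟨C.padBlk a (r / (C.e - 1)), C.mem_padFam.2 (Or.inl ⟨r / (C.e - 1),
          (Nat.div_lt_iff_lt_mul (by omega)).2 hcase, rfl⟩), ?_⟩
        rw [C.mem_padBlk]
        refine Or.inr ⟨r % (C.e - 1), Nat.mod_lt _ (by omega), ?_⟩
        rw [hye]
        congr 1
        exact (Nat.div_add_mod' r (C.e - 1)).symm ▸ (Nat.div_add_mod' r (C.e - 1))
      · refine ⟨C.chopBlk (L * (C.e - 1)) ((r - L * (C.e - 1)) / C.e),
          C.mem_padFam.2 (Or.inr ⟨(r - L * (C.e - 1)) / C.e, ?_, rfl⟩), ?_⟩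
        · exact Nat.div_lt_div_of_lt_of_dvd
            (Nat.dvd_sub C.hDdvd (Dvd.dvd.mul_right H.dvdL _)) (by omega)
        · rw [C.mem_chopBlk]
          refine ⟨(r - L * (C.e - 1)) % C.e, Nat.mod_lt _ (by omega), ?_⟩
          rw [hye]
          congr 1
          have hdm := Nat.div_add_mod' (r - L * (C.e - 1)) C.e
          omega
  
lemma padFam_pair {a : ℕ → C.V} {L : ℕ} (H : GoodEnum C a L) :
    ∀ b ∈ C.padFam a L, ∃ r, r + 1 < 2 * C.sd ∧ C.dAt r ∈ b ∧ C.dAt (r + 1) ∈ b := by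
  intro b hb
  have he := C.he
  rw [C.mem_padFam] at hb
  rcases hb with ⟨j, hj, rfl⟩ | ⟨j, hj, rfl⟩
  · refine ⟨j * (C.e - 1), ?_, ?_, ?_⟩
    · have := C.pad_idx_lt hj (by omega : 1 < C.e - 1) H.bnd
      omega
    · exact C.mem_padBlk.2 (Or.inr ⟨0, by omega, by rw [Nat.add_zero]⟩)
    · exact C.mem_padBlk.2 (Or.inr ⟨1, by omega, rfl⟩)
  · refine ⟨L * (C.e - 1) + j * C.e, ?_, ?_, ?_⟩
    · have := C.chop_idx_lt H.dvdL H.bnd hj (by omega : 1 < C.e)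
      omega
    · exact C.mem_chopBlk.2 ⟨0, by omega, by rw [Nat.add_zero]⟩
    · exact C.mem_chopBlk.2 ⟨1, by omega, rfl⟩

end Ctx
end S12

namespace S12
namespace Ctx

variable (C : Ctx)

lemma hs1_dvd : C.e ∣ C.s1 := ⟨C.k - 1, rfl⟩
lemma hsd_dvd : C.e ∣ C.sd := ⟨C.m * (2 * C.s1 + C.T), by unfold sd; ring⟩

lemma bndAux {L : ℕ} (hL : L ≤ 2 * C.s1 + C.T * C.m) : L * (C.e - 1) ≤ 2 * C.sd := by
  have hm := C.hm
  have A : L * (C.e - 1) ≤ (2 * C.s1 + C.T * C.m) * C.e :=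
    Nat.mul_le_mul hL (by omega)
  have expand : 2 * C.sd = 2 * C.e * C.m * (2 * C.s1) + 2 * C.e * C.m * C.T := by
    unfold sd; ring
  have e1 : 2 * C.s1 * C.e ≤ 2 * C.e * C.m * (2 * C.s1) := by
    calc 2 * C.s1 * C.e = (2 * C.s1 * C.e) * 1 := by ring
      _ ≤ (2 * C.s1 * C.e) * (2 * C.m) := Nat.mul_le_mul_left _ (by omega)
      _ = 2 * C.e * C.m * (2 * C.s1) := by ring
  have e2 : C.T * C.m * C.e ≤ 2 * C.e * C.m * C.T := by
    calc C.T * C.m * C.e = (C.T * C.m * C.e) * 1 := by ring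
      _ ≤ (C.T * C.m * C.e) * 2 := Nat.mul_le_mul_left _ (by omega)
      _ = 2 * C.e * C.m * C.T := by ring
  have B : (2 * C.s1 + C.T * C.m) * C.e = 2 * C.s1 * C.e + C.T * C.m * C.e := by ring
  omega

lemma AwL_le (t : Fin C.T) : C.AwL t ≤ 2 * C.s1 + C.T * C.m := by
  unfold AwL
  have h1 : C.pe ≤ 2 * C.s1 := by unfold pe; omega
  have h2 : (C.T - 1 - t.val) * C.m ≤ C.T * C.m := Nat.mul_le_mul_right _ (by omega)
  omega

lemma GE_P (u : Fin (2 * C.s1)) :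
    GoodEnum C (fun j => C.eP (cF C.hs1 u j)) (cLen C.s1 u) where
  inj := fun hq hq' h => cF_inj C.hs1 u hq hq' (C.eP_inj h)
  nonD := fun _ x => by simp [eP, eD]
  dvdL := cLen_dvd C.hs1_dvd u
  bnd := C.bndAux (by have := cLen_le_s u; omega)

lemma GE_W (t : Fin C.T) : GoodEnum C (C.Aw t) (C.AwL t) where
  inj := fun hq hq' h => C.Aw_inj hq hq' h
  nonD := fun hq x => C.Aw_nonD hq x
  dvdL := C.AwL_dvd t
  bnd := C.bndAux (C.AwL_le t)

end Ctx
end S12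

namespace S12
namespace Ctx

variable (C : Ctx)

def BP (u : Fin (2 * C.s1)) : Finset (Finset C.V) :=
  C.padFam (fun j => C.eP (cF C.hs1 u j)) (cLen C.s1 u)

noncomputable def B0blk (t : Fin C.T) : Finset C.V := (C.B0 t).image C.eP

noncomputable def BW (t : Fin C.T) (i : Fin C.m) : Finset (Finset C.V) :=
  ((C.SB i).image (Finset.image (C.eW t)) ∪ {C.B0blk t}) ∪ C.padFam (C.Aw t) (C.AwL t)

def BD (x : Fin (2 * C.sd)) : Finset (Finset C.V) :=
  (Finset.range (cLen C.sd x / C.e)).image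
    (fun j => (Finset.range C.e).image (fun r => C.eD (cF C.hsd x (j * C.e + r))))

noncomputable def BB : C.V → Finset (Finset C.V) :=
  Sum.elim C.BP (Sum.elim (fun ti => C.BW ti.1 ti.2) C.BD)

lemma mem_BW {t : Fin C.T} {i : Fin C.m} {b : Finset C.V} :
    b ∈ C.BW t i ↔ (∃ b0 ∈ C.SB i, b = b0.image (C.eW t)) ∨ b = C.B0blk t ∨
      b ∈ C.padFam (C.Aw t) (C.AwL t) := by
  unfold BW
  simp only [Finset.mem_union, Finset.mem_image, Finset.mem_singleton]
  constructor
  · rintro ((⟨b0, hb0, rfl⟩ | h) | h)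
    · exact Or.inl ⟨b0, hb0, rfl⟩
    · exact Or.inr (Or.inl h)
    · exact Or.inr (Or.inr h)
  · rintro (⟨b0, hb0, rfl⟩ | h | h)
    · exact Or.inl (Or.inl ⟨b0, hb0, rfl⟩)
    · exact Or.inl (Or.inr h)
    · exact Or.inr h

lemma mem_BD {x : Fin (2 * C.sd)} {b : Finset C.V} :
    b ∈ C.BD x ↔ ∃ j < cLen C.sd x / C.e,
      b = (Finset.range C.e).image (fun r => C.eD (cF C.hsd x (j * C.e + r))) := by
  unfold BD
  simp only [Finset.mem_image, Finset.mem_range]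
  constructor
  · rintro ⟨j, hj, rfl⟩; exact ⟨j, hj, rfl⟩
  · rintro ⟨j, hj, rfl⟩; exact ⟨j, hj, rfl⟩

lemma BD_idx_lt {x : Fin (2 * C.sd)} {j r : ℕ} (hj : j < cLen C.sd x / C.e)
    (hr : r < C.e) : j * C.e + r < cLen C.sd x := by
  have hdvd : C.e ∣ cLen C.sd x := cLen_dvd C.hsd_dvd x
  have h1 : (j + 1) * C.e ≤ (cLen C.sd x / C.e) * C.e := Nat.mul_le_mul_right _ (by omega)
  rw [Nat.div_mul_cancel hdvd] at h1
  have h2 : (j + 1) * C.e = j * C.e + C.e := by ring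
  omega

lemma BB_card : ∀ v b, b ∈ C.BB v → b.card = C.e := by
  have he := C.he
  rintro (u | ⟨t, i⟩ | x) b hb
  · exact padFam_card (C.GE_P u) b hb
  · rw [show C.BB (Sum.inr (Sum.inl (t, i))) = C.BW t i from rfl, C.mem_BW] at hb
    rcases hb with ⟨b0, hb0, rfl⟩ | rfl | hb
    · rw [Finset.card_image_of_injective _ (C.eW_inj t)]
      exact C.SB_card hb0
    · rw [B0blk, Finset.card_image_of_injective _ C.eP_inj]
      exact C.B0_card t
    · exact padFam_card (C.GE_W t) b hb
  · rw [show C.BB (Sum.inr (Sum.inr x)) = C.BD x from rfl, C.mem_BD] at hb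
    obtain ⟨j, hj, rfl⟩ := hb
    rw [Finset.card_image_of_injOn, Finset.card_range]
    intro r hr r' hr' heq
    simp only [Finset.mem_coe, Finset.mem_range] at hr hr'
    have := cF_inj C.hsd x (C.BD_idx_lt hj hr) (C.BD_idx_lt hj hr') (C.eD_inj heq)
    omega

lemma BB_not : ∀ v b, b ∈ C.BB v → v ∉ b := by
  rintro (u | ⟨t, i⟩ | x) b hb hmem
  · refine padFam_notmem (C.GE_P u) ?_ ?_ b hb hmem
    · intro q hq heq
      exact covs_ne C.hs1 ⟨q, hq, C.eP_inj heq⟩ rfl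
    · intro z
      simp [eP, eD]
  · rw [show C.BB (Sum.inr (Sum.inl (t, i))) = C.BW t i from rfl, C.mem_BW] at hb
    rcases hb with ⟨b0, hb0, rfl⟩ | rfl | hb
    · simp only [Finset.mem_image] at hmem
      obtain ⟨y, hy, hye⟩ := hmem
      have : y = i := by simpa [eW] using hye
      exact C.SB_not hb0 (this ▸ hy)
    · simp only [B0blk, Finset.mem_image] at hmem
      obtain ⟨y, _, hye⟩ := hmem
      simp [eP, eW] at hye
    · refine padFam_notmem (C.GE_W t) ?_ ?_ b hb hmem
      · intro q hq heq
        rcases C.Aw_shape hq with ⟨h, he2⟩ | ⟨h, g, jj, he2, hg, _, _⟩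
        · rw [he2] at heq; simp [eP, eW] at heq
        · rw [he2] at heq
          simp only [eW, Sum.inr.injEq, Sum.inl.injEq, Prod.mk.injEq] at heq
          have : g = t := heq.1
          rw [this] at hg
          omega
      · intro z
        simp [eW, eD]
  · rw [show C.BB (Sum.inr (Sum.inr x)) = C.BD x from rfl, C.mem_BD] at hb
    obtain ⟨j, hj, rfl⟩ := hb
    simp only [Finset.mem_image, Finset.mem_range] at hmem
    obtain ⟨r, hr, hre⟩ := hmem
    exact covs_ne C.hsd ⟨j * C.e + r, C.BD_idx_lt hj hr, C.eD_inj hre⟩ rfl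

lemma padFam_elt {a : ℕ → C.V} {L : ℕ} (H : GoodEnum C a L) {b : Finset C.V}
    (hb : b ∈ C.padFam a L) {x : C.V} (hx : x ∈ b) :
    (∃ q < L, x = a q) ∨ (∃ z, x = C.eD z) :=
  (padFam_cover H).1 ⟨b, hb, hx⟩

lemma BB_disj : ∀ v b₁ b₂, b₁ ∈ C.BB v → b₂ ∈ C.BB v → ∀ x, x ∈ b₁ → x ∈ b₂ → b₁ = b₂ := by
  rintro (u | ⟨t, i⟩ | x) b₁ b₂ hb₁ hb₂ y hy₁ hy₂
  · exact padFam_disj (C.GE_P u) hb₁ hb₂ hy₁ hy₂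
  · rw [show C.BB (Sum.inr (Sum.inl (t, i))) = C.BW t i from rfl, C.mem_BW] at hb₁ hb₂
    have hWshape : ∀ {b0 : Finset (Fin C.m)} {z : C.V}, z ∈ b0.image (C.eW t) →
        ∃ w, w ∈ b0 ∧ z = C.eW t w := by
      intro b0 z hz
      simp only [Finset.mem_image] at hz
      obtain ⟨w, hw, hwe⟩ := hz
      exact ⟨w, hw, hwe.symm⟩
    have hPshape : ∀ {z : C.V}, z ∈ C.B0blk t → ∃ w, w ∈ C.B0 t ∧ z = C.eP w := by
      intro z hz
      simp only [B0blk, Finset.mem_image] at hz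
      obtain ⟨w, hw, hwe⟩ := hz
      exact ⟨w, hw, hwe.symm⟩
    rcases hb₁ with ⟨b0, hb0, rfl⟩ | rfl | hb₁ <;>
      rcases hb₂ with ⟨b0', hb0', rfl⟩ | rfl | hb₂
    · obtain ⟨w, hw, hwe⟩ := hWshape hy₁
      obtain ⟨w', hw', hwe'⟩ := hWshape hy₂
      have : w = w' := C.eW_inj t (by rw [← hwe, ← hwe'])
      subst this
      rw [C.SB_disj hb0 hb0' hw hw']
    · obtain ⟨w, hw, hwe⟩ := hWshape hy₁
      obtain ⟨w', hw', hwe'⟩ := hPshape hy₂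
      rw [hwe'] at hwe; simp [eP, eW] at hwe
    · obtain ⟨w, hw, hwe⟩ := hWshape hy₁
      rcases C.padFam_elt (C.GE_W t) hb₂ hy₂ with ⟨q, hq, hqe⟩ | ⟨z, hze⟩
      · exfalso
        rcases C.Aw_shape hq with ⟨h, he2⟩ | ⟨h, g, jj, he2, hg, _, _⟩
        · rw [he2] at hqe; rw [hqe] at hwe; simp [eP, eW] at hwe
        · rw [he2] at hqe; rw [hqe] at hwe
          simp only [eW, Sum.inr.injEq, Sum.inl.injEq, Prod.mk.injEq] at hwe
          have : t = g := hwe.1.symm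
          rw [← this] at hg
          omega
      · rw [hze] at hwe; simp [eW, eD] at hwe
    · obtain ⟨w, hw, hwe⟩ := hPshape hy₁
      obtain ⟨w', hw', hwe'⟩ := hWshape hy₂
      rw [hwe'] at hwe; simp [eP, eW] at hwe
    · rfl
    · obtain ⟨w, hw, hwe⟩ := hPshape hy₁
      rcases C.padFam_elt (C.GE_W t) hb₂ hy₂ with ⟨q, hq, hqe⟩ | ⟨z, hze⟩
      · exfalso
        rcases C.Aw_shape hq with ⟨h, he2⟩ | ⟨h, g, jj, he2, hg, _, _⟩
        · rw [he2] at hqe; rw [hqe] at hwe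
          have : w = C.restE t ⟨q, h⟩ := C.eP_inj hwe.symm
          have hmem := C.restE_mem t ⟨q, h⟩
          rw [← this] at hmem
          simp only [Finset.mem_sdiff] at hmem
          exact hmem.2 hw
        · rw [he2] at hqe; rw [hqe] at hwe; simp [eP, eW] at hwe
      · rw [hze] at hwe; simp [eP, eD] at hwe
    · obtain ⟨w, hw, hwe⟩ := hWshape hy₂
      rcases C.padFam_elt (C.GE_W t) hb₁ hy₁ with ⟨q, hq, hqe⟩ | ⟨z, hze⟩
      · exfalso
        rcases C.Aw_shape hq with ⟨h, he2⟩ | ⟨h, g, jj, he2, hg, _, _⟩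
        · rw [he2] at hqe; rw [hqe] at hwe; simp [eP, eW] at hwe
        · rw [he2] at hqe; rw [hqe] at hwe
          simp only [eW, Sum.inr.injEq, Sum.inl.injEq, Prod.mk.injEq] at hwe
          have : t = g := hwe.1.symm
          rw [← this] at hg
          omega
      · rw [hze] at hwe; simp [eW, eD] at hwe
    · obtain ⟨w, hw, hwe⟩ := hPshape hy₂
      rcases C.padFam_elt (C.GE_W t) hb₁ hy₁ with ⟨q, hq, hqe⟩ | ⟨z, hze⟩
      · exfalso
        rcases C.Aw_shape hq with ⟨h, he2⟩ | ⟨h, g, jj, he2, hg, _, _⟩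
        · rw [he2] at hqe; rw [hqe] at hwe
          have : w = C.restE t ⟨q, h⟩ := C.eP_inj hwe.symm
          have hmem := C.restE_mem t ⟨q, h⟩
          rw [← this] at hmem
          simp only [Finset.mem_sdiff] at hmem
          exact hmem.2 hw
        · rw [he2] at hqe; rw [hqe] at hwe; simp [eP, eW] at hwe
      · rw [hze] at hwe; simp [eP, eD] at hwe
    · exact padFam_disj (C.GE_W t) hb₁ hb₂ hy₁ hy₂
  · rw [show C.BB (Sum.inr (Sum.inr x)) = C.BD x from rfl, C.mem_BD] at hb₁ hb₂
    obtain ⟨j, hj, rfl⟩ := hb₁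
    obtain ⟨j', hj', rfl⟩ := hb₂
    simp only [Finset.mem_image, Finset.mem_range] at hy₁ hy₂
    obtain ⟨r, hr, hre⟩ := hy₁
    obtain ⟨r', hr', hre'⟩ := hy₂
    have heq := cF_inj C.hsd x (C.BD_idx_lt hj hr) (C.BD_idx_lt hj' hr')
      (C.eD_inj (by rw [hre, hre']))
    have : j = j' := (euclid_unique (by have := C.he; omega) hr hr' heq).1
    rw [this]

end Ctx
end S12

namespace S12
namespace Ctx

variable (C : Ctx)

lemma covP_iff {u : Fin (2 * C.s1)} {y : C.V} :
    (∃ b ∈ C.BP u, y ∈ b) ↔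
      (∃ v, y = C.eP v ∧ covs C.hs1 u v) ∨ (∃ z, y = C.eD z) := by
  unfold BP
  rw [padFam_cover (C.GE_P u)]
  constructor
  · rintro (⟨q, hq, rfl⟩ | ⟨z, rfl⟩)
    · exact Or.inl ⟨cF C.hs1 u q, rfl, q, hq, rfl⟩
    · exact Or.inr ⟨z, rfl⟩
  · rintro (⟨v, rfl, i, hi, rfl⟩ | ⟨z, rfl⟩)
    · exact Or.inl ⟨i, hi, rfl⟩
    · exact Or.inr ⟨z, rfl⟩

lemma covW_iff {t : Fin C.T} {i : Fin C.m} {y : C.V} :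
    (∃ b ∈ C.BW t i, y ∈ b) ↔
      (∃ j, y = C.eW t j ∧ ∃ b0 ∈ C.SB i, j ∈ b0) ∨ (∃ v, y = C.eP v) ∨
      (∃ g jj, y = C.eW g jj ∧ t.val < g.val) ∨ (∃ z, y = C.eD z) := by
  constructor
  · rintro ⟨b, hb, hy⟩
    rcases C.mem_BW.1 hb with ⟨b0, hb0, rfl⟩ | rfl | hb'
    · simp only [Finset.mem_image] at hy
      obtain ⟨j, hj, rfl⟩ := hy
      exact Or.inl ⟨j, rfl, b0, hb0, hj⟩
    · simp only [B0blk, Finset.mem_image] at hy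
      obtain ⟨v, _, rfl⟩ := hy
      exact Or.inr (Or.inl ⟨v, rfl⟩)
    · rcases C.padFam_elt (C.GE_W t) hb' hy with ⟨q, hq, rfl⟩ | ⟨z, rfl⟩
      · rcases C.Aw_shape hq with ⟨h, he2⟩ | ⟨h, g, jj, he2, hg, _, _⟩
        · rw [he2]; exact Or.inr (Or.inl ⟨_, rfl⟩)
        · rw [he2]; exact Or.inr (Or.inr (Or.inl ⟨g, jj, rfl, hg⟩))
      · exact Or.inr (Or.inr (Or.inr ⟨z, rfl⟩))
  · rintro (⟨j, rfl, b0, hb0, hj⟩ | ⟨v, rfl⟩ | ⟨g, jj, rfl, hg⟩ | ⟨z, rfl⟩)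
    · exact ⟨b0.image (C.eW t), C.mem_BW.2 (Or.inl ⟨b0, hb0, rfl⟩),
        Finset.mem_image_of_mem _ hj⟩
    · by_cases hv : v ∈ C.B0 t
      · exact ⟨C.B0blk t, C.mem_BW.2 (Or.inr (Or.inl rfl)),
          Finset.mem_image_of_mem _ hv⟩
      · obtain ⟨q, hq, hqe⟩ := C.Aw_surjP hv
        obtain ⟨b, hb, hyb⟩ := (padFam_cover (C.GE_W t)).2 (Or.inl ⟨q, hq, hqe.symm⟩)
        exact ⟨b, C.mem_BW.2 (Or.inr (Or.inr hb)), hyb⟩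
    · obtain ⟨q, hq, hqe⟩ := C.Aw_surjW hg jj
      obtain ⟨b, hb, hyb⟩ := (padFam_cover (C.GE_W t)).2 (Or.inl ⟨q, hq, hqe.symm⟩)
      exact ⟨b, C.mem_BW.2 (Or.inr (Or.inr hb)), hyb⟩
    · obtain ⟨b, hb, hyb⟩ := (padFam_cover (C.GE_W t)).2 (Or.inr ⟨z, rfl⟩)
      exact ⟨b, C.mem_BW.2 (Or.inr (Or.inr hb)), hyb⟩

lemma covD_iff {x : Fin (2 * C.sd)} {y : C.V} :
    (∃ b ∈ C.BD x, y ∈ b) ↔ ∃ v, y = C.eD v ∧ covs C.hsd x v := by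
  constructor
  · rintro ⟨b, hb, hy⟩
    obtain ⟨j, hj, rfl⟩ := C.mem_BD.1 hb
    simp only [Finset.mem_image, Finset.mem_range] at hy
    obtain ⟨r, hr, rfl⟩ := hy
    exact ⟨_, rfl, j * C.e + r, C.BD_idx_lt hj hr, rfl⟩
  · rintro ⟨v, rfl, q, hq, rfl⟩
    have he := C.he
    refine ⟨(Finset.range C.e).image (fun r => C.eD (cF C.hsd x ((q / C.e) * C.e + r))),
      C.mem_BD.2 ⟨q / C.e, ?_, rfl⟩, ?_⟩
    · exact Nat.div_lt_div_of_lt_of_dvd (cLen_dvd C.hsd_dvd x) hq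
    · simp only [Finset.mem_image, Finset.mem_range]
      refine ⟨q % C.e, Nat.mod_lt _ (by omega), ?_⟩
      exact congrArg (fun w => C.eD (cF C.hsd x w)) (Nat.div_add_mod' q C.e)

lemma cov_BB_P {u : Fin (2 * C.s1)} {y : C.V} :
    (∃ b ∈ C.BB (C.eP u), y ∈ b) ↔
      (∃ v, y = C.eP v ∧ covs C.hs1 u v) ∨ (∃ z, y = C.eD z) := C.covP_iff

lemma cov_BB_W {t : Fin C.T} {i : Fin C.m} {y : C.V} :
    (∃ b ∈ C.BB (C.eW t i), y ∈ b) ↔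
      (∃ j, y = C.eW t j ∧ ∃ b0 ∈ C.SB i, j ∈ b0) ∨ (∃ v, y = C.eP v) ∨
      (∃ g jj, y = C.eW g jj ∧ t.val < g.val) ∨ (∃ z, y = C.eD z) := C.covW_iff

lemma cov_BB_D {x : Fin (2 * C.sd)} {y : C.V} :
    (∃ b ∈ C.BB (C.eD x), y ∈ b) ↔ ∃ v, y = C.eD v ∧ covs C.hsd x v := C.covD_iff

noncomputable def bigSys : BSys C.V C.e where
  B := C.BB
  hcard := fun {v b} hb => C.BB_card v b hb
  hnot := fun {v b} hb => C.BB_not v b hb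
  hdisj := fun {v b₁ b₂} h1 h2 {x} hx1 hx2 => C.BB_disj v b₁ b₂ h1 h2 x hx1 hx2
  hxor₁ := by
    rintro (u | ⟨t, i⟩ | x) (u' | ⟨t', i'⟩ | x') hne
    · have huu : u ≠ u' := fun h => hne (by rw [h])
      by_cases h : covs C.hs1 u u'
      · exact Or.inl (C.cov_BB_P.2 (Or.inl ⟨u', rfl, h⟩))
      · have h2 : covs C.hs1 u' u := by
          rw [covs_xor C.hs1 huu.symm]
          exact h
        exact Or.inr (C.cov_BB_P.2 (Or.inl ⟨u, rfl, h2⟩))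
    · exact Or.inr (C.cov_BB_W.2 (Or.inr (Or.inl ⟨u, rfl⟩)))
    · exact Or.inl (C.cov_BB_P.2 (Or.inr ⟨x', rfl⟩))
    · exact Or.inl (C.cov_BB_W.2 (Or.inr (Or.inl ⟨u', rfl⟩)))
    · rcases Nat.lt_trichotomy t.val t'.val with hlt | heq | hgt
      · exact Or.inl (C.cov_BB_W.2 (Or.inr (Or.inr (Or.inl ⟨t', i', rfl, hlt⟩))))
      · have htt : t = t' := Fin.ext heq
        subst htt
        have hii : i ≠ i' := by
          intro h
          exact hne (by rw [h])
        rcases C.SB_xor₁ hii with ⟨b0, hb0, hmem⟩ | ⟨b0, hb0, hmem⟩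
        · exact Or.inl (C.cov_BB_W.2 (Or.inl ⟨i', rfl, b0, hb0, hmem⟩))
        · exact Or.inr (C.cov_BB_W.2 (Or.inl ⟨i, rfl, b0, hb0, hmem⟩))
      · exact Or.inr (C.cov_BB_W.2 (Or.inr (Or.inr (Or.inl ⟨t, i, rfl, hgt⟩))))
    · exact Or.inl (C.cov_BB_W.2 (Or.inr (Or.inr (Or.inr ⟨x', rfl⟩))))
    · exact Or.inr (C.cov_BB_P.2 (Or.inr ⟨x, rfl⟩))
    · exact Or.inr (C.cov_BB_W.2 (Or.inr (Or.inr (Or.inr ⟨x, rfl⟩))))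
    · have hxx : x ≠ x' := fun h => hne (by rw [h])
      by_cases h : covs C.hsd x x'
      · exact Or.inl (C.cov_BB_D.2 ⟨x', rfl, h⟩)
      · have h2 : covs C.hsd x' x := by
          rw [covs_xor C.hsd hxx.symm]
          exact h
        exact Or.inr (C.cov_BB_D.2 ⟨x, rfl, h2⟩)
  hxor₂ := by
    rintro (u | ⟨t, i⟩ | x) (u' | ⟨t', i'⟩ | x') h1 h2
    · rcases C.cov_BB_P.1 h1 with ⟨v, hv, hcov⟩ | ⟨z, hz⟩
      · rcases C.cov_BB_P.1 h2 with ⟨v', hv', hcov'⟩ | ⟨z', hz'⟩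
        · have e1 : v = u' := by simpa [eP] using hv.symm
          have e2 : v' = u := by simpa [eP] using hv'.symm
          rw [e1] at hcov
          rw [e2] at hcov'
          have hne : u ≠ u' := covs_ne C.hs1 hcov
          exact ((covs_xor C.hs1 hne).1 hcov) hcov'
        · simp [eP, eD] at hz'
      · simp [eP, eD] at hz
    · rcases C.cov_BB_P.1 h1 with ⟨v, hv, _⟩ | ⟨z, hz⟩
      · simp [eP, eW] at hv
      · simp [eW, eD] at hz
    · rcases C.cov_BB_P.1 h1 with ⟨v, hv, _⟩ | ⟨z, hz⟩
      · simp [eP, eD] at hv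
      · rcases C.cov_BB_D.1 h2 with ⟨v', hv', _⟩
        simp [eP, eD] at hv'
    · rcases C.cov_BB_W.1 h1 with ⟨j, hj, _⟩ | ⟨v, hv⟩ | ⟨g, jj, hg, _⟩ | ⟨z, hz⟩
      · simp [eP, eW] at hj
      · rcases C.cov_BB_P.1 h2 with ⟨v', hv', _⟩ | ⟨z', hz'⟩
        · simp [eP, eW] at hv'
        · simp [eW, eD] at hz'
      · simp [eP, eW] at hg
      · simp [eP, eD] at hz
    · have extract1 : (∃ j, C.eW t' i' = C.eW t j ∧ ∃ b0 ∈ C.SB i, j ∈ b0) ∨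
          (∃ v, C.eW t' i' = C.eP v) ∨
          (∃ g jj, C.eW t' i' = C.eW g jj ∧ t.val < g.val) ∨
          (∃ z, C.eW t' i' = C.eD z) := C.cov_BB_W.1 h1
      have extract2 : (∃ j, C.eW t i = C.eW t' j ∧ ∃ b0 ∈ C.SB i', j ∈ b0) ∨
          (∃ v, C.eW t i = C.eP v) ∨
          (∃ g jj, C.eW t i = C.eW g jj ∧ t'.val < g.val) ∨
          (∃ z, C.eW t i = C.eD z) := C.cov_BB_W.1 h2
      rcases extract1 with ⟨j, hj, hsb⟩ | ⟨v, hv⟩ | ⟨g, jj, hg, hlt⟩ | ⟨z, hz⟩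
      · simp only [eW, Sum.inr.injEq, Sum.inl.injEq, Prod.mk.injEq] at hj
        obtain ⟨het, hei⟩ := hj
        rcases extract2 with ⟨j', hj', hsb'⟩ | ⟨v', hv'⟩ | ⟨g', jj', hg', hlt'⟩ | ⟨z', hz'⟩
        · simp only [eW, Sum.inr.injEq, Sum.inl.injEq, Prod.mk.injEq] at hj'
          obtain ⟨het', hei'⟩ := hj'
          obtain ⟨b0, hb0, hmem⟩ := hsb
          obtain ⟨b0', hb0', hmem'⟩ := hsb'
          exact C.SB_xor₂ ⟨b0, hb0, hei ▸ hmem⟩ ⟨b0', hb0', hei' ▸ hmem'⟩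
        · simp [eP, eW] at hv'
        · simp only [eW, Sum.inr.injEq, Sum.inl.injEq, Prod.mk.injEq] at hg'
          obtain ⟨hgt, -⟩ := hg'
          rw [← hgt] at hlt'
          rw [het] at hlt'
          omega
        · simp [eW, eD] at hz'
      · simp [eP, eW] at hv
      · simp only [eW, Sum.inr.injEq, Sum.inl.injEq, Prod.mk.injEq] at hg
        obtain ⟨hgt, -⟩ := hg
        rw [← hgt] at hlt
        rcases extract2 with ⟨j', hj', hsb'⟩ | ⟨v', hv'⟩ | ⟨g', jj', hg', hlt'⟩ | ⟨z', hz'⟩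
        · simp only [eW, Sum.inr.injEq, Sum.inl.injEq, Prod.mk.injEq] at hj'
          obtain ⟨het', -⟩ := hj'
          rw [het'] at hlt
          omega
        · simp [eP, eW] at hv'
        · simp only [eW, Sum.inr.injEq, Sum.inl.injEq, Prod.mk.injEq] at hg'
          obtain ⟨hgt', -⟩ := hg'
          rw [← hgt'] at hlt'
          omega
        · simp [eW, eD] at hz'
      · simp [eW, eD] at hz
    · rcases C.cov_BB_D.1 h2 with ⟨v, hv, _⟩
      simp [eW, eD] at hv
    · rcases C.cov_BB_D.1 h1 with ⟨v, hv, _⟩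
      simp [eP, eD] at hv
    · rcases C.cov_BB_D.1 h1 with ⟨v, hv, _⟩
      simp [eW, eD] at hv
    · rcases C.cov_BB_D.1 h1 with ⟨v, hv, hcov⟩
      rcases C.cov_BB_D.1 h2 with ⟨v', hv', hcov'⟩
      have e1 : v = x' := by simpa [eD] using hv.symm
      have e2 : v' = x := by simpa [eD] using hv'.symm
      rw [e1] at hcov
      rw [e2] at hcov'
      have hne : x ≠ x' := covs_ne C.hsd hcov
      exact ((covs_xor C.hsd hne).1 hcov) hcov'

end Ctx
end S12

namespace S12

def shrF (K : ℕ) (hK : 2 ≤ K) (γ x : Fin K) : Fin (K - 1) :=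
  if h : x.val < γ.val then ⟨x.val, by have := γ.isLt; omega⟩
  else ⟨x.val - 1, by have := x.isLt; omega⟩

lemma shrF_inj {K : ℕ} (hK : 2 ≤ K) (γ : Fin K) {x y : Fin K} (hx : x ≠ γ)
    (hy : y ≠ γ) (h : shrF K hK γ x = shrF K hK γ y) : x = y := by
  have hx' : x.val ≠ γ.val := fun hh => hx (Fin.ext hh)
  have hy' : y.val ≠ γ.val := fun hh => hy (Fin.ext hh)
  have hxl := x.isLt
  have hyl := y.isLt
  unfold shrF at h
  by_cases h1 : x.val < γ.val <;> by_cases h2 : y.val < γ.val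
  · rw [dif_pos h1, dif_pos h2] at h
    simp only [Fin.mk.injEq] at h
    exact Fin.ext h
  · rw [dif_pos h1, dif_neg h2] at h
    simp only [Fin.mk.injEq] at h
    exact absurd h (by omega)
  · rw [dif_neg h1, dif_pos h2] at h
    simp only [Fin.mk.injEq] at h
    exact absurd h (by omega)
  · rw [dif_neg h1, dif_neg h2] at h
    simp only [Fin.mk.injEq] at h
    exact Fin.ext (by omega)

namespace Ctx

variable (C : Ctx)

/-- the intended k-colouring -/
def colV : C.V → Fin C.k :=
  Sum.elim (fun _ => ⟨0, by have := C.hk; omega⟩)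
    (Sum.elim
      (fun ti => ⟨(C.chi0 ti.2).val + 1, by
        have := (C.chi0 ti.2).isLt; have := C.hk; omega⟩)
      (fun x => ⟨x.val % 2, by have := C.hk; omega⟩))

lemma colV_dAt {r : ℕ} (h : r < 2 * C.sd) : (C.colV (C.dAt r)).val = r % 2 := by
  rw [C.dAt_eq h]
  rfl

lemma colV_eD (x : Fin (2 * C.sd)) : (C.colV (C.eD x)).val = x.val % 2 := rfl

lemma two_leaves {b : Finset C.V} {x₁ x₂ : C.V} (h1 : x₁ ∈ b) (h2 : x₂ ∈ b)
    {K : ℕ} {c : C.V → Fin K} (hne : c x₁ ≠ c x₂) (v : C.V) :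
    ∃ a ∈ b, c a ≠ c v := by
  by_cases h : c x₁ = c v
  · exact ⟨x₂, h2, fun hh => hne (by rw [h, hh])⟩
  · exact ⟨x₁, h1, h⟩

lemma padFam_goodcol {a : ℕ → C.V} {L : ℕ} (H : GoodEnum C a L) {b : Finset C.V}
    (hb : b ∈ C.padFam a L) (v : C.V) : ∃ x ∈ b, C.colV x ≠ C.colV v := by
  obtain ⟨r, hr, h1, h2⟩ := padFam_pair H b hb
  refine C.two_leaves h1 h2 ?_ v
  intro hcc
  have v1 := C.colV_dAt (by omega : r < 2 * C.sd)
  have v2 := C.colV_dAt (by omega : r + 1 < 2 * C.sd)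
  rw [hcc] at v1
  omega

lemma BB_goodcol : ∀ v b, b ∈ C.BB v → ∃ x ∈ b, C.colV x ≠ C.colV v := by
  have he := C.he
  rintro (u | ⟨t, i⟩ | x) b hb
  · exact C.padFam_goodcol (C.GE_P u) hb _
  · rcases C.mem_BW.1 hb with ⟨b0, hb0, rfl⟩ | rfl | hb'
    · obtain ⟨S, hS, hcen, hlv⟩ := C.SB_mem_iff.1 hb0
      obtain ⟨aa, haa, hane⟩ := C.hchi0 S hS
      refine ⟨C.eW t aa, Finset.mem_image_of_mem _ (hlv ▸ haa), ?_⟩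
      intro hcc
      apply hane
      have : (C.chi0 aa).val + 1 = (C.chi0 i).val + 1 := by
        have := congrArg Fin.val hcc
        simpa [colV, eW] using this
      have hcen' : S.centre = i := hcen
      rw [hcen']
      exact Fin.ext (by omega)
    · have hne : (C.B0 t).Nonempty := by
        rw [← Finset.card_pos, C.B0_card]
        omega
      obtain ⟨x0, hx0⟩ := hne
      refine ⟨C.eP x0, Finset.mem_image_of_mem _ hx0, ?_⟩
      intro hcc
      have := congrArg Fin.val hcc
      simp [colV, eP, eW] at this
    · exact C.padFam_goodcol (C.GE_W t) hb' _
  · obtain ⟨j, hj, rfl⟩ := C.mem_BD.1 hb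
    have hcl : j * C.e + C.e ≤ cLen C.sd x := by
      have hdvd : C.e ∣ cLen C.sd x := cLen_dvd C.hsd_dvd x
      have h1 : (j + 1) * C.e ≤ (cLen C.sd x / C.e) * C.e := Nat.mul_le_mul_right _ (by omega)
      rw [Nat.div_mul_cancel hdvd] at h1
      have : (j + 1) * C.e = j * C.e + C.e := by ring
      omega
    have hrun1 : j * C.e + 1 < runL C.sd x := chunk_pair_lt_runL he hcl
    have hrun0 : j * C.e < runL C.sd x := by omega
    have hm1 : C.eD (cF C.hsd x (j * C.e + 0)) ∈
        (Finset.range C.e).image (fun r => C.eD (cF C.hsd x (j * C.e + r))) :=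
      Finset.mem_image_of_mem _ (Finset.mem_range.2 (by omega))
    have hm2 : C.eD (cF C.hsd x (j * C.e + 1)) ∈
        (Finset.range C.e).image (fun r => C.eD (cF C.hsd x (j * C.e + r))) :=
      Finset.mem_image_of_mem _ (Finset.mem_range.2 (by omega))
    refine C.two_leaves hm1 hm2 ?_ _
    intro hcc
    have v1 := C.colV_eD (cF C.hsd x (j * C.e + 0))
    have v2 := C.colV_eD (cF C.hsd x (j * C.e + 1))
    rw [hcc] at v1
    rw [cF_run_val C.hsd x (by omega : j * C.e + 0 < runL C.sd x)] at v1
    rw [cF_run_val C.hsd x hrun1] at v2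
    have hpar : (x.val + (j * C.e + 0) + 1) % (2 * C.sd) % 2 ≠
        ((x.val + (j * C.e + 0) + 1) + 1) % (2 * C.sd) % 2 := parity_succ_mod C.hsd
    have harg : x.val + (j * C.e + 1) + 1 = (x.val + (j * C.e + 0) + 1) + 1 := by omega
    rw [harg] at v2
    omega

/-- no weak colouring with k - 1 colours -/
lemma BB_notcol (c : C.V → Fin (C.k - 1))
    (hc : ∀ v b, b ∈ C.BB v → ∃ a ∈ b, c a ≠ c v) : False := by
  have hk := C.hk
  set χ : Fin (2 * C.s1) → Fin (C.k - 1) := fun x => c (C.eP x) with hχ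
  set t₀ : Fin C.T := C.enc χ with ht₀
  have hdec : C.dec t₀ = χ := C.dec_enc χ
  set γ : Fin (C.k - 1) := C.gam t₀ with hγ
  -- step 1 : no gadget vertex of gadget t₀ takes colour γ
  have step1 : ∀ i : Fin C.m, c (C.eW t₀ i) ≠ γ := by
    intro i hcol
    have hbb : C.B0blk t₀ ∈ C.BB (C.eW t₀ i) := C.mem_BW.2 (Or.inr (Or.inl rfl))
    obtain ⟨a, ha, hane⟩ := hc _ _ hbb
    simp only [B0blk, Finset.mem_image] at ha
    obtain ⟨x0, hx0, rfl⟩ := ha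
    apply hane
    show χ x0 = _
    rw [← hdec, C.B0_col t₀ hx0, hcol]
  -- step 2 : the restriction to gadget t₀ is a weak colouring of sys
  set cm : Fin C.m → Fin (C.k - 1) := fun i => c (C.eW t₀ i) with hcm
  have step2 : ∀ S ∈ C.sys.stars, ∃ a ∈ S.leaves, cm a ≠ cm S.centre := by
    intro S hS
    have hb0 : S.leaves ∈ C.SB S.centre := C.SB_mem_iff.2 ⟨S, hS, rfl, rfl⟩
    have hbb : S.leaves.image (C.eW t₀) ∈ C.BB (C.eW t₀ S.centre) :=
      C.mem_BW.2 (Or.inl ⟨S.leaves, hb0, rfl⟩)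
    obtain ⟨a, ha, hane⟩ := hc _ _ hbb
    simp only [Finset.mem_image] at ha
    obtain ⟨j, hj, rfl⟩ := ha
    exact ⟨j, hj, hane⟩
  -- step 3 : shrink to k - 2 colours
  have hK2 : 2 ≤ C.k - 1 := by omega
  apply C.hnc
  refine ⟨fun i => shrF (C.k - 1) hK2 γ (cm i), ?_⟩
  intro S hS
  obtain ⟨a, ha, hane⟩ := step2 S hS
  refine ⟨a, ha, fun hcc => hane ?_⟩
  exact shrF_inj hK2 γ (step1 a) (step1 S.centre) hcc

def nk : ℕ := 2 * C.s1 + (C.T * C.m + 2 * C.sd)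

lemma nk_mod : C.nk % (2 * C.e) = 0 := by
  have hdvd : (2 * C.e) ∣ C.nk := by
    have d1 : (2 * C.e) ∣ 2 * C.s1 := ⟨C.k - 1, by unfold s1; ring⟩
    have d2 : (2 * C.e) ∣ C.T * C.m :=
      Dvd.dvd.mul_left (Nat.dvd_of_mod_eq_zero C.hme) _
    have d3 : (2 * C.e) ∣ 2 * C.sd := ⟨C.m * (2 * C.s1 + C.T), by unfold sd; ring⟩
    exact Nat.dvd_add d1 (Nat.dvd_add d2 d3)
  obtain ⟨w, hw⟩ := hdvd
  rw [hw]
  exact Nat.mul_mod_right _ _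

noncomputable def equivV : C.V ≃ Fin C.nk :=
  (Equiv.sumCongr (Equiv.refl (Fin (2 * C.s1)))
      (Equiv.sumCongr finProdFinEquiv (Equiv.refl (Fin (2 * C.sd))))).trans
    ((Equiv.sumCongr (Equiv.refl (Fin (2 * C.s1))) finSumFinEquiv).trans finSumFinEquiv)

noncomputable def newSys : EStarSystem C.nk C.e := ((C.bigSys).map C.equivV).toSystem

lemma new_colourable : Colourable C.newSys C.k := by
  refine ⟨fun v => C.colV (C.equivV.symm v), ?_⟩
  show IsWeakColouring ((C.bigSys).map C.equivV).toSystem _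
  rw [BSys.map_weak_iff]
  intro v b hb
  obtain ⟨a, ha, hane⟩ := C.BB_goodcol v b hb
  exact ⟨a, ha, by simpa using hane⟩

lemma new_notcolourable : ¬ Colourable C.newSys (C.k - 1) := by
  rintro ⟨c, hc⟩
  have hc' : IsWeakColouring ((C.bigSys).map C.equivV).toSystem c := hc
  rw [BSys.map_weak_iff] at hc'
  refine C.BB_notcol (fun v => c (C.equivV v)) ?_
  intro v b hb
  exact hc' v b hb

end Ctx
end S12

/-- From a `(k-1)`-chromatic `e`-star system of order `≡ 0 (mod 2e)` one obtains a
`k`-chromatic `e`-star system of some order `≡ 0 (mod 2e)`. -/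
theorem stmt12 (k e m : ℕ) (hk : 3 ≤ k) (he : 3 ≤ e)
    (hmod : m % (2 * e) = 0)
    (h : ∃ sys : EStarSystem m e, Chromatic sys (k - 1)) :
    ∃ nk : ℕ, nk % (2 * e) = 0 ∧ ∃ sys : EStarSystem nk e, Chromatic sys k := by
  obtain ⟨sys, hcol, hncol⟩ := h
  have hm : 0 < m := by
    by_contra hm0
    push_neg at hm0
    have hm1 : m = 0 := by omega
    subst hm1
    exact hncol ⟨fun v => v.elim0, fun S hS => S.centre.elim0⟩
  obtain ⟨chi0, hchi0⟩ := hcol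
  let C : S12.Ctx := ⟨k, e, m, hk, he, hm, hmod, sys, chi0, hchi0, hncol⟩
  exact ⟨C.nk, C.nk_mod, C.newSys, C.new_colourable, C.new_notcolourable⟩
end
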